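/- arXiv:math/9803130 — 3 statements merged into one kernel-verified Lean document; each statement's English description precedes it below -/
import Mathlib

section
/- For all integers w ≥ 1, h ≥ 1, a ≥ 1: (i) the number of translation-classes of v-symmetric convex polyominoes with width 2w, height h and area 2a equals the number of unimodal sequences (a₁,…,a_h) of positive integers with max_i a_i = w and Σ_i a_i = a; (ii) the number of translation-classes of v-symmetric convex polyominoes with width 2w−1, height h and area 2a−h also equals the number of unimodal sequences (a₁,…,a_h) of positive integers with max_i a_i = w and Σ_i a_i = a. Every v-symmetric convex polyomino arises in exactly one of these two ways. -/
/-- A cell of the square lattice. -/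
abbrev Cell : Type := ℤ × ℤ

/-- Translation of a finite set of cells by a vector `v`. -/
def cellTranslate (v : Cell) (P : Finset Cell) : Finset Cell :=
  P.image fun c => (c.1 + v.1, c.2 + v.2)

/-- A polyomino: a finite nonempty set of cells, connected under edge-adjacency. -/
def IsPolyomino (P : Finset Cell) : Prop :=
  P.Nonempty ∧ ∀ a ∈ P, ∀ b ∈ P,
    Relation.ReflTransGen
      (fun c d => c ∈ P ∧ d ∈ P ∧ (c.1 - d.1).natAbs + (c.2 - d.2).natAbs = 1) a b

/-- Convexity: the cells in each column and in each row form a contiguous interval. -/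
def IsConvexPoly (P : Finset Cell) : Prop :=
  (∀ x y₁ y₂ y : ℤ, (x, y₁) ∈ P → (x, y₂) ∈ P → y₁ ≤ y → y ≤ y₂ → (x, y) ∈ P) ∧
  (∀ y x₁ x₂ x : ℤ, (x₁, y) ∈ P → (x₂, y) ∈ P → x₁ ≤ x → x ≤ x₂ → (x, y) ∈ P)

/-- The width: number of distinct first coordinates. -/
def width (P : Finset Cell) : ℕ := (P.image Prod.fst).card

/-- The height: number of distinct second coordinates. -/
def height (P : Finset Cell) : ℕ := (P.image Prod.snd).card

/-- The area: number of cells. -/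
def area (P : Finset Cell) : ℕ := P.card

/-- Rotation by a right angle: `r(i,j) = (-j,i)`. -/
def rotMap : Cell → Cell := fun c => (-c.2, c.1)

/-- Horizontal reflection: `h(i,j) = (i,-j)`. -/
def hMap : Cell → Cell := fun c => (c.1, -c.2)

/-- Vertical reflection: `v(i,j) = (-i,j)`. -/
def vMap : Cell → Cell := fun c => (-c.1, c.2)

/-- Diagonal reflection `d₁(i,j) = (-j,-i)`. -/
def d1Map : Cell → Cell := fun c => (-c.2, -c.1)

/-- Diagonal reflection `d₂(i,j) = (j,i)`. -/
def d2Map : Cell → Cell := fun c => (c.2, c.1)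

/-- `P` is `g`-symmetric: `g·P` is a cellTranslate of `P`. -/
def SymBy (g : Cell → Cell) (P : Finset Cell) : Prop :=
  ∃ v : Cell, P.image g = cellTranslate v P

/-- The translation class of `P`: the set of all its translates. -/
def transClass (P : Finset Cell) : Set (Finset Cell) :=
  {Q | ∃ v : Cell, Q = cellTranslate v P}

/-- The number of translation classes of finite cell-sets satisfying the
(translation-invariant) predicate `Φ`. -/
noncomputable def classCount (Φ : Finset Cell → Prop) : ℕ :=
  Set.ncard {O : Set (Finset Cell) | ∃ P : Finset Cell, Φ P ∧ O = transClass P}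

/-- A sequence of length `n` is unimodal if it weakly increases then weakly decreases. -/
def Unimodal {n : ℕ} (a : Fin n → ℕ) : Prop :=
  ∃ p : Fin n, (∀ i j : Fin n, i ≤ j → j ≤ p → a i ≤ a j) ∧
    (∀ i j : Fin n, p ≤ i → i ≤ j → a j ≤ a i)

namespace Stmt10Aux
open Finset

lemma mem_cellTranslate {v : Cell} {P : Finset Cell} {c : Cell} :
    c ∈ cellTranslate v P ↔ (c.1 - v.1, c.2 - v.2) ∈ P := by
  constructor
  · intro hc
    obtain ⟨d, hd, rfl⟩ := Finset.mem_image.mp hc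
    simpa using hd
  · intro h
    exact Finset.mem_image.mpr ⟨_, h, by simp⟩

lemma cellTranslate_comp (u v : Cell) (P : Finset Cell) :
    cellTranslate u (cellTranslate v P) = cellTranslate (v.1 + u.1, v.2 + u.2) P := by
  ext ⟨x, y⟩
  simp only [mem_cellTranslate]
  have : (x - u.1 - v.1, y - u.2 - v.2) = (x - (v.1 + u.1), y - (v.2 + u.2)) := by
    simp; constructor <;> ring
  rw [this]

lemma cellTranslate_zero (P : Finset Cell) : cellTranslate ((0 : ℤ), (0 : ℤ)) P = P := by
  ext ⟨x, y⟩; simp [mem_cellTranslate]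

lemma self_mem_transClass (P : Finset Cell) : P ∈ transClass P :=
  ⟨((0 : ℤ), (0 : ℤ)), (cellTranslate_zero P).symm⟩

lemma transClass_cellTranslate (v : Cell) (P : Finset Cell) :
    transClass (cellTranslate v P) = transClass P := by
  ext O
  constructor
  · rintro ⟨u, rfl⟩
    exact ⟨_, (cellTranslate_comp u v P)⟩
  · rintro ⟨u, rfl⟩
    refine ⟨(u.1 - v.1, u.2 - v.2), ?_⟩
    rw [cellTranslate_comp]
    have : (v.1 + (u.1 - v.1), v.2 + (u.2 - v.2)) = u := by
      ext <;> simp <;> ring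
    rw [this]

lemma mem_image_fst {P : Finset Cell} {x : ℤ} :
    x ∈ P.image Prod.fst ↔ ∃ y, (x, y) ∈ P := by
  simp only [Finset.mem_image]
  constructor
  · rintro ⟨⟨a, b⟩, h, rfl⟩; exact ⟨b, h⟩
  · rintro ⟨y, h⟩; exact ⟨(x, y), h, rfl⟩

lemma mem_image_snd {P : Finset Cell} {y : ℤ} :
    y ∈ P.image Prod.snd ↔ ∃ x, (x, y) ∈ P := by
  simp only [Finset.mem_image]
  constructor
  · rintro ⟨⟨a, b⟩, h, rfl⟩; exact ⟨a, h⟩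
  · rintro ⟨x, h⟩; exact ⟨(x, y), h, rfl⟩

lemma image_fst_cellTranslate (v : Cell) (P : Finset Cell) :
    (cellTranslate v P).image Prod.fst = (P.image Prod.fst).image (· + v.1) := by
  unfold cellTranslate; rw [Finset.image_image, Finset.image_image]; rfl

lemma image_snd_cellTranslate (v : Cell) (P : Finset Cell) :
    (cellTranslate v P).image Prod.snd = (P.image Prod.snd).image (· + v.2) := by
  unfold cellTranslate; rw [Finset.image_image, Finset.image_image]; rfl

lemma width_cellTranslate (v : Cell) (P : Finset Cell) :
    width (cellTranslate v P) = width P := by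
  unfold width
  rw [image_fst_cellTranslate, Finset.card_image_of_injective _ (add_left_injective _)]

lemma height_cellTranslate (v : Cell) (P : Finset Cell) :
    height (cellTranslate v P) = height P := by
  unfold height
  rw [image_snd_cellTranslate, Finset.card_image_of_injective _ (add_left_injective _)]

lemma area_cellTranslate (v : Cell) (P : Finset Cell) :
    area (cellTranslate v P) = area P := by
  unfold area cellTranslate
  apply Finset.card_image_of_injective
  intro a b h
  simp only [Prod.ext_iff] at h ⊢
  omega

end Stmt10Aux

namespace Stmt10Aux
open Finset

/-- Canonical v-symmetric convex polyomino with row lengths `2 * s i - ε`. -/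
noncomputable def Qpoly (ε h : ℕ) (s : Fin h → ℕ) : Finset Cell :=
  Finset.univ.biUnion fun i : Fin h =>
    (Finset.Icc ((ε : ℤ) - s i) ((s i : ℤ) - 1)).image fun x => (x, ((i : ℕ) : ℤ))

lemma mem_Qpoly {ε h : ℕ} {s : Fin h → ℕ} {x y : ℤ} :
    (x, y) ∈ Qpoly ε h s ↔
      ∃ i : Fin h, ((i : ℕ) : ℤ) = y ∧ (ε : ℤ) - s i ≤ x ∧ x ≤ (s i : ℤ) - 1 := by
  simp only [Qpoly, Finset.mem_biUnion, Finset.mem_univ, true_and, Finset.mem_image,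
    Finset.mem_Icc, Prod.mk.injEq]
  constructor
  · rintro ⟨i, x', ⟨h1, h2⟩, rfl, rfl⟩
    exact ⟨i, rfl, h1, h2⟩
  · rintro ⟨i, rfl, h1, h2⟩
    exact ⟨i, x, ⟨h1, h2⟩, rfl, rfl⟩

lemma fin_coe_lt {h : ℕ} (i : Fin h) : ((i : ℕ) : ℤ) < (h : ℤ) := by
  exact_mod_cast Int.ofNat_lt.mpr i.isLt

lemma center_mem_Qpoly {ε h : ℕ} {s : Fin h → ℕ} (hε : ε ≤ 1) (hs : ∀ i, 1 ≤ s i)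
    {y : ℤ} (h0 : 0 ≤ y) (h1 : y < h) : ((0 : ℤ), y) ∈ Qpoly ε h s := by
  refine mem_Qpoly.mpr ⟨⟨y.toNat, by omega⟩, by simp; omega, ?_, ?_⟩
  · have := hs ⟨y.toNat, by omega⟩; omega
  · have := hs ⟨y.toNat, by omega⟩; omega

lemma isConvexPoly_Qpoly {ε h : ℕ} {s : Fin h → ℕ} (hu : Unimodal s) :
    IsConvexPoly (Qpoly ε h s) := by
  obtain ⟨p, hp1, hp2⟩ := hu
  constructor
  · intro x ya yb y hma hmb hab hby
    obtain ⟨ia, hia, ha1, ha2⟩ := mem_Qpoly.mp hma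
    obtain ⟨ib, hib, hb1, hb2⟩ := mem_Qpoly.mp hmb
    have hy0 : 0 ≤ y := by have := ia.2; omega
    have hyh : y < h := by have := fin_coe_lt ib; omega
    set iy : Fin h := ⟨y.toNat, by omega⟩ with hiy
    have hyc : ((iy : ℕ) : ℤ) = y := by simp [hiy]; omega
    have hle1 : ia ≤ iy := by
      rw [Fin.le_def]; simp [hiy]; omega
    have hle2 : iy ≤ ib := by
      rw [Fin.le_def]; simp [hiy]
      have := fin_coe_lt ib
      omega
    have key : min (s ia) (s ib) ≤ s iy := by
      rcases le_total iy p with hcase | hcase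
      · have := hp1 ia iy hle1 hcase; omega
      · have := hp2 iy ib hcase hle2; omega
    refine mem_Qpoly.mpr ⟨iy, hyc, ?_, ?_⟩ <;> omega
  · intro y xa xb x hma hmb hax hxb
    obtain ⟨ia, hia, ha1, ha2⟩ := mem_Qpoly.mp hma
    obtain ⟨ib, hib, hb1, hb2⟩ := mem_Qpoly.mp hmb
    have heq : ia = ib := Fin.ext (by omega)
    subst heq
    exact mem_Qpoly.mpr ⟨ia, hia, by omega, by omega⟩

lemma symBy_Qpoly {ε h : ℕ} (s : Fin h → ℕ) : SymBy vMap (Qpoly ε h s) := by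
  refine ⟨((1 : ℤ) - ε, 0), ?_⟩
  ext ⟨x, y⟩
  have hL : (x, y) ∈ (Qpoly ε h s).image vMap ↔ (-x, y) ∈ Qpoly ε h s := by
    simp only [Finset.mem_image]
    constructor
    · rintro ⟨⟨a, b⟩, hd, hv⟩
      simp only [vMap, Prod.mk.injEq] at hv
      obtain ⟨h1, h2⟩ := hv
      have : (a, b) = (-x, y) := by simp [Prod.ext_iff]; omega
      rwa [this] at hd
    · intro hd
      exact ⟨(-x, y), hd, by simp [vMap]⟩
  rw [hL, mem_cellTranslate]
  simp only [mem_Qpoly]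
  exact exists_congr fun i => by constructor <;> rintro ⟨h1, h2, h3⟩ <;>
    exact ⟨by omega, by omega, by omega⟩

lemma isPolyomino_Qpoly {ε h : ℕ} {s : Fin h → ℕ} (hε : ε ≤ 1) (hh : 0 < h)
    (hs : ∀ i, 1 ≤ s i) : IsPolyomino (Qpoly ε h s) := by
  set Q := Qpoly ε h s with hQ
  set R : Cell → Cell → Prop :=
    fun c d => c ∈ Q ∧ d ∈ Q ∧ (c.1 - d.1).natAbs + (c.2 - d.2).natAbs = 1 with hR
  have hRsymm : Symmetric R := by
    rintro c d ⟨h1, h2, h3⟩; exact ⟨h2, h1, by omega⟩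
  have hchain : ∀ n : ℕ, ∀ x y : ℤ, x.natAbs ≤ n → (x, y) ∈ Q →
      Relation.ReflTransGen R (x, y) (0, y) := by
    intro n
    induction n with
    | zero => intro x y hx hm; have : x = 0 := by omega
              rw [this]
    | succ n ih =>
      intro x y hx hm
      rcases eq_or_ne x 0 with rfl | hne
      · exact Relation.ReflTransGen.refl
      · obtain ⟨i, hi, h1, h2⟩ := mem_Qpoly.mp hm
        have hsi := hs i
        rcases lt_or_gt_of_ne hne with hneg | hpos
        · have hm' : (x + 1, y) ∈ Q := mem_Qpoly.mpr ⟨i, hi, by omega, by omega⟩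
          exact Relation.ReflTransGen.head ⟨hm, hm', by simp <;> omega⟩
            (ih (x + 1) y (by omega) hm')
        · have hm' : (x - 1, y) ∈ Q := mem_Qpoly.mpr ⟨i, hi, by omega, by omega⟩
          exact Relation.ReflTransGen.head ⟨hm, hm', by simp <;> omega⟩
            (ih (x - 1) y (by omega) hm')
  have hvchain : ∀ n : ℕ, ∀ y : ℤ, y.natAbs ≤ n → 0 ≤ y → y < h →
      Relation.ReflTransGen R (0, y) (0, 0) := by
    intro n
    induction n with
    | zero => intro y hy h0 h1; have : y = 0 := by omega
              rw [this]
    | succ n ih =>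
      intro y hy h0 h1
      rcases eq_or_ne y 0 with rfl | hne
      · exact Relation.ReflTransGen.refl
      · have hm : ((0:ℤ), y) ∈ Q := center_mem_Qpoly hε hs h0 h1
        have hm' : ((0:ℤ), y - 1) ∈ Q := center_mem_Qpoly hε hs (by omega) (by omega)
        exact Relation.ReflTransGen.head ⟨hm, hm', by simp <;> omega⟩
          (ih (y - 1) (by omega) (by omega) (by omega))
  have hto : ∀ c ∈ Q, Relation.ReflTransGen R c (0, 0) := by
    rintro ⟨x, y⟩ hm
    obtain ⟨i, hi, h1, h2⟩ := mem_Qpoly.mp hm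
    have hy0 : 0 ≤ y := by have := i.2; omega
    have hyh : y < h := by have := fin_coe_lt i; omega
    exact (hchain x.natAbs x y le_rfl hm).trans (hvchain y.natAbs y le_rfl hy0 hyh)
  constructor
  · exact ⟨(0, 0), center_mem_Qpoly hε hs le_rfl (by exact_mod_cast hh)⟩
  · intro a ha b hb
    exact (hto a ha).trans ((haveI : Std.Symm R := ⟨fun _ _ h => hRsymm h⟩; Relation.ReflTransGen.symmetric.symm _ _ (hto b hb)))

lemma height_Qpoly {ε h : ℕ} {s : Fin h → ℕ} (hε : ε ≤ 1) (hs : ∀ i, 1 ≤ s i) :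
    height (Qpoly ε h s) = h := by
  unfold height
  have himg : (Qpoly ε h s).image Prod.snd = Finset.Icc (0 : ℤ) ((h : ℤ) - 1) := by
    ext y
    rw [mem_image_snd, Finset.mem_Icc]
    constructor
    · rintro ⟨x, hm⟩
      obtain ⟨i, hi, -, -⟩ := mem_Qpoly.mp hm
      have := fin_coe_lt i
      have : (0:ℤ) ≤ ((i : ℕ) : ℤ) := by positivity
      omega
    · rintro ⟨h0, h1⟩
      refine ⟨(s ⟨y.toNat, by omega⟩ : ℤ) - 1, mem_Qpoly.mpr ⟨⟨y.toNat, by omega⟩, by simp; omega, ?_, le_rfl⟩⟩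
      have := hs ⟨y.toNat, by omega⟩; omega
  rw [himg, Int.card_Icc]
  omega

lemma width_Qpoly {ε h : ℕ} {s : Fin h → ℕ} (hε : ε ≤ 1) (hh : 0 < h)
    (hs : ∀ i, 1 ≤ s i) : width (Qpoly ε h s) = 2 * Finset.univ.sup s - ε := by
  unfold width
  obtain ⟨i0, -, hi0⟩ := Finset.exists_mem_eq_sup Finset.univ
    (Finset.univ_nonempty_iff.mpr ⟨⟨0, hh⟩⟩) s
  set w := Finset.univ.sup s with hw
  have hw1 : 1 ≤ w := hi0 ▸ hs i0
  have himg : (Qpoly ε h s).image Prod.fst = Finset.Icc ((ε : ℤ) - w) ((w : ℤ) - 1) := by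
    ext x
    rw [mem_image_fst, Finset.mem_Icc]
    constructor
    · rintro ⟨y, hm⟩
      obtain ⟨i, -, h1, h2⟩ := mem_Qpoly.mp hm
      have hsw : s i ≤ w := Finset.le_sup (Finset.mem_univ i)
      have : (s i : ℤ) ≤ (w : ℤ) := by exact_mod_cast hsw
      omega
    · rintro ⟨h0, h1⟩
      exact ⟨((i0 : ℕ) : ℤ), mem_Qpoly.mpr ⟨i0, rfl, by rw [← hi0]; omega, by rw [← hi0]; omega⟩⟩
  rw [himg, Int.card_Icc]
  omega

lemma area_Qpoly {ε h : ℕ} {s : Fin h → ℕ} (hε : ε ≤ 1) (hs : ∀ i, 1 ≤ s i) :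
    area (Qpoly ε h s) + ε * h = 2 * ∑ i, s i := by
  unfold area Qpoly
  rw [Finset.card_biUnion]
  · have hterm : ∀ i : Fin h,
        ((Finset.Icc ((ε : ℤ) - s i) ((s i : ℤ) - 1)).image fun x => (x, ((i:ℕ):ℤ))).card
          = 2 * s i - ε := by
      intro i
      rw [Finset.card_image_of_injective _ (by intro a b hab; simpa using hab),
        Int.card_Icc]
      have := hs i; omega
    rw [Finset.sum_congr rfl fun i _ => hterm i]
    have : ε * h = ∑ _i : Fin h, ε := by
      rw [Finset.sum_const, Finset.card_univ, Fintype.card_fin, smul_eq_mul, mul_comm]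
    rw [this, ← Finset.sum_add_distrib, Finset.mul_sum]
    exact Finset.sum_congr rfl fun i _ => by have := hs i; omega
  · intro i _ j _ hij
    rw [Function.onFun, Finset.disjoint_left]
    rintro ⟨x, y⟩ hx hy
    simp only [Finset.mem_image, Prod.mk.injEq] at hx hy
    obtain ⟨-, -, -, h1⟩ := hx
    obtain ⟨-, -, -, h2⟩ := hy
    exact hij (Fin.ext (by omega))

end Stmt10Aux

namespace Stmt10Aux
open Finset

lemma Qpoly_row_nonempty {ε h : ℕ} {s : Fin h → ℕ} (hε : ε ≤ 1) (hs : ∀ i, 1 ≤ s i)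
    (i : Fin h) : ((s i : ℤ) - 1, ((i : ℕ) : ℤ)) ∈ Qpoly ε h s :=
  mem_Qpoly.mpr ⟨i, rfl, by have := hs i; omega, le_rfl⟩

lemma Qpoly_translate_inj {ε h : ℕ} {s s' : Fin h → ℕ} (hε : ε ≤ 1)
    (hs : ∀ i, 1 ≤ s i) (hs' : ∀ i, 1 ≤ s' i) (v : Cell)
    (heq : Qpoly ε h s' = cellTranslate v (Qpoly ε h s)) : s = s' := by
  rcases Nat.eq_zero_or_pos h with rfl | hh
  · funext i; exact absurd i.isLt (by omega)
  have hmem : ∀ x y : ℤ, (x, y) ∈ Qpoly ε h s' ↔ (x - v.1, y - v.2) ∈ Qpoly ε h s := by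
    intro x y; rw [heq, mem_cellTranslate]
  have hv2 : v.2 = 0 := by
    have h1 := (hmem ((s' ⟨0, hh⟩ : ℤ) - 1) 0).mp (by
      simpa using Qpoly_row_nonempty hε hs' ⟨0, hh⟩)
    obtain ⟨i, hi, -, -⟩ := mem_Qpoly.mp h1
    have hi2 := fin_coe_lt i
    have hi0 : (0:ℤ) ≤ ((i:ℕ):ℤ) := by positivity
    have h2 := (hmem ((s ⟨0, hh⟩ : ℤ) - 1 + v.1) ((0:ℤ) + v.2)).mpr (by
      simpa using Qpoly_row_nonempty hε hs ⟨0, hh⟩)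
    obtain ⟨j, hj, -, -⟩ := mem_Qpoly.mp h2
    have hj2 := fin_coe_lt j
    have hj0 : (0:ℤ) ≤ ((j:ℕ):ℤ) := by positivity
    omega
  funext i
  have hrow : ∀ x : ℤ, ((ε:ℤ) - s' i ≤ x ∧ x ≤ (s' i : ℤ) - 1) ↔
      ((ε:ℤ) - s i ≤ x - v.1 ∧ x - v.1 ≤ (s i : ℤ) - 1) := by
    intro x
    constructor
    · intro hx
      obtain ⟨j, hj, hb⟩ := mem_Qpoly.mp ((hmem x ((i:ℕ):ℤ)).mp
        (mem_Qpoly.mpr ⟨i, rfl, hx.1, hx.2⟩))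
      have : j = i := Fin.ext (by omega)
      subst this
      exact hb
    · intro hx
      obtain ⟨j, hj, hb⟩ := mem_Qpoly.mp ((hmem x ((i:ℕ):ℤ)).mpr
        (mem_Qpoly.mpr ⟨i, by omega, hx.1, hx.2⟩))
      have : j = i := Fin.ext (by omega)
      subst this
      exact hb
  have hA := (hrow ((ε:ℤ) - s' i)).mp ⟨le_rfl, by have := hs' i; omega⟩
  have hB := (hrow ((s' i : ℤ) - 1)).mp ⟨by have := hs' i; omega, le_rfl⟩
  have hC := (hrow ((ε:ℤ) - s i + v.1)).mpr ⟨by omega, by have := hs i; omega⟩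
  have hD := (hrow ((s i : ℤ) - 1 + v.1)).mpr ⟨by have := hs i; omega, by omega⟩
  have : (s i : ℤ) = (s' i : ℤ) := by omega
  exact_mod_cast this

lemma unimodal_of_no_valley {n : ℕ} (hn : 0 < n) (s : Fin n → ℕ)
    (hnv : ∀ i j k : Fin n, i ≤ j → j ≤ k → min (s i) (s k) ≤ s j) : Unimodal s := by
  obtain ⟨p, -, hp⟩ := Finset.exists_max_image Finset.univ s
    (Finset.univ_nonempty_iff.mpr ⟨⟨0, hn⟩⟩)
  refine ⟨p, ?_, ?_⟩
  · intro i j hij hjp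
    have h1 := hnv i j p hij hjp
    have h2 := hp i (Finset.mem_univ i)
    omega
  · intro i j hpi hij
    have h1 := hnv p i j hpi hij
    have h2 := hp j (Finset.mem_univ j)
    omega

end Stmt10Aux

namespace Stmt10Aux
open Finset

lemma eq_translate_Qpoly (P : Finset Cell) (ε h : ℕ) (c y1 : ℤ) (s : Fin h → ℕ)
    (hiff : ∀ x y : ℤ, (x, y) ∈ P ↔ ∃ i : Fin h, y1 + ((i : ℕ) : ℤ) = y ∧
      (ε : ℤ) - s i + c ≤ x ∧ x ≤ (s i : ℤ) - 1 + c) :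
    P = cellTranslate (c, y1) (Qpoly ε h s) := by
  ext ⟨x, y⟩
  rw [mem_cellTranslate]
  show (x, y) ∈ P ↔ (x - c, y - y1) ∈ Qpoly ε h s
  rw [mem_Qpoly, hiff]
  exact exists_congr fun i => by constructor <;> rintro ⟨h1, h2, h3⟩ <;>
    exact ⟨by omega, by omega, by omega⟩

lemma extract (P : Finset Cell) (hne : P.Nonempty) (hc : IsConvexPoly P)
    (hsym : SymBy vMap P) :
    ∃ (ε h : ℕ) (s : Fin h → ℕ) (u : Cell), ε ≤ 1 ∧ 0 < h ∧ Unimodal s ∧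
      (∀ i, 1 ≤ s i) ∧ P = cellTranslate u (Qpoly ε h s) := by
  obtain ⟨hcol, hrow⟩ := hc
  obtain ⟨v, hv⟩ := hsym
  have hSy : (P.image Prod.snd).Nonempty := hne.image _
  -- the vertical reflection fixes each row, so v.2 = 0
  have hv2 : v.2 = 0 := by
    have h1 : (P.image vMap).image Prod.snd = P.image Prod.snd := by
      rw [Finset.image_image]; rfl
    have h2 : (cellTranslate v P).image Prod.snd
        = (P.image Prod.snd).image (fun y => y + v.2) := by
      unfold cellTranslate; rw [Finset.image_image, Finset.image_image]; rfl
    have h3 : (P.image Prod.snd).image (fun y => y + v.2) = P.image Prod.snd := by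
      rw [← h2, ← hv, h1]
    have h4 : ∑ y ∈ (P.image Prod.snd).image (fun y => y + v.2), y
        = ∑ y ∈ P.image Prod.snd, (y + v.2) := by
      apply Finset.sum_image
      intro a _ b _ hab
      exact add_right_cancel hab
    rw [h3, Finset.sum_add_distrib, Finset.sum_const, nsmul_eq_mul] at h4
    have hcard : 0 < (P.image Prod.snd).card := Finset.card_pos.mpr hSy
    have : ((P.image Prod.snd).card : ℤ) * v.2 = 0 := by omega
    have := mul_eq_zero.mp this
    rcases this with h | h
    · exact absurd h (by exact_mod_cast hcard.ne')
    · exact h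
  set m : ℤ := -v.1 with hm
  have hrefl : ∀ x y : ℤ, (x, y) ∈ P → (m - x, y) ∈ P := by
    intro x y hxy
    have h1 : vMap (x, y) ∈ cellTranslate v P := by
      rw [← hv]; exact Finset.mem_image_of_mem _ hxy
    rw [mem_cellTranslate] at h1
    have heq : ((vMap (x, y)).1 - v.1, (vMap (x, y)).2 - v.2) = (m - x, y) := by
      simp [vMap, hv2, hm]; ring
    rwa [heq] at h1
  -- row structure
  have rowStruct : ∀ y ∈ P.image Prod.snd, ∃ l r : ℤ, l ≤ r ∧ l + r = m ∧
      ∀ x : ℤ, ((x, y) ∈ P ↔ l ≤ x ∧ x ≤ r) := by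
    intro y hy
    obtain ⟨x0, hx0⟩ := mem_image_snd.mp hy
    set row : Finset ℤ := (P.filter fun d => d.2 = y).image Prod.fst with hrowdef
    have hrowmem : ∀ x : ℤ, x ∈ row ↔ (x, y) ∈ P := by
      intro x
      simp only [hrowdef, Finset.mem_image, Finset.mem_filter]
      constructor
      · rintro ⟨⟨a, b⟩, ⟨hP, hb⟩, ha⟩
        simp only at ha hb
        rw [← ha, ← hb]; exact hP
      · intro hx; exact ⟨(x, y), ⟨hx, rfl⟩, rfl⟩
    have hrowne : row.Nonempty := ⟨x0, (hrowmem x0).mpr hx0⟩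
    set l := row.min' hrowne with hl
    set r := row.max' hrowne with hr
    have hlP : (l, y) ∈ P := (hrowmem l).mp (row.min'_mem hrowne)
    have hrP : (r, y) ∈ P := (hrowmem r).mp (row.max'_mem hrowne)
    have hlr : l ≤ r := row.min'_le r (row.max'_mem hrowne)
    have h1 : m - r ∈ row := (hrowmem _).mpr (hrefl r y hrP)
    have h2 : m - l ∈ row := (hrowmem _).mpr (hrefl l y hlP)
    have h3 : l ≤ m - r := row.min'_le _ h1
    have h4 : m - l ≤ r := row.le_max' _ h2
    refine ⟨l, r, hlr, by omega, fun x => ⟨fun hx => ⟨row.min'_le x ((hrowmem x).mpr hx),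
      row.le_max' x ((hrowmem x).mpr hx)⟩, fun hx => hrow y l r x hlP hrP hx.1 hx.2⟩⟩
  choose! l r hlr hsum hmem using rowStruct
  obtain ⟨c, ε, hε1, hεm⟩ : ∃ (c : ℤ) (ε : ℕ), ε ≤ 1 ∧ m + 1 = 2 * c + ε :=
    ⟨(m + 1) / 2, ((m + 1) % 2).toNat, by omega, by omega⟩
  have hcc : ∀ y ∈ P.image Prod.snd, l y ≤ c ∧ c ≤ r y := by
    intro y hy
    have h1 := hlr y hy
    have h2 := hsum y hy
    omega
  have hcenter : ∀ y ∈ P.image Prod.snd, (c, y) ∈ P := by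
    intro y hy
    exact (hmem y hy c).mpr ⟨(hcc y hy).1, (hcc y hy).2⟩
  set y1 := (P.image Prod.snd).min' hSy with hy1
  set y2 := (P.image Prod.snd).max' hSy with hy2
  have hy12 : y1 ≤ y2 := Finset.min'_le _ _ (Finset.max'_mem _ hSy)
  have hSyIcc : ∀ y : ℤ, y ∈ P.image Prod.snd ↔ y1 ≤ y ∧ y ≤ y2 := by
    intro y
    constructor
    · intro hy; exact ⟨Finset.min'_le _ _ hy, Finset.le_max' _ _ hy⟩
    · rintro ⟨ha, hb⟩
      have h1 := hcenter y1 (Finset.min'_mem _ hSy)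
      have h2 := hcenter y2 (Finset.max'_mem _ hSy)
      exact mem_image_snd.mpr ⟨c, hcol c y1 y2 y h1 h2 ha hb⟩
  set h : ℕ := (y2 - y1 + 1).toNat with hhdef
  have hhz : (h : ℤ) = y2 - y1 + 1 := by omega
  have hh : 0 < h := by omega
  have hmemy : ∀ i : Fin h, y1 + ((i : ℕ) : ℤ) ∈ P.image Prod.snd := by
    intro i
    rw [hSyIcc]
    have := i.isLt
    have : ((i : ℕ) : ℤ) < (h : ℤ) := by exact_mod_cast this
    omega
  set s : Fin h → ℕ := fun i => (r (y1 + ((i : ℕ) : ℤ)) - c + 1).toNat with hsdef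
  have hs_cast : ∀ i : Fin h, (s i : ℤ) = r (y1 + ((i : ℕ) : ℤ)) - c + 1 := by
    intro i
    have := (hcc _ (hmemy i)).2
    simp only [hsdef]
    omega
  have hspos : ∀ i, 1 ≤ s i := by
    intro i
    have h1 := (hcc _ (hmemy i)).2
    have h2 := hs_cast i
    omega
  have hls : ∀ i : Fin h, l (y1 + ((i : ℕ) : ℤ)) = (ε : ℤ) - s i + c := by
    intro i
    have h1 := hsum _ (hmemy i)
    have h2 := hs_cast i
    omega
  -- unimodality
  have hnv : ∀ i j k : Fin h, i ≤ j → j ≤ k → min (s i) (s k) ≤ s j := by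
    intro i j k hij hjk
    set x' : ℤ := min (r (y1 + ((i : ℕ) : ℤ))) (r (y1 + ((k : ℕ) : ℤ))) with hx'
    have hci := (hcc _ (hmemy i))
    have hcj := (hcc _ (hmemy j))
    have hck := (hcc _ (hmemy k))
    have hxi : (x', y1 + ((i : ℕ) : ℤ)) ∈ P :=
      (hmem _ (hmemy i) x').mpr ⟨by omega, by omega⟩
    have hxk : (x', y1 + ((k : ℕ) : ℤ)) ∈ P :=
      (hmem _ (hmemy k) x').mpr ⟨by omega, by omega⟩
    have hij' : ((i : ℕ) : ℤ) ≤ ((j : ℕ) : ℤ) := by exact_mod_cast hij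
    have hjk' : ((j : ℕ) : ℤ) ≤ ((k : ℕ) : ℤ) := by exact_mod_cast hjk
    have hxj : (x', y1 + ((j : ℕ) : ℤ)) ∈ P :=
      hcol x' _ _ _ hxi hxk (by omega) (by omega)
    have hb := (hmem _ (hmemy j) x').mp hxj
    have e1 := hs_cast i
    have e2 := hs_cast j
    have e3 := hs_cast k
    omega
  refine ⟨ε, h, s, (c, y1), hε1, hh, unimodal_of_no_valley hh s hnv, hspos, ?_⟩
  apply eq_translate_Qpoly
  intro x y
  constructor
  · intro hxy
    have hyS : y ∈ P.image Prod.snd := mem_image_snd.mpr ⟨x, hxy⟩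
    have hyb := (hSyIcc y).mp hyS
    have hyblt : (y - y1).toNat < h := by omega
    set iy : Fin h := ⟨(y - y1).toNat, hyblt⟩ with hiydef
    have hidx : y1 + ((iy : ℕ) : ℤ) = y := by simp [hiydef]; omega
    have hlsi := hls iy
    have hsci := hs_cast iy
    rw [hidx] at hlsi hsci
    have hb := (hmem y hyS x).mp hxy
    exact ⟨iy, hidx, by omega, by omega⟩
  · rintro ⟨i, hiy, hb1, hb2⟩
    have hyS : y ∈ P.image Prod.snd := by rw [← hiy]; exact hmemy i
    refine (hmem y hyS x).mpr ⟨?_, ?_⟩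
    · have := hls i
      rw [hiy] at this
      omega
    · have := hs_cast i
      rw [hiy] at this
      omega
end Stmt10Aux

namespace Stmt10Aux
open Finset

lemma count_eq (ε w h a : ℕ) (hε : ε ≤ 1) (hw : 1 ≤ w) (hh : 1 ≤ h) (ha : 1 ≤ a)
    (Φ : Finset Cell → Prop)
    (hΦ : ∀ P, Φ P ↔ IsPolyomino P ∧ IsConvexPoly P ∧ SymBy vMap P ∧
      width P = 2 * w - ε ∧ height P = h ∧ area P + ε * h = 2 * a) :
    classCount Φ = Nat.card {s : Fin h → ℕ // Unimodal s ∧ (∀ i, 1 ≤ s i) ∧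
      Finset.univ.sup s = w ∧ ∑ i, s i = a} := by
  unfold classCount
  rw [← Nat.card_coe_set_eq]
  set S := {O : Set (Finset Cell) | ∃ P : Finset Cell, Φ P ∧ O = transClass P} with hS
  set T := {s : Fin h → ℕ // Unimodal s ∧ (∀ i, 1 ≤ s i) ∧
    Finset.univ.sup s = w ∧ ∑ i, s i = a} with hT
  have hQΦ : ∀ t : T, Φ (Qpoly ε h t.1) := by
    rintro ⟨s, hs1, hs2, hs3, hs4⟩
    rw [hΦ]
    refine ⟨isPolyomino_Qpoly hε hh hs2, isConvexPoly_Qpoly hs1, symBy_Qpoly s, ?_, ?_, ?_⟩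
    · rw [width_Qpoly hε hh hs2, hs3]
    · exact height_Qpoly hε hs2
    · rw [area_Qpoly hε hs2, hs4]
  let f : T → S := fun t => ⟨transClass (Qpoly ε h t.1), Qpoly ε h t.1, hQΦ t, rfl⟩
  have hfinj : Function.Injective f := by
    rintro ⟨s, hs1, hs2, hs3, hs4⟩ ⟨s', hs1', hs2', hs3', hs4'⟩ hfeq
    have heq : transClass (Qpoly ε h s) = transClass (Qpoly ε h s') :=
      congrArg Subtype.val hfeq
    have : Qpoly ε h s' ∈ transClass (Qpoly ε h s) := by
      rw [heq]; exact self_mem_transClass _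
    obtain ⟨v, hv⟩ := this
    exact Subtype.ext (Qpoly_translate_inj hε hs2 hs2' v hv)
  have hfsurj : Function.Surjective f := by
    rintro ⟨O, hO⟩
    obtain ⟨P, hΦP, rfl⟩ := hO
    rw [hΦ] at hΦP
    obtain ⟨hpoly, hconv, hsym, hwid, hht, har⟩ := hΦP
    obtain ⟨ε', h', s, u, hε', hh', huni, hspos, hPeq⟩ := extract P hpoly.1 hconv hsym
    have hht' : h' = h := by
      rw [← hht, hPeq, height_cellTranslate, height_Qpoly hε' hspos]
    subst hht'
    have hsup1 : 1 ≤ Finset.univ.sup s :=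
      le_trans (hspos ⟨0, hh'⟩) (Finset.le_sup (Finset.mem_univ _))
    have hwid' : 2 * Finset.univ.sup s - ε' = 2 * w - ε := by
      rw [← width_Qpoly hε' hh' hspos, ← width_cellTranslate u, ← hPeq, hwid]
    have hεε : ε' = ε ∧ Finset.univ.sup s = w := by omega
    obtain ⟨rfl, hsup⟩ := hεε
    have har' : area P + ε' * h' = 2 * ∑ i, s i := by
      rw [hPeq, area_cellTranslate, area_Qpoly hε' hspos]
    have hsumeq : ∑ i, s i = a := by omega
    refine ⟨⟨s, huni, hspos, hsup, hsumeq⟩, ?_⟩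
    apply Subtype.ext
    show transClass (Qpoly ε' h' s) = transClass P
    rw [hPeq, transClass_cellTranslate]
  exact (Nat.card_congr (Equiv.ofBijective f ⟨hfinj, hfsurj⟩)).symm

end Stmt10Aux

/-- Counting `v`-symmetric convex polyominoes by stacks: for `w, h, a ≥ 1`,
(i) those of width `2w`, height `h`, area `2a`, and (ii) those of width `2w−1`,
height `h`, area `2a−h`, are both counted by unimodal sequences of positive integers
of length `h` with maximum `w` and sum `a`; and every `v`-symmetric convex polyomino
arises in exactly one of these two ways. -/
theorem stmt10 :
    (∀ w h a : ℕ, 1 ≤ w → 1 ≤ h → 1 ≤ a →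
      classCount (fun P => IsPolyomino P ∧ IsConvexPoly P ∧ SymBy vMap P ∧
          width P = 2 * w ∧ height P = h ∧ area P = 2 * a)
        = Nat.card {s : Fin h → ℕ // Unimodal s ∧ (∀ i, 1 ≤ s i) ∧
            Finset.univ.sup s = w ∧ ∑ i, s i = a}) ∧
    (∀ w h a : ℕ, 1 ≤ w → 1 ≤ h → 1 ≤ a →
      classCount (fun P => IsPolyomino P ∧ IsConvexPoly P ∧ SymBy vMap P ∧
          width P = 2 * w - 1 ∧ height P = h ∧ area P + h = 2 * a)
        = Nat.card {s : Fin h → ℕ // Unimodal s ∧ (∀ i, 1 ≤ s i) ∧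
            Finset.univ.sup s = w ∧ ∑ i, s i = a}) ∧
    (∀ P : Finset Cell, IsPolyomino P → IsConvexPoly P → SymBy vMap P →
      (Even (width P) → Even (area P)) ∧
      (Odd (width P) → Even (area P + height P))) := by
  refine ⟨?_, ?_, ?_⟩
  · intro w h a hw hh ha
    exact Stmt10Aux.count_eq 0 w h a (by omega) hw hh ha _
      (fun P => by constructor <;> rintro ⟨h1, h2, h3, h4, h5, h6⟩ <;>
        exact ⟨h1, h2, h3, by omega, h5, by omega⟩)
  · intro w h a hw hh ha
    exact Stmt10Aux.count_eq 1 w h a (by omega) hw hh ha _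
      (fun P => by constructor <;> rintro ⟨h1, h2, h3, h4, h5, h6⟩ <;>
        exact ⟨h1, h2, h3, by omega, h5, by omega⟩)
  · intro P hpoly hconv hsym
    obtain ⟨ε, h', s, u, hε, hh', huni, hspos, hPeq⟩ :=
      Stmt10Aux.extract P hpoly.1 hconv hsym
    have hsup1 : 1 ≤ Finset.univ.sup s :=
      le_trans (hspos ⟨0, hh'⟩) (Finset.le_sup (Finset.mem_univ _))
    have hwid : width P = 2 * Finset.univ.sup s - ε := by
      rw [hPeq, Stmt10Aux.width_cellTranslate, Stmt10Aux.width_Qpoly hε hh' hspos]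
    have hht : height P = h' := by
      rw [hPeq, Stmt10Aux.height_cellTranslate, Stmt10Aux.height_Qpoly hε hspos]
    have har : area P + ε * h' = 2 * ∑ i, s i := by
      rw [hPeq, Stmt10Aux.area_cellTranslate, Stmt10Aux.area_Qpoly hε hspos]
    rcases (by omega : ε = 0 ∨ ε = 1) with rfl | rfl
    · constructor
      · rintro ⟨k, hk⟩
        exact ⟨∑ i, s i, by omega⟩
      · rintro ⟨k, hk⟩
        exact absurd hk (by omega)
    · constructor
      · rintro ⟨k, hk⟩
        exact absurd hk (by omega)
      · rintro ⟨k, hk⟩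
        exact ⟨∑ i, s i, by omega⟩
end

section
/- Let f_n^{oo}(q) = Σ_P q^{area(P)} over translation-classes of hv-symmetric convex polyominoes P of half-perimeter n with odd width and odd height, and f_n^{eo}(q) the analogous polynomial for even width and odd height. Then f_n^{oo}(q) = q^{n−1} · Σ_{i=0}^{(n−2)/2} [(n−2)/2 choose i]_{q⁴} when n is even, and f_n^{oo}(q) = 0 when n is odd; f_n^{eo}(q) = q^{n−1} · Σ_{i=0}^{(n−3)/2} q^{2i} · [(n−3)/2 choose i]_{q⁴} when n is odd, and f_n^{eo}(q) = 0 when n is even. -/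
/-- The q-Pochhammer symbol `(q;q)_n = (1-q)(1-q²)⋯(1-qⁿ)` as a polynomial in `q`. -/
noncomputable def qpoch (n : ℕ) : Polynomial ℤ :=
  ∏ i ∈ Finset.range n, (1 - Polynomial.X ^ (i + 1))

/- ### Section A: translation machinery -/

lemma mem_cellTranslate {v : Cell} {P : Finset Cell} {c : Cell} :
    c ∈ cellTranslate v P ↔ (c.1 - v.1, c.2 - v.2) ∈ P := by
  unfold cellTranslate
  simp only [Finset.mem_image]
  constructor
  · rintro ⟨a, ha, rfl⟩; simpa using ha
  · intro h; exact ⟨_, h, by simp⟩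

lemma cellTranslate_comp (v w : Cell) (P : Finset Cell) :
    cellTranslate v (cellTranslate w P) = cellTranslate (w.1 + v.1, w.2 + v.2) P := by
  ext c; simp only [mem_cellTranslate]; constructor <;> intro h <;> convert h using 2 <;> ring

lemma cellTranslate_zero (P : Finset Cell) : cellTranslate (0, 0) P = P := by
  ext c; simp [mem_cellTranslate]

lemma transClass_translate (v : Cell) (P : Finset Cell) :
    transClass (cellTranslate v P) = transClass P := by
  ext Q
  constructor
  · rintro ⟨w, rfl⟩; exact ⟨(v.1 + w.1, v.2 + w.2), cellTranslate_comp w v P⟩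
  · rintro ⟨w, rfl⟩
    refine ⟨(w.1 - v.1, w.2 - v.2), ?_⟩
    rw [cellTranslate_comp]
    congr 1 <;> simp <;> ring

def PNorm (P : Finset Cell) : Prop :=
  (∀ c ∈ P, 0 ≤ c.1 ∧ 0 ≤ c.2) ∧ (∃ c ∈ P, c.1 = 0) ∧ (∃ c ∈ P, c.2 = 0)

lemma norm_unique {P Q : Finset Cell} {v : Cell} (hP : PNorm P) (hQ : PNorm Q)
    (h : Q = cellTranslate v P) : Q = P := by
  obtain ⟨hP1, ⟨c1, hc1, hc1'⟩, ⟨c2, hc2, hc2'⟩⟩ := hP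
  obtain ⟨hQ1, ⟨d1, hd1, hd1'⟩, ⟨d2, hd2, hd2'⟩⟩ := hQ
  have hv1 : v.1 = 0 := by
    have h1 : (c1.1 + v.1, c1.2 + v.2) ∈ Q := by
      rw [h, mem_cellTranslate]; simpa using hc1
    have h2 := (hQ1 _ h1).1
    rw [h, mem_cellTranslate] at hd1
    have h3 := (hP1 _ hd1).1
    simp only at h2 h3
    omega
  have hv2 : v.2 = 0 := by
    have h1 : (c2.1 + v.1, c2.2 + v.2) ∈ Q := by
      rw [h, mem_cellTranslate]; simpa using hc2
    have h2 := (hQ1 _ h1).2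
    rw [h, mem_cellTranslate] at hd2
    have h3 := (hP1 _ hd2).2
    simp only at h2 h3
    omega
  rw [h]
  have : v = (0,0) := Prod.ext hv1 hv2
  rw [this, cellTranslate_zero]

lemma norm_exists {P : Finset Cell} (hP : P.Nonempty) :
    ∃ v : Cell, PNorm (cellTranslate v P) := by
  have hx : (P.image Prod.fst).Nonempty := hP.image _
  have hy : (P.image Prod.snd).Nonempty := hP.image _
  refine ⟨(-(P.image Prod.fst).min' hx, -(P.image Prod.snd).min' hy), ?_⟩
  constructor
  · intro c hc
    rw [mem_cellTranslate] at hc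
    constructor
    · have := Finset.min'_le _ _ (Finset.mem_image_of_mem Prod.fst hc)
      simp only at this ⊢; omega
    · have := Finset.min'_le _ _ (Finset.mem_image_of_mem Prod.snd hc)
      simp only at this ⊢; omega
  constructor
  · obtain ⟨x, hx'⟩ := Finset.mem_image.1 (Finset.min'_mem (P.image Prod.fst) hx)
    refine ⟨(x.1 + -(P.image Prod.fst).min' hx, x.2 + -(P.image Prod.snd).min' hy), ?_, by
      simp only []; omega⟩
    rw [mem_cellTranslate]; simpa using hx'.1
  · obtain ⟨x, hx'⟩ := Finset.mem_image.1 (Finset.min'_mem (P.image Prod.snd) hy)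
    refine ⟨(x.1 + -(P.image Prod.fst).min' hx, x.2 + -(P.image Prod.snd).min' hy), ?_, by
      simp only []; omega⟩
    rw [mem_cellTranslate]; simpa using hx'.1

lemma classCount_eq_ncard_norm (Φ : Finset Cell → Prop)
    (hinv : ∀ v P, Φ P → Φ (cellTranslate v P))
    (hne : ∀ P, Φ P → P.Nonempty) :
    classCount Φ = Set.ncard {P : Finset Cell | Φ P ∧ PNorm P} := by
  have himg : {O : Set (Finset Cell) | ∃ P : Finset Cell, Φ P ∧ O = transClass P}
      = transClass '' {P : Finset Cell | Φ P ∧ PNorm P} := by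
    ext O
    constructor
    · rintro ⟨P, hP, rfl⟩
      obtain ⟨v, hv⟩ := norm_exists (hne P hP)
      exact ⟨cellTranslate v P, ⟨hinv v P hP, hv⟩, (transClass_translate v P)⟩
    · rintro ⟨P, ⟨hP, _⟩, rfl⟩
      exact ⟨P, hP, rfl⟩
  rw [classCount, himg]
  refine Set.ncard_image_of_injOn ?_
  rintro P ⟨_, hPn⟩ Q ⟨_, hQn⟩ h
  have : Q ∈ transClass P := by rw [h]; exact ⟨(0,0), (cellTranslate_zero Q).symm⟩
  obtain ⟨v, hv⟩ := this
  exact (norm_unique hPn hQn hv).symm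

/- ### Section A2: translation invariance of the predicates -/

lemma translate_inj (v : Cell) : Function.Injective (fun c : Cell => (c.1 + v.1, c.2 + v.2)) := by
  intro a b h
  simp only [Prod.mk.injEq] at h
  exact Prod.ext (by omega) (by omega)

lemma isPolyomino_translate {P : Finset Cell} (v : Cell) (h : IsPolyomino P) :
    IsPolyomino (cellTranslate v P) := by
  obtain ⟨hne, hconn⟩ := h
  constructor
  · exact hne.image _
  · intro a ha b hb
    rw [mem_cellTranslate] at ha hb
    have hpath := hconn _ ha _ hb
    have key := Relation.ReflTransGen.lift
      (r := fun c d : Cell => c ∈ P ∧ d ∈ P ∧ (c.1 - d.1).natAbs + (c.2 - d.2).natAbs = 1)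
      (p := fun c d : Cell => c ∈ cellTranslate v P ∧ d ∈ cellTranslate v P ∧
        (c.1 - d.1).natAbs + (c.2 - d.2).natAbs = 1)
      (fun c : Cell => (c.1 + v.1, c.2 + v.2))
      (fun c d hcd => by
        refine ⟨?_, ?_, ?_⟩
        · rw [mem_cellTranslate]; simpa using hcd.1
        · rw [mem_cellTranslate]; simpa using hcd.2.1
        · have := hcd.2.2; simp only []; omega) _ _ hpath
    convert key using 2 <;> simp <;> omega

lemma isConvexPoly_translate {P : Finset Cell} (v : Cell) (h : IsConvexPoly P) :
    IsConvexPoly (cellTranslate v P) := by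
  obtain ⟨h1, h2⟩ := h
  constructor
  · intro x y1 y2 y m1 m2 l1 l2
    rw [mem_cellTranslate] at *
    exact h1 _ _ _ _ m1 m2 (by omega) (by omega)
  · intro y x1 x2 x m1 m2 l1 l2
    rw [mem_cellTranslate] at *
    exact h2 _ _ _ _ m1 m2 (by omega) (by omega)

lemma image_hMap_translate (v : Cell) (P : Finset Cell) :
    (cellTranslate v P).image hMap = cellTranslate (v.1, -v.2) (P.image hMap) := by
  unfold cellTranslate
  rw [Finset.image_image, Finset.image_image]
  congr 1
  funext c
  simp only [Function.comp_apply, hMap, Prod.mk.injEq]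
  exact ⟨trivial, by ring⟩

lemma image_vMap_translate (v : Cell) (P : Finset Cell) :
    (cellTranslate v P).image vMap = cellTranslate (-v.1, v.2) (P.image vMap) := by
  unfold cellTranslate
  rw [Finset.image_image, Finset.image_image]
  congr 1
  funext c
  simp only [Function.comp_apply, vMap, Prod.mk.injEq]
  exact ⟨by ring, trivial⟩

lemma symBy_hMap_translate {P : Finset Cell} (v : Cell) (h : SymBy hMap P) :
    SymBy hMap (cellTranslate v P) := by
  obtain ⟨w, hw⟩ := h
  refine ⟨(w.1, w.2 - 2*v.2), ?_⟩
  rw [image_hMap_translate, hw, cellTranslate_comp, cellTranslate_comp]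
  congr 1
  refine Prod.ext ?_ ?_ <;> simp <;> ring

lemma symBy_vMap_translate {P : Finset Cell} (v : Cell) (h : SymBy vMap P) :
    SymBy vMap (cellTranslate v P) := by
  obtain ⟨w, hw⟩ := h
  refine ⟨(w.1 - 2*v.1, w.2), ?_⟩
  rw [image_vMap_translate, hw, cellTranslate_comp, cellTranslate_comp]
  congr 1
  refine Prod.ext ?_ ?_ <;> simp <;> ring

lemma width_translate (v : Cell) (P : Finset Cell) : width (cellTranslate v P) = width P := by
  unfold width cellTranslate
  rw [Finset.image_image]
  have : (P.image (Prod.fst ∘ fun c : Cell => (c.1 + v.1, c.2 + v.2)))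
      = (P.image Prod.fst).image (fun x => x + v.1) := by
    rw [Finset.image_image]; rfl
  rw [this, Finset.card_image_of_injective _ (add_left_injective v.1)]

lemma height_translate (v : Cell) (P : Finset Cell) : height (cellTranslate v P) = height P := by
  unfold height cellTranslate
  rw [Finset.image_image]
  have : (P.image (Prod.snd ∘ fun c : Cell => (c.1 + v.1, c.2 + v.2)))
      = (P.image Prod.snd).image (fun x => x + v.2) := by
    rw [Finset.image_image]; rfl
  rw [this, Finset.card_image_of_injective _ (add_left_injective v.2)]

lemma area_translate (v : Cell) (P : Finset Cell) : area (cellTranslate v P) = area P := by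
  unfold area cellTranslate
  exact Finset.card_image_of_injective _ (translate_inj v)

/- ### Section C: canonical column polyominoes -/

/-- The polyomino with columns `x ∈ [0,w)`, column `x` spanning `[b - H x, b + H x]`. -/
noncomputable def colPoly (w b : ℕ) (H : ℤ → ℕ) : Finset Cell :=
  (Finset.Ico (0:ℤ) (w:ℤ)).biUnion fun x =>
    (Finset.Icc ((b:ℤ) - H x) ((b:ℤ) + H x)).image fun y => (x, y)

lemma mem_colPoly {w b : ℕ} {H : ℤ → ℕ} {c : Cell} :
    c ∈ colPoly w b H ↔
      0 ≤ c.1 ∧ c.1 < w ∧ (b:ℤ) - H c.1 ≤ c.2 ∧ c.2 ≤ (b:ℤ) + H c.1 := by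
  unfold colPoly
  simp only [Finset.mem_biUnion, Finset.mem_Ico, Finset.mem_image, Finset.mem_Icc]
  constructor
  · rintro ⟨x, ⟨h1, h2⟩, y, ⟨h3, h4⟩, rfl⟩
    exact ⟨h1, h2, h3, h4⟩
  · rintro ⟨h1, h2, h3, h4⟩
    exact ⟨c.1, ⟨h1, h2⟩, c.2, ⟨h3, h4⟩, rfl⟩

lemma colPoly_congr {w b : ℕ} {H H' : ℤ → ℕ}
    (h : ∀ x : ℤ, 0 ≤ x → x < w → H x = H' x) :
    colPoly w b H = colPoly w b H' := by
  ext c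
  rw [mem_colPoly, mem_colPoly]
  constructor
  · rintro ⟨h1, h2, h3, h4⟩
    rw [h _ h1 h2] at h3 h4
    exact ⟨h1, h2, h3, h4⟩
  · rintro ⟨h1, h2, h3, h4⟩
    rw [← h _ h1 h2] at h3 h4
    exact ⟨h1, h2, h3, h4⟩

/-- Admissibility of the column-height data. -/
def Adm (w b : ℕ) (H : ℤ → ℕ) : Prop :=
  1 ≤ w ∧
  (∀ x x' : ℤ, 0 ≤ x → x < w → min x ((w:ℤ) - 1 - x) ≤ x' → x' ≤ max x ((w:ℤ) - 1 - x) →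
    H x ≤ H x') ∧
  (∀ x : ℤ, 0 ≤ x → x < w → H x ≤ b) ∧
  (∃ x : ℤ, 0 ≤ x ∧ x < w ∧ H x = b)

namespace Adm

variable {w b : ℕ} {H : ℤ → ℕ} (hA : Adm w b H)

include hA

lemma symm {x : ℤ} (h1 : 0 ≤ x) (h2 : x < w) : H ((w:ℤ) - 1 - x) = H x := by
  have hu := hA.2.1
  have a1 := hu x ((w:ℤ)-1-x) h1 h2 (by omega) (by omega)
  have a2 := hu ((w:ℤ)-1-x) x (by omega) (by omega) (by omega) (by omega)
  omega

lemma unimodal {x1 x2 x : ℤ} (h1 : 0 ≤ x1) (h2 : x2 < w) (h3 : x1 ≤ x) (h4 : x ≤ x2)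
    (t : ℕ) (ht1 : t ≤ H x1) (ht2 : t ≤ H x2) : t ≤ H x := by
  have hu := hA.2.1
  have : (min x1 ((w:ℤ)-1-x1) ≤ x ∧ x ≤ max x1 ((w:ℤ)-1-x1)) ∨
      (min x2 ((w:ℤ)-1-x2) ≤ x ∧ x ≤ max x2 ((w:ℤ)-1-x2)) := by omega
  rcases this with ⟨u1, u2⟩ | ⟨u1, u2⟩
  · exact le_trans ht1 (hu x1 x h1 (by omega) u1 u2)
  · exact le_trans ht2 (hu x2 x (by omega) h2 u1 u2)

lemma width_colPoly : width (colPoly w b H) = w := by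
  have himg : (colPoly w b H).image Prod.fst = Finset.Ico (0:ℤ) (w:ℤ) := by
    ext x
    simp only [Finset.mem_image, Finset.mem_Ico]
    constructor
    · rintro ⟨c, hc, rfl⟩
      have := mem_colPoly.1 hc
      exact ⟨this.1, this.2.1⟩
    · rintro ⟨h1, h2⟩
      exact ⟨(x, (b:ℤ)), mem_colPoly.2 ⟨h1, h2, by omega, by omega⟩, rfl⟩
  rw [width, himg, Int.card_Ico]
  simp

lemma height_colPoly : height (colPoly w b H) = 2 * b + 1 := by
  obtain ⟨x0, hx0, hx0', hx0b⟩ := hA.2.2.2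
  have himg : (colPoly w b H).image Prod.snd = Finset.Icc (0:ℤ) (2*b:ℤ) := by
    ext y
    simp only [Finset.mem_image, Finset.mem_Icc]
    constructor
    · rintro ⟨c, hc, rfl⟩
      obtain ⟨h1, h2, h3, h4⟩ := mem_colPoly.1 hc
      have := hA.2.2.1 c.1 h1 h2
      omega
    · rintro ⟨h1, h2⟩
      refine ⟨(x0, y), mem_colPoly.2 ?_, rfl⟩
      dsimp only
      rw [hx0b]
      exact ⟨hx0, hx0', by omega, by omega⟩
  rw [height, himg, Int.card_Icc]
  omega

lemma area_colPoly :
    area (colPoly w b H) = ∑ x ∈ Finset.Ico (0:ℤ) (w:ℤ), (2 * H x + 1) := by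
  rw [area, colPoly, Finset.card_biUnion]
  · refine Finset.sum_congr rfl fun x _ => ?_
    rw [Finset.card_image_of_injective _ (fun a b h => by simpa using h), Int.card_Icc]
    omega
  · intro x _ x' _ hne
    simp only [Finset.disjoint_left, Finset.mem_image]
    rintro c ⟨y, _, rfl⟩ ⟨y', _, h⟩
    exact hne (by simpa using congrArg Prod.fst h.symm)

lemma convex_colPoly : IsConvexPoly (colPoly w b H) := by
  constructor
  · intro x y1 y2 y m1 m2 l1 l2
    rw [mem_colPoly] at *
    simp only at *
    refine ⟨m1.1, m1.2.1, by omega, by omega⟩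
  · intro y x1 x2 x m1 m2 l1 l2
    rw [mem_colPoly] at *
    simp only at *
    obtain ⟨a1, a2, a3, a4⟩ := m1
    obtain ⟨b1, b2, b3, b4⟩ := m2
    have hy : ∃ t : ℕ, (t ≤ H x1 ∧ t ≤ H x2) ∧ ((y ≤ b ∧ (b:ℤ) - t ≤ y) ∨ (b ≤ y ∧ y ≤ (b:ℤ) + t)) := by
      rcases le_total y (b:ℤ) with h | h
      · exact ⟨((b:ℤ) - y).toNat, ⟨by omega, by omega⟩, Or.inl ⟨h, by omega⟩⟩
      · exact ⟨(y - (b:ℤ)).toNat, ⟨by omega, by omega⟩, Or.inr ⟨h, by omega⟩⟩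
    obtain ⟨t, ⟨ht1, ht2⟩, hy⟩ := hy
    have := hA.unimodal a1 b2 l1 l2 t ht1 ht2
    exact ⟨by omega, by omega, by omega, by omega⟩

lemma symByH_colPoly : SymBy hMap (colPoly w b H) := by
  refine ⟨(0, -(2*(b:ℤ))), ?_⟩
  ext c
  simp only [Finset.mem_image, mem_cellTranslate, sub_zero]
  constructor
  · rintro ⟨a, ha, rfl⟩
    obtain ⟨h1, h2, h3, h4⟩ := mem_colPoly.1 ha
    rw [mem_colPoly]
    dsimp only [hMap]
    exact ⟨h1, h2, by omega, by omega⟩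
  · intro hc
    rw [mem_colPoly] at hc
    dsimp only at hc
    obtain ⟨h1, h2, h3, h4⟩ := hc
    refine ⟨(c.1, -c.2), mem_colPoly.2 ?_, ?_⟩
    · dsimp only
      exact ⟨by omega, by omega, by omega, by omega⟩
    · dsimp only [hMap]
      exact Prod.ext rfl (by omega)

lemma symByV_colPoly : SymBy vMap (colPoly w b H) := by
  refine ⟨(1 - (w:ℤ), 0), ?_⟩
  ext c
  simp only [Finset.mem_image, mem_cellTranslate, sub_zero]
  constructor
  · rintro ⟨a, ha, rfl⟩
    obtain ⟨h1, h2, h3, h4⟩ := mem_colPoly.1 ha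
    rw [mem_colPoly]
    dsimp only [vMap]
    have hs : H ((w:ℤ) - 1 - a.1) = H a.1 := hA.symm h1 h2
    rw [show -a.1 - (1 - (w:ℤ)) = (w:ℤ) - 1 - a.1 by ring, hs]
    exact ⟨by omega, by omega, by omega, by omega⟩
  · intro hc
    rw [mem_colPoly] at hc
    dsimp only at hc
    obtain ⟨h1, h2, h3, h4⟩ := hc
    refine ⟨(-c.1, c.2), mem_colPoly.2 ?_, ?_⟩
    · dsimp only
      have hs : H ((w:ℤ) - 1 - -c.1) = H (-c.1) := hA.symm (by omega) (by omega)
      rw [show (w:ℤ) - 1 - -c.1 = c.1 - (1 - (w:ℤ)) by ring] at hs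
      rw [← hs]
      exact ⟨by omega, by omega, by omega, by omega⟩
    · dsimp only [vMap]
      exact Prod.ext (by omega) rfl

end Adm

/- ### Connectivity -/

abbrev adjRel (P : Finset Cell) : Cell → Cell → Prop :=
  fun c d => c ∈ P ∧ d ∈ P ∧ (c.1 - d.1).natAbs + (c.2 - d.2).natAbs = 1

lemma adjRel_symm {P : Finset Cell} : Symmetric (adjRel P) := by
  rintro c d ⟨h1, h2, h3⟩
  exact ⟨h2, h1, by omega⟩

lemma path_vert_aux {P : Finset Cell} (x : ℤ) :
    ∀ d : ℕ, ∀ y : ℤ, (∀ z, y ≤ z → z ≤ y + d → (x, z) ∈ P) →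
    Relation.ReflTransGen (adjRel P) (x, y) (x, y + d) := by
  intro d
  induction d with
  | zero => intro y _; simpa using Relation.ReflTransGen.refl
  | succ d ih =>
    intro y hy
    have step : adjRel P (x, y) (x, y + 1) :=
      ⟨hy y le_rfl (by omega), hy (y+1) (by omega) (by omega), by simp⟩
    have rest := ih (y+1) (fun z h1 h2 => hy z (by omega) (by omega))
    have : (x, y + 1 + (d:ℤ)) = (x, y + ((d:ℕ)+1 : ℕ)) := by
      refine Prod.ext rfl ?_; push_cast; ring
    rw [this] at rest
    exact Relation.ReflTransGen.head step rest

lemma path_vert {P : Finset Cell} {x y y' : ℤ}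
    (h : ∀ z, min y y' ≤ z → z ≤ max y y' → (x, z) ∈ P) :
    Relation.ReflTransGen (adjRel P) (x, y) (x, y') := by
  rcases le_total y y' with hle | hle
  · have := path_vert_aux x (y' - y).toNat y (fun z h1 h2 => h z (by omega) (by omega))
    rw [show y + ((y' - y).toNat : ℤ) = y' by omega] at this
    exact this
  · have := path_vert_aux x (y - y').toNat y' (fun z h1 h2 => h z (by omega) (by omega))
    rw [show y' + ((y - y').toNat : ℤ) = y by omega] at this
    haveI hs : Std.Symm (adjRel P) := ⟨adjRel_symm⟩
    exact Std.Symm.symm _ _ this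

lemma path_horiz_aux {P : Finset Cell} (y : ℤ) :
    ∀ d : ℕ, ∀ x : ℤ, (∀ z, x ≤ z → z ≤ x + d → (z, y) ∈ P) →
    Relation.ReflTransGen (adjRel P) (x, y) (x + d, y) := by
  intro d
  induction d with
  | zero => intro x _; simpa using Relation.ReflTransGen.refl
  | succ d ih =>
    intro x hx
    have step : adjRel P (x, y) (x + 1, y) :=
      ⟨hx x le_rfl (by omega), hx (x+1) (by omega) (by omega), by simp⟩
    have rest := ih (x+1) (fun z h1 h2 => hx z (by omega) (by omega))
    have : (x + 1 + (d:ℤ), y) = (x + ((d:ℕ)+1 : ℕ), y) := by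
      refine Prod.ext ?_ rfl; push_cast; ring
    rw [this] at rest
    exact Relation.ReflTransGen.head step rest

lemma path_horiz {P : Finset Cell} {x x' y : ℤ}
    (h : ∀ z, min x x' ≤ z → z ≤ max x x' → (z, y) ∈ P) :
    Relation.ReflTransGen (adjRel P) (x, y) (x', y) := by
  rcases le_total x x' with hle | hle
  · have := path_horiz_aux y (x' - x).toNat x (fun z h1 h2 => h z (by omega) (by omega))
    rw [show x + ((x' - x).toNat : ℤ) = x' by omega] at this
    exact this
  · have := path_horiz_aux y (x - x').toNat x' (fun z h1 h2 => h z (by omega) (by omega))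
    rw [show x' + ((x - x').toNat : ℤ) = x by omega] at this
    haveI hs : Std.Symm (adjRel P) := ⟨adjRel_symm⟩
    exact Std.Symm.symm _ _ this

lemma Adm.isPolyomino_colPoly {w b : ℕ} {H : ℤ → ℕ} (hA : Adm w b H) :
    IsPolyomino (colPoly w b H) := by
  have hw := hA.1
  have hrow : ∀ x : ℤ, 0 ≤ x → x < w → (x, (b:ℤ)) ∈ colPoly w b H := by
    intro x h1 h2
    exact mem_colPoly.2 ⟨h1, h2, by omega, by omega⟩
  constructor
  · exact ⟨(0, (b:ℤ)), hrow 0 le_rfl (by exact_mod_cast hw)⟩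
  · intro c hc d hd
    obtain ⟨c1, c2, c3, c4⟩ := mem_colPoly.1 hc
    obtain ⟨d1, d2, d3, d4⟩ := mem_colPoly.1 hd
    have p1 : Relation.ReflTransGen (adjRel (colPoly w b H)) c (c.1, (b:ℤ)) := by
      have : c = (c.1, c.2) := rfl
      rw [this]
      refine path_vert fun z h1 h2 => mem_colPoly.2 ?_
      dsimp only
      exact ⟨c1, c2, by omega, by omega⟩
    have p2 : Relation.ReflTransGen (adjRel (colPoly w b H)) (c.1, (b:ℤ)) (d.1, (b:ℤ)) :=
      path_horiz fun z h1 h2 => hrow z (by omega) (by omega)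
    have p3 : Relation.ReflTransGen (adjRel (colPoly w b H)) (d.1, (b:ℤ)) d := by
      have : d = (d.1, d.2) := rfl
      rw [this]
      refine path_vert fun z h1 h2 => mem_colPoly.2 ?_
      dsimp only
      exact ⟨d1, d2, by omega, by omega⟩
    exact (p1.trans p2).trans p3

/- ### Structure theorem helpers -/

lemma exists_fst_between {P : Finset Cell} {c d : Cell}
    (hpath : Relation.ReflTransGen (adjRel P) c d) (hc : c ∈ P) :
    ∀ t : ℤ, c.1 ≤ t → t ≤ d.1 → ∃ p ∈ P, p.1 = t := by
  induction hpath with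
  | refl => intro t h1 h2; exact ⟨c, hc, by omega⟩
  | tail hab hstep ih =>
    rename_i mid last
    intro t ht1 ht2
    rcases le_or_gt t mid.1 with h | h
    · exact ih t ht1 h
    · have := hstep.2.2
      have : t = last.1 := by omega
      exact ⟨last, hstep.2.1, this.symm⟩

lemma exists_snd_between {P : Finset Cell} {c d : Cell}
    (hpath : Relation.ReflTransGen (adjRel P) c d) (hc : c ∈ P) :
    ∀ t : ℤ, c.2 ≤ t → t ≤ d.2 → ∃ p ∈ P, p.2 = t := by
  induction hpath with
  | refl => intro t h1 h2; exact ⟨c, hc, by omega⟩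
  | tail hab hstep ih =>
    rename_i mid last
    intro t ht1 ht2
    rcases le_or_gt t mid.2 with h | h
    · exact ih t ht1 h
    · have := hstep.2.2
      have : t = last.2 := by omega
      exact ⟨last, hstep.2.1, this.symm⟩

lemma image_fst_eq_Ico {P : Finset Cell} (hpoly : IsPolyomino P) (hnorm : PNorm P) :
    P.image Prod.fst = Finset.Ico (0:ℤ) (width P : ℤ) := by
  obtain ⟨hnn, ⟨c0, hc0, hc0'⟩, _⟩ := hnorm
  have hne : (P.image Prod.fst).Nonempty := hpoly.1.image _
  set M := (P.image Prod.fst).max' hne with hM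
  obtain ⟨cM, hcM, hcM'⟩ := Finset.mem_image.1 ((P.image Prod.fst).max'_mem hne)
  have hIcc : P.image Prod.fst = Finset.Icc 0 M := by
    ext t
    simp only [Finset.mem_image, Finset.mem_Icc]
    constructor
    · rintro ⟨p, hp, rfl⟩
      exact ⟨(hnn p hp).1, Finset.le_max' _ _ (Finset.mem_image_of_mem _ hp)⟩
    · rintro ⟨h1, h2⟩
      have hpath := hpoly.2 c0 hc0 cM hcM
      obtain ⟨p, hp, hp'⟩ := exists_fst_between hpath hc0 t (by omega) (by omega)
      exact ⟨p, hp, hp'⟩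
  have hM0 : 0 ≤ M := by
    have : (0:ℤ) ∈ P.image Prod.fst := Finset.mem_image.2 ⟨c0, hc0, hc0'⟩
    exact Finset.le_max' _ _ this
  have hcard : (width P : ℤ) = M + 1 := by
    rw [width, hIcc, Int.card_Icc]
    omega
  rw [hIcc]
  ext t
  simp only [Finset.mem_Icc, Finset.mem_Ico]
  omega

lemma image_snd_eq_Ico {P : Finset Cell} (hpoly : IsPolyomino P) (hnorm : PNorm P) :
    P.image Prod.snd = Finset.Ico (0:ℤ) (height P : ℤ) := by
  obtain ⟨hnn, _, ⟨c0, hc0, hc0'⟩⟩ := hnorm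
  have hne : (P.image Prod.snd).Nonempty := hpoly.1.image _
  set M := (P.image Prod.snd).max' hne with hM
  obtain ⟨cM, hcM, hcM'⟩ := Finset.mem_image.1 ((P.image Prod.snd).max'_mem hne)
  have hIcc : P.image Prod.snd = Finset.Icc 0 M := by
    ext t
    simp only [Finset.mem_image, Finset.mem_Icc]
    constructor
    · rintro ⟨p, hp, rfl⟩
      exact ⟨(hnn p hp).2, Finset.le_max' _ _ (Finset.mem_image_of_mem _ hp)⟩
    · rintro ⟨h1, h2⟩
      have hpath := hpoly.2 c0 hc0 cM hcM
      obtain ⟨p, hp, hp'⟩ := exists_snd_between hpath hc0 t (by omega) (by omega)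
      exact ⟨p, hp, hp'⟩
  have hM0 : 0 ≤ M := by
    have : (0:ℤ) ∈ P.image Prod.snd := Finset.mem_image.2 ⟨c0, hc0, hc0'⟩
    exact Finset.le_max' _ _ this
  have hcard : (height P : ℤ) = M + 1 := by
    rw [height, hIcc, Int.card_Icc]
    omega
  rw [hIcc]
  ext t
  simp only [Finset.mem_Icc, Finset.mem_Ico]
  omega

set_option maxHeartbeats 2000000 in
theorem structure_colPoly {P : Finset Cell} (hpoly : IsPolyomino P) (hconv : IsConvexPoly P)
    (hh : SymBy hMap P) (hv : SymBy vMap P) (hodd : Odd (height P)) (hnorm : PNorm P) :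
    ∃ H : ℤ → ℕ, Adm (width P) ((height P - 1) / 2) H ∧
      P = colPoly (width P) ((height P - 1) / 2) H := by
  classical
  obtain ⟨b, hb⟩ : ∃ b : ℕ, height P = 2*b+1 := by
    obtain ⟨k, hk⟩ := hodd; exact ⟨k, by omega⟩
  have hb' : (height P - 1)/2 = b := by omega
  rw [hb']
  set w := width P with hw
  have hwpos : 1 ≤ w := by
    rw [hw, width]
    exact Finset.card_pos.2 (hpoly.1.image _)
  have hfst := image_fst_eq_Ico hpoly hnorm
  have hsnd := image_snd_eq_Ico hpoly hnorm
  have memx : ∀ c ∈ P, 0 ≤ c.1 ∧ c.1 < (w:ℤ) := by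
    intro c hc
    have : c.1 ∈ P.image Prod.fst := Finset.mem_image_of_mem _ hc
    rw [hfst] at this
    exact Finset.mem_Ico.1 this
  have memy : ∀ c ∈ P, 0 ≤ c.2 ∧ c.2 ≤ 2*(b:ℤ) := by
    intro c hc
    have : c.2 ∈ P.image Prod.snd := Finset.mem_image_of_mem _ hc
    rw [hsnd, hb] at this
    have := Finset.mem_Ico.1 this
    push_cast at this
    omega
  have colx : ∀ x : ℤ, 0 ≤ x → x < (w:ℤ) → ∃ y, (x, y) ∈ P := by
    intro x h1 h2
    have : x ∈ P.image Prod.fst := by rw [hfst]; exact Finset.mem_Ico.2 ⟨h1, h2⟩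
    obtain ⟨c, hc, hc'⟩ := Finset.mem_image.1 this
    exact ⟨c.2, by rwa [show (x, c.2) = c from Prod.ext hc'.symm rfl]⟩
  have rowy : ∀ y : ℤ, 0 ≤ y → y ≤ 2*(b:ℤ) → ∃ x, (x, y) ∈ P := by
    intro y h1 h2
    have : y ∈ P.image Prod.snd := by
      rw [hsnd, hb]
      refine Finset.mem_Ico.2 ⟨h1, by push_cast; omega⟩
    obtain ⟨c, hc, hc'⟩ := Finset.mem_image.1 this
    exact ⟨c.1, by rwa [show (c.1, y) = c from Prod.ext rfl hc'.symm]⟩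
  -- columns
  have colmem : ∀ x y : ℤ, y ∈ (P.filter (fun c => c.1 = x)).image Prod.snd ↔ (x, y) ∈ P := by
    intro x y
    simp only [Finset.mem_image, Finset.mem_filter]
    constructor
    · rintro ⟨c, ⟨hc, hc1⟩, hc2⟩
      rwa [show (x, y) = c from Prod.ext hc1.symm hc2.symm]
    · intro h
      exact ⟨(x, y), ⟨h, rfl⟩, rfl⟩
  have colne : ∀ x : ℤ, 0 ≤ x → x < (w:ℤ) →
      ((P.filter (fun c => c.1 = x)).image Prod.snd).Nonempty := by
    intro x h1 h2
    obtain ⟨y, hy⟩ := colx x h1 h2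
    exact ⟨y, (colmem x y).2 hy⟩
  set rmax : ℤ → ℤ := fun x => WithBot.unbotD 0 ((P.filter (fun c => c.1 = x)).image Prod.snd).max
    with hrmaxdef
  set lmin : ℤ → ℤ := fun x => WithTop.untopD 0 ((P.filter (fun c => c.1 = x)).image Prod.snd).min
    with hlmindef
  have rmax_eq : ∀ x (h : ((P.filter (fun c => c.1 = x)).image Prod.snd).Nonempty),
      rmax x = ((P.filter (fun c => c.1 = x)).image Prod.snd).max' h := by
    intro x h
    rw [hrmaxdef]
    simp only
    rw [← Finset.coe_max' h, WithBot.unbotD_coe]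
  have lmin_eq : ∀ x (h : ((P.filter (fun c => c.1 = x)).image Prod.snd).Nonempty),
      lmin x = ((P.filter (fun c => c.1 = x)).image Prod.snd).min' h := by
    intro x h
    rw [hlmindef]
    simp only
    rw [← Finset.coe_min' h, WithTop.untopD_coe]
  have rmax_mem : ∀ x : ℤ, 0 ≤ x → x < (w:ℤ) → (x, rmax x) ∈ P := by
    intro x h1 h2
    have h := colne x h1 h2
    rw [rmax_eq x h]
    exact (colmem _ _).1 (Finset.max'_mem _ h)
  have lmin_mem : ∀ x : ℤ, 0 ≤ x → x < (w:ℤ) → (x, lmin x) ∈ P := by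
    intro x h1 h2
    have h := colne x h1 h2
    rw [lmin_eq x h]
    exact (colmem _ _).1 (Finset.min'_mem _ h)
  have rmax_ge : ∀ x y : ℤ, (x, y) ∈ P → y ≤ rmax x := by
    intro x y hxy
    have hne : ((P.filter (fun c => c.1 = x)).image Prod.snd).Nonempty :=
      ⟨y, (colmem x y).2 hxy⟩
    rw [rmax_eq x hne]
    exact Finset.le_max' _ _ ((colmem x y).2 hxy)
  have lmin_le : ∀ x y : ℤ, (x, y) ∈ P → lmin x ≤ y := by
    intro x y hxy
    have hne : ((P.filter (fun c => c.1 = x)).image Prod.snd).Nonempty :=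
      ⟨y, (colmem x y).2 hxy⟩
    rw [lmin_eq x hne]
    exact Finset.min'_le _ _ ((colmem x y).2 hxy)
  have colint : ∀ x y : ℤ, 0 ≤ x → x < (w:ℤ) → lmin x ≤ y → y ≤ rmax x → (x, y) ∈ P := by
    intro x y h1 h2 h3 h4
    exact hconv.1 x (lmin x) (rmax x) y (lmin_mem x h1 h2) (rmax_mem x h1 h2) h3 h4
  -- h-symmetry
  obtain ⟨v, hvmap⟩ := hh
  have hHiff : ∀ x y : ℤ, (x, y) ∈ P ↔ (x - v.1, -y - v.2) ∈ P := by
    intro x y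
    constructor
    · intro ha
      have h1 : hMap (x, y) ∈ P.image hMap := Finset.mem_image_of_mem _ ha
      rw [hvmap, mem_cellTranslate] at h1
      dsimp only [hMap] at h1
      exact h1
    · intro ha
      have h1 : (x, -y) ∈ cellTranslate v P := by
        rw [mem_cellTranslate]
        dsimp only
        exact ha
      rw [← hvmap] at h1
      obtain ⟨p, hp, hp'⟩ := Finset.mem_image.1 h1
      have e1 := congrArg Prod.fst hp'
      have e2 := congrArg Prod.snd hp'
      dsimp only [hMap] at e1 e2
      rwa [show (x, y) = p from Prod.ext e1.symm (by omega)]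
  have hv1 : v.1 = 0 := by
    obtain ⟨y0, hy0⟩ := colx 0 le_rfl (by exact_mod_cast hwpos)
    have h1 := (hHiff 0 y0).1 hy0
    have h2 := (memx _ h1).1
    dsimp only at h2
    have h3 := (hHiff v.1 (-y0 - v.2)).2 (by
      rw [show v.1 - v.1 = (0:ℤ) by ring, show -(-y0 - v.2) - v.2 = y0 by ring]
      exact hy0)
    have h4 := (memx _ h3).1
    dsimp only at h4
    omega
  have hcolH : ∀ x y : ℤ, (x, y) ∈ P ↔ (x, -y - v.2) ∈ P := by
    intro x y
    have := hHiff x y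
    rwa [hv1, sub_zero] at this
  have hlr : ∀ x : ℤ, 0 ≤ x → x < (w:ℤ) → lmin x + rmax x = -v.2 := by
    intro x h1 h2
    have a1 := (hcolH x (rmax x)).1 (rmax_mem x h1 h2)
    have a2 := lmin_le _ _ a1
    have a3 := (hcolH x (lmin x)).1 (lmin_mem x h1 h2)
    have a4 := rmax_ge _ _ a3
    omega
  have hv2 : -v.2 = 2*(b:ℤ) := by
    obtain ⟨xa, hxa⟩ := rowy 0 le_rfl (by omega)
    obtain ⟨xb, hxb⟩ := rowy (2*(b:ℤ)) (by omega) le_rfl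
    have hxa' := memx _ hxa
    have hxb' := memx _ hxb
    dsimp only at hxa' hxb'
    have a1 : lmin xa = 0 := by
      have := lmin_le _ _ hxa
      have := (memy _ (lmin_mem xa hxa'.1 hxa'.2)).1
      dsimp only at *
      omega
    have a2 : rmax xb = 2*(b:ℤ) := by
      have := rmax_ge _ _ hxb
      have := (memy _ (rmax_mem xb hxb'.1 hxb'.2)).2
      dsimp only at *
      omega
    have a3 := hlr xa hxa'.1 hxa'.2
    have a4 := hlr xb hxb'.1 hxb'.2
    have a5 := (memy _ (rmax_mem xa hxa'.1 hxa'.2)).2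
    have a6 := (memy _ (lmin_mem xb hxb'.1 hxb'.2)).1
    dsimp only at a5 a6
    omega
  have hrange : ∀ x : ℤ, 0 ≤ x → x < (w:ℤ) →
      (b:ℤ) ≤ rmax x ∧ rmax x ≤ 2*(b:ℤ) ∧ lmin x = 2*(b:ℤ) - rmax x := by
    intro x h1 h2
    have a1 := hlr x h1 h2
    have a2 := lmin_le _ _ (rmax_mem x h1 h2)
    have a3 := (memy _ (rmax_mem x h1 h2)).2
    dsimp only at a3
    omega
  -- v-symmetry
  obtain ⟨u, humap⟩ := hv
  have hViff : ∀ x y : ℤ, (x, y) ∈ P ↔ (-x - u.1, y - u.2) ∈ P := by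
    intro x y
    constructor
    · intro ha
      have h1 : vMap (x, y) ∈ P.image vMap := Finset.mem_image_of_mem _ ha
      rw [humap, mem_cellTranslate] at h1
      dsimp only [vMap] at h1
      exact h1
    · intro ha
      have h1 : (-x, y) ∈ cellTranslate u P := by
        rw [mem_cellTranslate]
        dsimp only
        exact ha
      rw [← humap] at h1
      obtain ⟨p, hp, hp'⟩ := Finset.mem_image.1 h1
      have e1 := congrArg Prod.fst hp'
      have e2 := congrArg Prod.snd hp'
      dsimp only [vMap] at e1 e2
      rwa [show (x, y) = p from Prod.ext (by omega) e2.symm]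
  have hu1 : u.1 = 1 - (w:ℤ) := by
    obtain ⟨y0, hy0⟩ := colx 0 le_rfl (by exact_mod_cast hwpos)
    have hwZ : 1 ≤ (w:ℤ) := by exact_mod_cast hwpos
    obtain ⟨y1, hy1⟩ := colx ((w:ℤ)-1) (by omega) (by omega)
    have h1 := (hViff 0 y0).1 hy0
    have h2 := memx _ h1
    have h3 := (hViff ((w:ℤ)-1) y1).1 hy1
    have h4 := memx _ h3
    dsimp only at h2 h4
    omega
  have hu2 : u.2 = 0 := by
    obtain ⟨xa, hxa⟩ := rowy 0 le_rfl (by omega)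
    have h1 := (hViff xa 0).1 hxa
    have h2 := (memy _ h1).1
    dsimp only at h2
    have h3 := (hViff (-xa - u.1) u.2).2 (by
      rw [show -(-xa - u.1) - u.1 = xa by ring, show u.2 - u.2 = (0:ℤ) by ring]
      exact hxa)
    have h4 := (memy _ h3).1
    dsimp only at h4
    omega
  have hmirror : ∀ x y : ℤ, (x, y) ∈ P → ((w:ℤ) - 1 - x, y) ∈ P := by
    intro x y hxy
    have := (hViff x y).1 hxy
    rw [hu1, hu2, sub_zero, show -x - (1 - (w:ℤ)) = (w:ℤ) - 1 - x by ring] at this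
    exact this
  have hrmirror : ∀ x : ℤ, 0 ≤ x → x < (w:ℤ) → rmax ((w:ℤ) - 1 - x) = rmax x := by
    intro x h1 h2
    have le1 : rmax x ≤ rmax ((w:ℤ)-1-x) :=
      rmax_ge _ _ (hmirror x (rmax x) (rmax_mem x h1 h2))
    have le2 : rmax ((w:ℤ)-1-x) ≤ rmax x := by
      have h3 := hmirror ((w:ℤ)-1-x) (rmax ((w:ℤ)-1-x)) (rmax_mem _ (by omega) (by omega))
      rw [show (w:ℤ) - 1 - ((w:ℤ) - 1 - x) = x by ring] at h3
      exact rmax_ge _ _ h3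
    omega
  -- the height function
  set Hf : ℤ → ℕ := fun x => (rmax x - b).toNat with hHfdef
  have hHfeq : ∀ x : ℤ, Hf x = (rmax x - b).toNat := fun x => rfl
  refine ⟨Hf, ⟨hwpos, ?_, ?_, ?_⟩, ?_⟩
  · -- unimodality
    intro x x' h1 h2 h3 h4
    rw [hHfeq x, hHfeq x']
    set x1 := min x ((w:ℤ) - 1 - x) with hx1
    set x2 := max x ((w:ℤ) - 1 - x) with hx2
    have hre : rmax x1 = rmax x ∧ rmax x2 = rmax x := by
      have e : (x1 = x ∧ x2 = (w:ℤ)-1-x) ∨ (x1 = (w:ℤ)-1-x ∧ x2 = x) := by omega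
      rcases e with ⟨e1, e2⟩ | ⟨e1, e2⟩
      · rw [e1, e2]
        exact ⟨rfl, hrmirror x h1 h2⟩
      · rw [e1, e2]
        exact ⟨hrmirror x h1 h2, rfl⟩
    have hx1b : 0 ≤ x1 ∧ x1 < (w:ℤ) := by omega
    have hx2b : 0 ≤ x2 ∧ x2 < (w:ℤ) := by omega
    have c1 : (x1, rmax x) ∈ P := by
      refine colint x1 (rmax x) hx1b.1 hx1b.2 ?_ ?_
      · have := hrange x1 hx1b.1 hx1b.2
        have := hrange x h1 h2
        omega
      · omega
    have c2 : (x2, rmax x) ∈ P := by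
      refine colint x2 (rmax x) hx2b.1 hx2b.2 ?_ ?_
      · have := hrange x2 hx2b.1 hx2b.2
        have := hrange x h1 h2
        omega
      · omega
    have c3 : (x', rmax x) ∈ P := hconv.2 (rmax x) x1 x2 x' c1 c2 h3 h4
    have c4 := rmax_ge _ _ c3
    have := hrange x h1 h2
    omega
  · -- bounded by b
    intro x h1 h2
    have := hrange x h1 h2
    rw [hHfeq x]
    omega
  · -- witness
    obtain ⟨xb, hxb⟩ := rowy (2*(b:ℤ)) (by omega) le_rfl
    have hxb' := memx _ hxb
    dsimp only at hxb'
    refine ⟨xb, hxb'.1, hxb'.2, ?_⟩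
    rw [hHfeq xb]
    have a1 := rmax_ge _ _ hxb
    have a2 := (memy _ (rmax_mem xb hxb'.1 hxb'.2)).2
    dsimp only at a2
    omega
  · -- P = colPoly
    ext c
    rw [mem_colPoly, hHfeq c.1]
    constructor
    · intro hc
      have h1 := memx _ hc
      have h2 : (c.1, c.2) ∈ P := by rwa [Prod.mk.eta]
      have h3 := rmax_ge _ _ h2
      have h4 := lmin_le _ _ h2
      have h5 := hrange c.1 h1.1 h1.2
      exact ⟨h1.1, h1.2, by omega, by omega⟩
    · rintro ⟨h1, h2, h3, h4⟩
      have h5 := hrange c.1 h1 h2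
      have := colint c.1 c.2 h1 h2 (by omega) (by omega)
      rwa [Prod.mk.eta] at this



open Polynomial in
lemma qpoch_ne_zero (n : ℕ) : qpoch n ≠ 0 := by
  intro h
  have : (qpoch n).eval 0 = 1 := by
    unfold qpoch
    rw [Polynomial.eval_prod]
    refine Finset.prod_eq_one fun i _ => ?_
    simp [zero_pow (Nat.succ_ne_zero i)]
  rw [h] at this
  simp at this

lemma qpoch_succ (n : ℕ) : qpoch (n+1) = qpoch n * (1 - Polynomial.X ^ (n+1)) :=
  Finset.prod_range_succ _ n

/-- Partitions in a `k × l` box, as antitone functions `Fin k → ℕ` bounded by `l`. -/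
noncomputable def boxSet (k l : ℕ) : Finset (Fin k → ℕ) :=
  ((Finset.univ : Finset (Fin k → Fin (l+1))).image (fun f i => (f i : ℕ))).filter
    (fun g => ∀ i j : Fin k, i ≤ j → g j ≤ g i)

lemma mem_boxSet {k l : ℕ} {g : Fin k → ℕ} :
    g ∈ boxSet k l ↔ (∀ i, g i ≤ l) ∧ (∀ i j : Fin k, i ≤ j → g j ≤ g i) := by
  unfold boxSet
  rw [Finset.mem_filter]
  constructor
  · rintro ⟨h1, h2⟩
    refine ⟨?_, h2⟩
    obtain ⟨f, _, rfl⟩ := Finset.mem_image.1 h1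
    intro i
    exact Nat.lt_succ_iff.1 (f i).isLt
  · rintro ⟨h1, h2⟩
    refine ⟨Finset.mem_image.2 ⟨fun i => ⟨g i, Nat.lt_succ_iff.2 (h1 i)⟩, Finset.mem_univ _, rfl⟩, h2⟩

noncomputable def Bpoly (k l : ℕ) : Polynomial ℤ :=
  ∑ g ∈ boxSet k l, Polynomial.X ^ (∑ i, g i)

lemma Bpoly_zero_left (l : ℕ) : Bpoly 0 l = 1 := by
  have : boxSet 0 l = {fun i => i.elim0} := by
    ext g
    simp only [Finset.mem_singleton, mem_boxSet]
    constructor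
    · intro _; funext i; exact i.elim0
    · rintro rfl; exact ⟨fun i => i.elim0, fun i => i.elim0⟩
  rw [Bpoly, this]
  simp

lemma Bpoly_zero_right (k : ℕ) : Bpoly k 0 = 1 := by
  have : boxSet k 0 = {fun _ => 0} := by
    ext g
    simp only [Finset.mem_singleton, mem_boxSet]
    constructor
    · rintro ⟨h1, _⟩; funext i; exact Nat.le_zero.1 (h1 i)
    · rintro rfl; exact ⟨fun _ => le_rfl, fun _ _ _ => le_rfl⟩
  rw [Bpoly, this]
  simp

def snoc0 {k : ℕ} (g : Fin k → ℕ) : Fin (k+1) → ℕ := Fin.snoc g 0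
def dec1 {k : ℕ} (g : Fin k → ℕ) : Fin k → ℕ := fun i => g i - 1
def inc1 {k : ℕ} (g : Fin k → ℕ) : Fin k → ℕ := fun i => g i + 1

lemma Bpoly_pascal (k l : ℕ) :
    Bpoly (k+1) (l+1) = Bpoly k (l+1) + Polynomial.X ^ (k+1) * Bpoly (k+1) l := by
  classical
  rw [Bpoly, ← Finset.sum_filter_add_sum_filter_not (boxSet (k+1) (l+1))
    (fun g => g (Fin.last k) = 0)]
  congr 1
  · -- last entry 0 : biject with boxSet k (l+1)
    rw [Bpoly]
    refine Finset.sum_nbij' (fun g => g ∘ Fin.castSucc) snoc0 ?_ ?_ ?_ ?_ ?_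
    · intro g hg
      rw [Finset.mem_filter, mem_boxSet] at hg
      rw [mem_boxSet]
      exact ⟨fun i => hg.1.1 _,
        fun i j hij => hg.1.2 _ _ (Fin.castSucc_le_castSucc_iff.2 hij)⟩
    · intro g hg
      rw [mem_boxSet] at hg
      rw [Finset.mem_filter, mem_boxSet]
      refine ⟨⟨fun i => ?_, fun i j hij => ?_⟩, by simp [snoc0]⟩
      · induction i using Fin.lastCases with
        | last => simp [snoc0]
        | cast i => simpa [snoc0] using hg.1 i
      · induction j using Fin.lastCases with
        | last => simp [snoc0]
        | cast j =>
          induction i using Fin.lastCases with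
          | last =>
            have h2 : Fin.castSucc j ≤ Fin.last k := Fin.le_last _
            have h3 := le_antisymm hij h2
            rw [← h3]
          | cast i =>
            simp only [snoc0, Fin.snoc_castSucc]
            exact hg.2 i j (Fin.castSucc_le_castSucc_iff.1 hij)
    · intro g hg
      rw [Finset.mem_filter] at hg
      funext i
      induction i using Fin.lastCases with
      | last => simp [snoc0, hg.2]
      | cast i => simp [snoc0]
    · intro g hg
      funext i
      simp [snoc0]
    · intro g hg
      rw [Finset.mem_filter] at hg
      congr 1
      rw [Fin.sum_univ_castSucc]
      simp [hg.2, Function.comp]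
  · -- last entry ≥ 1 : subtract 1 everywhere
    rw [Bpoly, Finset.mul_sum]
    have hpos : ∀ g : Fin (k+1) → ℕ,
        g ∈ (boxSet (k+1) (l+1)).filter (fun g => ¬ g (Fin.last k) = 0) → ∀ i, 1 ≤ g i := by
      intro g hg i
      rw [Finset.mem_filter, mem_boxSet] at hg
      have := hg.1.2 i (Fin.last k) (Fin.le_last i)
      omega
    refine Finset.sum_nbij' dec1 inc1 ?_ ?_ ?_ ?_ ?_
    · intro g hg
      have hp := hpos g hg
      rw [Finset.mem_filter, mem_boxSet] at hg
      rw [mem_boxSet]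
      constructor
      · intro i
        have h1 := hg.1.1 i
        have h2 := hp i
        simp only [dec1]
        omega
      · intro i j hij
        have h1 := hg.1.2 i j hij
        have h2 := hp j
        simp only [dec1]
        omega
    · intro g hg
      rw [mem_boxSet] at hg
      rw [Finset.mem_filter, mem_boxSet]
      refine ⟨⟨fun i => ?_, fun i j hij => ?_⟩, by simp [inc1]⟩
      · have := hg.1 i
        simp only [inc1]
        omega
      · have := hg.2 i j hij
        simp only [inc1]
        omega
    · intro g hg
      have hp := hpos g hg
      funext i
      have := hp i
      simp only [inc1, dec1]
      omega
    · intro g hg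
      funext i
      simp only [inc1, dec1]
      omega
    · intro g hg
      have hp := hpos g hg
      rw [← pow_add]
      congr 1
      have : ∑ i, g i = ∑ i, (dec1 g i + 1) := by
        refine Finset.sum_congr rfl fun i _ => ?_
        have := hp i
        simp only [dec1]
        omega
      rw [this, Finset.sum_add_distrib]
      simp [add_comm]

section GaussLemmas
open Polynomial
variable (gauss : ℕ → ℕ → Polynomial ℤ)
  (hgauss : ∀ n k : ℕ, k ≤ n → gauss n k * qpoch k * qpoch (n - k) = qpoch n)

include hgauss

lemma gauss_zero (n : ℕ) : gauss n 0 = 1 := by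
  have h := hgauss n 0 (Nat.zero_le n)
  have h0 : qpoch 0 = 1 := Finset.prod_range_zero _
  rw [h0, mul_one, Nat.sub_zero] at h
  exact mul_right_cancel₀ (qpoch_ne_zero n) (by rw [h, one_mul])

lemma gauss_self (n : ℕ) : gauss n n = 1 := by
  have h := hgauss n n le_rfl
  have h0 : qpoch 0 = 1 := Finset.prod_range_zero _
  rw [Nat.sub_self, h0, mul_one] at h
  exact mul_right_cancel₀ (qpoch_ne_zero n) (by rw [h, one_mul])

lemma gauss_pascal (k l : ℕ) :
    gauss (k+l+2) (k+1) = gauss (k+l+1) k + X^(k+1) * gauss (k+l+1) (k+1) := by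
  have h1 := hgauss (k+l+2) (k+1) (by omega)
  rw [show k+l+2 - (k+1) = l+1 by omega] at h1
  have h2 := hgauss (k+l+1) k (by omega)
  rw [show k+l+1 - k = l+1 by omega] at h2
  have h3 := hgauss (k+l+1) (k+1) (by omega)
  rw [show k+l+1 - (k+1) = l by omega] at h3
  have e1 := qpoch_succ k
  have e2 := qpoch_succ l
  have e3 := qpoch_succ (k+l+1)
  rw [show k+l+1+1 = k+l+2 by omega] at e3
  have h2' : gauss (k+l+1) k * qpoch (k+1) * qpoch (l+1)
      = qpoch (k+l+1) * (1 - X^(k+1)) := by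
    rw [e1]
    linear_combination (1 - (X:Polynomial ℤ)^(k+1)) * h2
  have h3' : gauss (k+l+1) (k+1) * qpoch (k+1) * qpoch (l+1)
      = qpoch (k+l+1) * (1 - X^(l+1)) := by
    rw [e2]
    linear_combination (1 - (X:Polynomial ℤ)^(l+1)) * h3
  have hc : qpoch (k+1) * qpoch (l+1) ≠ 0 :=
    mul_ne_zero (qpoch_ne_zero _) (qpoch_ne_zero _)
  apply mul_right_cancel₀ hc
  linear_combination h1 - h2' - (X:Polynomial ℤ)^(k+1) * h3' + e3

lemma gauss_eq_Bpoly : ∀ k l : ℕ, gauss (k+l) k = Bpoly k l := by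
  intro k
  induction k with
  | zero =>
    intro l
    rw [Bpoly_zero_left, Nat.zero_add]
    exact gauss_zero gauss hgauss l
  | succ k ihk =>
    intro l
    induction l with
    | zero =>
      rw [Bpoly_zero_right]
      exact gauss_self gauss hgauss (k+1)
    | succ l ihl =>
      have hp := gauss_pascal gauss hgauss k l
      rw [show k+1+(l+1) = k+l+2 by omega, hp, Bpoly_pascal]
      congr 1
      · have := ihk (l+1)
        rw [show k+(l+1) = k+l+1 by omega] at this
        exact this
      · rw [show k+1+l = k+l+1 by omega] at ihl
        rw [ihl]

end GaussLemmas

lemma Bpoly_coeff (k l t : ℕ) :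
    (Bpoly k l).coeff t
      = (((boxSet k l).filter (fun g => ∑ i, g i = t)).card : ℤ) := by
  rw [Bpoly, Polynomial.finset_sum_coeff]
  rw [Finset.card_filter]
  push_cast
  refine Finset.sum_congr rfl fun g _ => ?_
  rw [Polynomial.coeff_X_pow]
  by_cases h : ∑ i, g i = t
  · simp [h]
  · rw [if_neg h, if_neg (fun ht => h ht.symm)]

/- ### Canonical height functions from box partitions -/

def stepH (k b : ℕ) (g : Fin k → ℕ) : ℕ → ℕ := fun d =>
  if d = 0 then b else if h2 : d - 1 < k then g ⟨d - 1, h2⟩ else 0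

def Hcan (w b k : ℕ) (g : Fin k → ℕ) : ℤ → ℕ :=
  fun x => stepH k b g ((2*x - ((w:ℤ)-1)).natAbs / 2)

lemma stepH_le {k b : ℕ} {g : Fin k → ℕ} (hg : g ∈ boxSet k b) (d : ℕ) :
    stepH k b g d ≤ b := by
  unfold stepH
  split
  · exact le_rfl
  · split
    · exact (mem_boxSet.1 hg).1 _
    · exact Nat.zero_le _

lemma stepH_anti {k b : ℕ} {g : Fin k → ℕ} (hg : g ∈ boxSet k b) {d1 d2 : ℕ}
    (h : d1 ≤ d2) : stepH k b g d2 ≤ stepH k b g d1 := by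
  unfold stepH
  rcases Nat.eq_zero_or_pos d1 with h1 | h1
  · rw [if_pos h1]
    split
    · exact le_rfl
    · split
      · exact (mem_boxSet.1 hg).1 _
      · exact Nat.zero_le _
  · rw [if_neg (by omega)]
    rw [if_neg (by omega)]
    split
    · rename_i h2
      rw [dif_pos (by omega : d1 - 1 < k)]
      exact (mem_boxSet.1 hg).2 ⟨d1 - 1, by omega⟩ ⟨d2 - 1, h2⟩ (by simp [Fin.le_def]; omega)
    · split
      · exact Nat.zero_le _
      · exact le_rfl

lemma adm_Hcan {w b k : ℕ} {g : Fin k → ℕ} (hw : 1 ≤ w) (hg : g ∈ boxSet k b) :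
    Adm w b (Hcan w b k g) := by
  refine ⟨hw, ?_, ?_, ?_⟩
  · intro x x' h1 h2 h3 h4
    unfold Hcan
    refine stepH_anti hg ?_
    omega
  · intro x _ _
    exact stepH_le hg _
  · refine ⟨((w:ℤ)-1)/2, by omega, by omega, ?_⟩
    unfold Hcan
    have : (2*(((w:ℤ)-1)/2) - ((w:ℤ)-1)).natAbs / 2 = 0 := by omega
    rw [this]
    rfl

lemma pnorm_colPoly {w b : ℕ} {H : ℤ → ℕ} (hA : Adm w b H) :
    PNorm (colPoly w b H) := by
  obtain ⟨x0, hx1, hx2, hx3⟩ := hA.2.2.2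
  refine ⟨?_, ?_, ?_⟩
  · intro c hc
    obtain ⟨h1, h2, h3, h4⟩ := mem_colPoly.1 hc
    have := hA.2.2.1 c.1 h1 h2
    exact ⟨h1, by omega⟩
  · refine ⟨(0, (b:ℤ)), mem_colPoly.2 ?_, rfl⟩
    dsimp only
    have : (1:ℤ) ≤ (w:ℤ) := by exact_mod_cast hA.1
    exact ⟨le_rfl, by omega, by omega, by omega⟩
  · refine ⟨(x0, 0), mem_colPoly.2 ⟨hx1, hx2, by rw [hx3]; omega, by rw [hx3]; omega⟩, rfl⟩

lemma sum_Ico_int (f : ℤ → ℕ) (n : ℕ) :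
    ∑ x ∈ Finset.Ico (0:ℤ) (n:ℤ), f x = ∑ i ∈ Finset.range n, f i := by
  refine Finset.sum_nbij' (fun x => x.toNat) (fun i => (i:ℤ)) ?_ ?_ ?_ ?_ ?_
  · intro x hx
    have := Finset.mem_Ico.1 hx
    refine Finset.mem_range.2 ?_
    omega
  · intro i hi
    have := Finset.mem_range.1 hi
    refine Finset.mem_Ico.2 ?_
    constructor <;> omega
  · intro x hx
    have := Finset.mem_Ico.1 hx
    omega
  · intro i _
    omega
  · intro x hx
    have := Finset.mem_Ico.1 hx
    congr 1
    omega

lemma stepH_succ_eq {k b : ℕ} (g : Fin k → ℕ) (i : ℕ) (hi : i < k) :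
    stepH k b g (i+1) = g ⟨i, hi⟩ := by
  unfold stepH
  rw [if_neg (by omega), dif_pos (by omega : i + 1 - 1 < k)]
  exact congrArg g (Fin.ext (by simp))

lemma stepH_zero {k b : ℕ} (g : Fin k → ℕ) : stepH k b g 0 = b := rfl

lemma sum_stepH (k b : ℕ) (g : Fin k → ℕ) :
    ∑ i ∈ Finset.range k, stepH k b g (i+1) = ∑ i, g i := by
  rw [← Fin.sum_univ_eq_sum_range (fun i => stepH k b g (i+1)) k]
  refine Finset.sum_congr rfl fun i _ => ?_
  rw [stepH_succ_eq g i.1 i.2]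

lemma sum_Hcan_odd (a b : ℕ) (g : Fin a → ℕ) :
    ∑ x ∈ Finset.Ico (0:ℤ) ((2*a+1 : ℕ):ℤ), Hcan (2*a+1) b a g x
      = b + 2 * ∑ i, g i := by
  rw [sum_Ico_int]
  set F : ℕ → ℕ := fun i => Hcan (2*a+1) b a g i with hF
  have hFd : ∀ i : ℕ, F i = stepH a b g ((2*(i:ℤ) - ((2*a+1:ℕ):ℤ)+1).natAbs / 2) := by
    intro i
    rw [hF]
    unfold Hcan
    congr 2
    push_cast
    ring
  have split : ∑ i ∈ Finset.range (2*a+1), F i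
      = ∑ i ∈ Finset.Ico 0 a, F i + ∑ i ∈ Finset.Ico a (2*a+1), F i := by
    rw [Finset.sum_Ico_consecutive _ (Nat.zero_le a) (by omega), Finset.range_eq_Ico]
  rw [split]
  have left : ∑ i ∈ Finset.Ico 0 a, F i = ∑ i, g i := by
    rw [← Finset.range_eq_Ico]
    have : ∀ i ∈ Finset.range a, F i = stepH a b g ((a - 1 - i)+1) := by
      intro i hi
      have hi' := Finset.mem_range.1 hi
      rw [hFd i]
      congr 1
      push_cast
      omega
    rw [Finset.sum_congr rfl this, Finset.sum_range_reflect (fun i => stepH a b g (i+1)) a]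
    exact sum_stepH a b g
  have right : ∑ i ∈ Finset.Ico a (2*a+1), F i = b + ∑ i, g i := by
    rw [Finset.sum_Ico_eq_sum_range]
    have h1 : 2*a+1-a = a+1 := by omega
    rw [h1, Finset.sum_range_succ']
    have h2 : ∀ i ∈ Finset.range a, F (a + (i+1)) = stepH a b g (i+1) := by
      intro i hi
      rw [hFd]
      congr 1
      push_cast
      omega
    have h3 : F (a + 0) = b := by
      rw [hFd]
      have : ((2*((a:ℕ):ℤ) - ((2*a+1:ℕ):ℤ)+1).natAbs / 2) = 0 := by push_cast; omega
      rw [show a + 0 = a from rfl]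
      push_cast
      rw [show ((2*((a:ℕ):ℤ) - (2*(a:ℤ)+1)+1).natAbs / 2) = 0 by push_cast; omega]
      rfl
    rw [Finset.sum_congr rfl h2, h3, sum_stepH]
    omega
  rw [left, right]
  omega

lemma sum_Hcan_even (k b : ℕ) (g : Fin k → ℕ) :
    ∑ x ∈ Finset.Ico (0:ℤ) ((2*k+2 : ℕ):ℤ), Hcan (2*k+2) b k g x
      = 2*b + 2 * ∑ i, g i := by
  rw [sum_Ico_int]
  set F : ℕ → ℕ := fun i => Hcan (2*k+2) b k g i with hF
  have hFd : ∀ i : ℕ, F i = stepH k b g ((2*(i:ℤ) - ((2*k+1:ℕ):ℤ)).natAbs / 2) := by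
    intro i
    rw [hF]
    unfold Hcan
    congr 2
    push_cast
    ring
  have split : ∑ i ∈ Finset.range (2*k+2), F i
      = ∑ i ∈ Finset.Ico 0 (k+1), F i + ∑ i ∈ Finset.Ico (k+1) (2*k+2), F i := by
    rw [Finset.sum_Ico_consecutive _ (Nat.zero_le (k+1)) (by omega), Finset.range_eq_Ico]
  rw [split]
  have left : ∑ i ∈ Finset.Ico 0 (k+1), F i = b + ∑ i, g i := by
    rw [← Finset.range_eq_Ico]
    have : ∀ i ∈ Finset.range (k+1), F i = stepH k b g (k - i) := by
      intro i hi
      have hi' := Finset.mem_range.1 hi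
      rw [hFd i]
      congr 1
      push_cast
      omega
    rw [Finset.sum_congr rfl this]
    have refl0 : ∀ i ∈ Finset.range (k+1), stepH k b g (k - i) = stepH k b g ((k+1) - 1 - i) := by
      intro i _
      congr 1
    rw [Finset.sum_congr rfl refl0,
      Finset.sum_range_reflect (fun i => stepH k b g i) (k+1), Finset.sum_range_succ']
    rw [sum_stepH, stepH_zero]
    omega
  have right : ∑ i ∈ Finset.Ico (k+1) (2*k+2), F i = b + ∑ i, g i := by
    rw [Finset.sum_Ico_eq_sum_range]
    have h1 : 2*k+2-(k+1) = k+1 := by omega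
    rw [h1, Finset.sum_range_succ']
    have h2 : ∀ i ∈ Finset.range k, F ((k+1) + (i+1)) = stepH k b g (i+1) := by
      intro i hi
      rw [hFd]
      congr 1
      push_cast
      omega
    have h3 : F ((k+1) + 0) = b := by
      rw [hFd]
      push_cast
      rw [show ((2*((k:ℤ)+1+0) - (2*(k:ℤ)+1)).natAbs / 2) = 0 by omega]
      rfl
    rw [Finset.sum_congr rfl h2, h3, sum_stepH]
    omega
  rw [left, right]
  omega

lemma Hcan_odd_eval (a b : ℕ) (g : Fin a → ℕ) (i : Fin a) :
    Hcan (2*a+1) b a g ((a:ℤ)+1+(i:ℤ)) = g i := by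
  unfold Hcan
  rw [show ((2*((a:ℤ)+1+(i:ℤ)) - (((2*a+1:ℕ):ℤ)-1)).natAbs / 2) = (i:ℕ)+1 by push_cast; omega]
  exact stepH_succ_eq g i.1 i.2 |>.trans (by congr)

lemma Hcan_even_eval (k b : ℕ) (g : Fin k → ℕ) (i : Fin k) :
    Hcan (2*k+2) b k g ((k:ℤ)+2+(i:ℤ)) = g i := by
  unfold Hcan
  rw [show ((2*((k:ℤ)+2+(i:ℤ)) - (((2*k+2:ℕ):ℤ)-1)).natAbs / 2) = (i:ℕ)+1 by push_cast; omega]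
  exact stepH_succ_eq g i.1 i.2 |>.trans (by congr)

/- ### Counting: odd-odd case -/

lemma colPoly_H_eq {w b : ℕ} {H1 H2 : ℤ → ℕ}
    (h : colPoly w b H1 = colPoly w b H2) {x : ℤ} (h1 : 0 ≤ x) (h2 : x < (w:ℤ)) :
    H1 x = H2 x := by
  have m1 : (x, (b:ℤ) + H1 x) ∈ colPoly w b H1 := by
    refine mem_colPoly.2 ?_
    dsimp only
    exact ⟨h1, h2, by omega, by omega⟩
  have m2 : (x, (b:ℤ) + H2 x) ∈ colPoly w b H2 := by
    refine mem_colPoly.2 ?_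
    dsimp only
    exact ⟨h1, h2, by omega, by omega⟩
  rw [h] at m1
  rw [← h] at m2
  have a1 := (mem_colPoly.1 m1).2.2.2
  have a2 := (mem_colPoly.1 m2).2.2.2
  dsimp only at a1 a2
  omega

lemma area_colPoly' {w b : ℕ} {H : ℤ → ℕ} (hA : Adm w b H) :
    area (colPoly w b H) = 2 * (∑ x ∈ Finset.Ico (0:ℤ) (w:ℤ), H x) + w := by
  rw [hA.area_colPoly, Finset.sum_add_distrib, Finset.sum_const, Int.card_Ico,
    ← Finset.mul_sum]
  have : ((w:ℤ) - 0).toNat = w := by omega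
  rw [this, smul_eq_mul, mul_one]

lemma adm_center_eq_b {w b : ℕ} {H : ℤ → ℕ} (hA : Adm w b H) {x : ℤ}
    (h1 : 0 ≤ x) (h2 : x < (w:ℤ)) (h3 : 2*x = (w:ℤ)-1 ∨ 2*x = (w:ℤ) ∨ 2*x = (w:ℤ)-2) :
    H x = b := by
  obtain ⟨x0, hx01, hx02, hx03⟩ := hA.2.2.2
  have := hA.2.1 x0 x hx01 hx02 (by omega) (by omega)
  have := hA.2.2.1 x h1 h2
  omega

lemma H_eq_Hcan_odd {a b : ℕ} {H : ℤ → ℕ} (hA : Adm (2*a+1) b H) :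
    ∀ x : ℤ, 0 ≤ x → x < ((2*a+1:ℕ):ℤ) →
      H x = Hcan (2*a+1) b a (fun i : Fin a => H ((a:ℤ)+1+(i:ℤ))) x := by
  intro x h1 h2
  have hwz : ((2*a+1:ℕ):ℤ) = 2*(a:ℤ)+1 := by push_cast; ring
  rw [hwz] at h2
  set d := ((2*x - (((2*a+1:ℕ):ℤ)-1)).natAbs / 2) with hd
  have hd' : d = (x - (a:ℤ)).natAbs := by rw [hd]; push_cast; omega
  unfold Hcan
  rw [← hd]
  rcases Nat.eq_zero_or_pos d with h0 | hpos
  · rw [h0, stepH_zero]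
    exact adm_center_eq_b hA h1 (by omega) (by push_cast; omega)
  · have hda : d ≤ a := by omega
    rw [show d = (d-1)+1 by omega, stepH_succ_eq (k := a) (b := b) _ (d-1) (by omega)]
    have key : H ((a:ℤ) + d) = H x := by
      rcases (by omega : x = (a:ℤ) + (d:ℤ) ∨ x = (a:ℤ) - (d:ℤ)) with he | he
      · rw [he]
      · have hs := hA.symm (x := x) h1 (by push_cast; omega)
        rw [show ((2*a+1:ℕ):ℤ) - 1 - x = (a:ℤ) + (d:ℤ) by push_cast; omega] at hs
        exact hs
    dsimp only
    rw [show (a:ℤ)+1+((d-1:ℕ):ℤ) = (a:ℤ) + (d:ℤ) by push_cast; omega]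
    exact key.symm

noncomputable def ooParams (m j : ℕ) : Finset (Σ a : ℕ, Fin a → ℕ) :=
  (Finset.range (m+1)).sigma
    (fun a => (boxSet a (m-a)).filter (fun g => 2*m+1 + 4*(∑ i, g i) = j))

noncomputable def ooPoly (m : ℕ) (p : Σ a : ℕ, Fin a → ℕ) : Finset Cell :=
  colPoly (2*p.1+1) (m - p.1) (Hcan (2*p.1+1) (m - p.1) p.1 p.2)

lemma oo_set_eq (m j : ℕ) :
    {P : Finset Cell | (IsPolyomino P ∧ IsConvexPoly P ∧ SymBy hMap P ∧ SymBy vMap P ∧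
        width P + height P = 2*m+2 ∧ Odd (width P) ∧ Odd (height P) ∧ area P = j) ∧ PNorm P}
      = ↑((ooParams m j).image (ooPoly m)) := by
  ext P
  simp only [Set.mem_setOf_eq, Finset.coe_image, Set.mem_image, Finset.mem_coe,
    Finset.mem_image]
  constructor
  · rintro ⟨⟨hpoly, hconv, hh, hv, hper, ⟨a, ha⟩, hohgt, harea⟩, hnorm⟩
    obtain ⟨H, hA, hPeq⟩ := structure_colPoly hpoly hconv hh hv hohgt hnorm
    have hwa : width P = 2*a+1 := by omega
    have hhgt : height P = 2*(m-a)+1 ∧ a ≤ m := by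
      have h1 : 1 ≤ height P := by
        rw [height]
        exact Finset.card_pos.2 (hpoly.1.image _)
      obtain ⟨k, hk⟩ := hohgt
      omega
    have hb : (height P - 1)/2 = m - a := by omega
    rw [hwa, hb] at hA hPeq
    set g : Fin a → ℕ := fun i => H ((a:ℤ)+1+(i:ℤ)) with hg
    have hwz : ((2*a+1:ℕ):ℤ) = 2*(a:ℤ)+1 := by push_cast; ring
    have hgbox : g ∈ boxSet a (m-a) := by
      rw [mem_boxSet]
      constructor
      · intro i
        exact hA.2.2.1 ((a:ℤ)+1+(i:ℤ)) (by omega) (by rw [hwz]; have := i.2; omega)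
      · intro i1 i2 h12
        rw [hg]
        dsimp only
        refine hA.2.1 ((a:ℤ)+1+(i2:ℤ)) ((a:ℤ)+1+(i1:ℤ)) (by omega)
          (by rw [hwz]; have := i2.2; omega) ?_ ?_
        · rw [hwz]
          have := i2.2
          have : (i1:ℕ) ≤ (i2:ℕ) := h12
          omega
        · have : (i1:ℕ) ≤ (i2:ℕ) := h12
          omega
    have hPeq2 : P = ooPoly m ⟨a, g⟩ := by
      rw [hPeq]
      simp only [ooPoly]
      exact colPoly_congr (fun x h1 h2 => H_eq_Hcan_odd hA x h1 h2)
    have harea2 : 2*m+1 + 4*(∑ i, g i) = j := by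
      rw [← harea, hPeq2]
      simp only [ooPoly]
      rw [area_colPoly' (adm_Hcan (by omega) hgbox), sum_Hcan_odd a (m-a) g]
      omega
    exact ⟨⟨a, g⟩, Finset.mem_sigma.2 ⟨Finset.mem_range.2 (show a < m+1 by omega),
      Finset.mem_filter.2 ⟨hgbox, harea2⟩⟩, hPeq2.symm⟩
  · rintro ⟨⟨a, g⟩, hp, rfl⟩
    obtain ⟨hr, hf⟩ := Finset.mem_sigma.1 hp
    dsimp only at hr hf
    have ham := Finset.mem_range.1 hr
    obtain ⟨hgbox, harea⟩ := Finset.mem_filter.1 hf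
    have hA : Adm (2*a+1) (m-a) (Hcan (2*a+1) (m-a) a g) := adm_Hcan (by omega) hgbox
    have hoo : ooPoly m ⟨a, g⟩ = colPoly (2*a+1) (m-a) (Hcan (2*a+1) (m-a) a g) := rfl
    rw [hoo]
    refine ⟨⟨hA.isPolyomino_colPoly, hA.convex_colPoly, hA.symByH_colPoly, hA.symByV_colPoly,
      ?_, ?_, ?_, ?_⟩, pnorm_colPoly hA⟩
    · rw [hA.width_colPoly, hA.height_colPoly]
      omega
    · rw [hA.width_colPoly]
      exact ⟨a, by omega⟩
    · rw [hA.height_colPoly]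
      exact ⟨m-a, by omega⟩
    · rw [area_colPoly' hA, sum_Hcan_odd a (m-a) g]
      omega

lemma ooPoly_injOn (m j : ℕ) : Set.InjOn (ooPoly m) ↑(ooParams m j) := by
  rintro ⟨a1, g1⟩ h1 ⟨a2, g2⟩ h2 heq
  simp only [Finset.mem_coe, ooParams, Finset.mem_sigma] at h1 h2
  obtain ⟨hg1, _⟩ := Finset.mem_filter.1 h1.2
  obtain ⟨hg2, _⟩ := Finset.mem_filter.1 h2.2
  have hA1 : Adm (2*a1+1) (m-a1) (Hcan (2*a1+1) (m-a1) a1 g1) := adm_Hcan (by omega) hg1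
  have hA2 : Adm (2*a2+1) (m-a2) (Hcan (2*a2+1) (m-a2) a2 g2) := adm_Hcan (by omega) hg2
  have hoo1 : ooPoly m ⟨a1, g1⟩ = colPoly (2*a1+1) (m-a1) (Hcan (2*a1+1) (m-a1) a1 g1) := rfl
  have hoo2 : ooPoly m ⟨a2, g2⟩ = colPoly (2*a2+1) (m-a2) (Hcan (2*a2+1) (m-a2) a2 g2) := rfl
  rw [hoo1, hoo2] at heq
  have hw : 2*a1+1 = 2*a2+1 := by
    have e1 := hA1.width_colPoly
    have e2 := hA2.width_colPoly
    rw [heq] at e1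
    rw [e1] at e2
    omega
  have ha : a1 = a2 := by omega
  subst ha
  have hg : g1 = g2 := by
    funext i
    have := colPoly_H_eq heq (x := (a1:ℤ)+1+(i:ℤ)) (by omega)
      (by push_cast; have := i.2; omega)
    rwa [Hcan_odd_eval, Hcan_odd_eval] at this
  rw [hg]

lemma classCount_oo (m j : ℕ) :
    classCount (fun P => IsPolyomino P ∧ IsConvexPoly P ∧ SymBy hMap P ∧ SymBy vMap P ∧
        width P + height P = 2*m+2 ∧ Odd (width P) ∧ Odd (height P) ∧ area P = j)
      = (ooParams m j).card := by
  rw [classCount_eq_ncard_norm]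
  · have := oo_set_eq m j
    rw [show {P : Finset Cell | (IsPolyomino P ∧ IsConvexPoly P ∧ SymBy hMap P ∧ SymBy vMap P ∧
        width P + height P = 2*m+2 ∧ Odd (width P) ∧ Odd (height P) ∧ area P = j) ∧ PNorm P}
      = ↑((ooParams m j).image (ooPoly m)) from this]
    rw [Set.ncard_coe_finset, Finset.card_image_of_injOn (ooPoly_injOn m j)]
  · rintro v P ⟨h1, h2, h3, h4, h5, h6, h7, h8⟩
    exact ⟨isPolyomino_translate v h1, isConvexPoly_translate v h2, symBy_hMap_translate v h3,
      symBy_vMap_translate v h4, by rwa [width_translate, height_translate],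
      by rwa [width_translate], by rwa [height_translate], by rwa [area_translate]⟩
  · exact fun P h => h.1.1

/- ### Counting: even-odd case -/

lemma H_eq_Hcan_even {k b : ℕ} {H : ℤ → ℕ} (hA : Adm (2*k+2) b H) :
    ∀ x : ℤ, 0 ≤ x → x < ((2*k+2:ℕ):ℤ) →
      H x = Hcan (2*k+2) b k (fun i : Fin k => H ((k:ℤ)+2+(i:ℤ))) x := by
  intro x h1 h2
  have hwz : ((2*k+2:ℕ):ℤ) = 2*(k:ℤ)+2 := by push_cast; ring
  rw [hwz] at h2
  set d := ((2*x - (((2*k+2:ℕ):ℤ)-1)).natAbs / 2) with hd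
  have hd' : (d:ℤ) = if x ≤ (k:ℤ) then (k:ℤ) - x else x - ((k:ℤ)+1) := by
    rw [hd]
    split <;> omega
  unfold Hcan
  rw [← hd]
  rcases Nat.eq_zero_or_pos d with h0 | hpos
  · rw [h0, stepH_zero]
    refine adm_center_eq_b hA h1 (by omega) ?_
    rw [h0] at hd'
    push_cast
    rcases le_or_gt x (k:ℤ) with h | h
    · rw [if_pos h] at hd'; omega
    · rw [if_neg (by omega)] at hd'; omega
  · have hda : d ≤ k := by
      rcases le_or_gt x (k:ℤ) with h | h
      · rw [if_pos h] at hd'; omega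
      · rw [if_neg (by omega)] at hd'; omega
    rw [show d = (d-1)+1 by omega, stepH_succ_eq (k := k) (b := b) _ (d-1) (by omega)]
    have key : H ((k:ℤ) + 1 + (d:ℤ)) = H x := by
      rcases le_or_gt x (k:ℤ) with h | h
      · rw [if_pos h] at hd'
        have hs := hA.symm (x := x) h1 (by push_cast; omega)
        rw [show ((2*k+2:ℕ):ℤ) - 1 - x = (k:ℤ) + 1 + (d:ℤ) by push_cast; omega] at hs
        exact hs
      · rw [if_neg (by omega)] at hd'
        rw [show (k:ℤ) + 1 + (d:ℤ) = x by omega]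
    dsimp only
    rw [show (k:ℤ)+2+((d-1:ℕ):ℤ) = (k:ℤ) + 1 + (d:ℤ) by push_cast; omega]
    exact key.symm

noncomputable def eoParams (m j : ℕ) : Finset (Σ k : ℕ, Fin k → ℕ) :=
  (Finset.range (m+1)).sigma
    (fun k => (boxSet k (m-k)).filter (fun g => 2*m+2 + 2*(m-k) + 4*(∑ i, g i) = j))

noncomputable def eoPoly (m : ℕ) (p : Σ k : ℕ, Fin k → ℕ) : Finset Cell :=
  colPoly (2*p.1+2) (m - p.1) (Hcan (2*p.1+2) (m - p.1) p.1 p.2)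

lemma eo_set_eq (m j : ℕ) :
    {P : Finset Cell | (IsPolyomino P ∧ IsConvexPoly P ∧ SymBy hMap P ∧ SymBy vMap P ∧
        width P + height P = 2*m+3 ∧ Even (width P) ∧ Odd (height P) ∧ area P = j) ∧ PNorm P}
      = ↑((eoParams m j).image (eoPoly m)) := by
  ext P
  simp only [Set.mem_setOf_eq, Finset.coe_image, Set.mem_image, Finset.mem_coe,
    Finset.mem_image]
  constructor
  · rintro ⟨⟨hpoly, hconv, hh, hv, hper, ⟨a, ha⟩, hohgt, harea⟩, hnorm⟩
    obtain ⟨H, hA, hPeq⟩ := structure_colPoly hpoly hconv hh hv hohgt hnorm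
    have hwpos : 1 ≤ width P := by
      rw [width]
      exact Finset.card_pos.2 (hpoly.1.image _)
    have hk : ∃ k : ℕ, width P = 2*k+2 := ⟨a - 1, by omega⟩
    obtain ⟨k, hwk⟩ := hk
    have hhgt : height P = 2*(m-k)+1 ∧ k ≤ m := by
      have h1 : 1 ≤ height P := by
        rw [height]
        exact Finset.card_pos.2 (hpoly.1.image _)
      obtain ⟨t, ht⟩ := hohgt
      omega
    have hb : (height P - 1)/2 = m - k := by omega
    rw [hwk, hb] at hA hPeq
    set g : Fin k → ℕ := fun i => H ((k:ℤ)+2+(i:ℤ)) with hg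
    have hwz : ((2*k+2:ℕ):ℤ) = 2*(k:ℤ)+2 := by push_cast; ring
    have hgbox : g ∈ boxSet k (m-k) := by
      rw [mem_boxSet]
      constructor
      · intro i
        exact hA.2.2.1 ((k:ℤ)+2+(i:ℤ)) (by omega) (by rw [hwz]; have := i.2; omega)
      · intro i1 i2 h12
        rw [hg]
        dsimp only
        refine hA.2.1 ((k:ℤ)+2+(i2:ℤ)) ((k:ℤ)+2+(i1:ℤ)) (by omega)
          (by rw [hwz]; have := i2.2; omega) ?_ ?_
        · rw [hwz]
          have := i2.2
          have : (i1:ℕ) ≤ (i2:ℕ) := h12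
          omega
        · have : (i1:ℕ) ≤ (i2:ℕ) := h12
          omega
    have hPeq2 : P = eoPoly m ⟨k, g⟩ := by
      rw [hPeq]
      simp only [eoPoly]
      exact colPoly_congr (fun x h1 h2 => H_eq_Hcan_even hA x h1 h2)
    have harea2 : 2*m+2 + 2*(m-k) + 4*(∑ i, g i) = j := by
      rw [← harea, hPeq2]
      simp only [eoPoly]
      rw [area_colPoly' (adm_Hcan (by omega) hgbox), sum_Hcan_even k (m-k) g]
      omega
    exact ⟨⟨k, g⟩, Finset.mem_sigma.2 ⟨Finset.mem_range.2 (show k < m+1 by omega),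
      Finset.mem_filter.2 ⟨hgbox, harea2⟩⟩, hPeq2.symm⟩
  · rintro ⟨⟨k, g⟩, hp, rfl⟩
    obtain ⟨hr, hf⟩ := Finset.mem_sigma.1 hp
    dsimp only at hr hf
    have ham := Finset.mem_range.1 hr
    obtain ⟨hgbox, harea⟩ := Finset.mem_filter.1 hf
    have hA : Adm (2*k+2) (m-k) (Hcan (2*k+2) (m-k) k g) := adm_Hcan (by omega) hgbox
    have heo : eoPoly m ⟨k, g⟩ = colPoly (2*k+2) (m-k) (Hcan (2*k+2) (m-k) k g) := rfl
    rw [heo]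
    refine ⟨⟨hA.isPolyomino_colPoly, hA.convex_colPoly, hA.symByH_colPoly, hA.symByV_colPoly,
      ?_, ?_, ?_, ?_⟩, pnorm_colPoly hA⟩
    · rw [hA.width_colPoly, hA.height_colPoly]
      omega
    · rw [hA.width_colPoly]
      exact ⟨k+1, by omega⟩
    · rw [hA.height_colPoly]
      exact ⟨m-k, by omega⟩
    · rw [area_colPoly' hA, sum_Hcan_even k (m-k) g]
      omega

lemma eoPoly_injOn (m j : ℕ) : Set.InjOn (eoPoly m) ↑(eoParams m j) := by
  rintro ⟨a1, g1⟩ h1 ⟨a2, g2⟩ h2 heq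
  simp only [Finset.mem_coe, eoParams, Finset.mem_sigma] at h1 h2
  obtain ⟨hg1, _⟩ := Finset.mem_filter.1 h1.2
  obtain ⟨hg2, _⟩ := Finset.mem_filter.1 h2.2
  have hA1 : Adm (2*a1+2) (m-a1) (Hcan (2*a1+2) (m-a1) a1 g1) := adm_Hcan (by omega) hg1
  have hA2 : Adm (2*a2+2) (m-a2) (Hcan (2*a2+2) (m-a2) a2 g2) := adm_Hcan (by omega) hg2
  have hoo1 : eoPoly m ⟨a1, g1⟩ = colPoly (2*a1+2) (m-a1) (Hcan (2*a1+2) (m-a1) a1 g1) := rfl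
  have hoo2 : eoPoly m ⟨a2, g2⟩ = colPoly (2*a2+2) (m-a2) (Hcan (2*a2+2) (m-a2) a2 g2) := rfl
  rw [hoo1, hoo2] at heq
  have hw : 2*a1+2 = 2*a2+2 := by
    have e1 := hA1.width_colPoly
    have e2 := hA2.width_colPoly
    rw [heq] at e1
    rw [e1] at e2
    omega
  have ha : a1 = a2 := by omega
  subst ha
  have hg : g1 = g2 := by
    funext i
    have := colPoly_H_eq heq (x := (a1:ℤ)+2+(i:ℤ)) (by omega)
      (by push_cast; have := i.2; omega)
    rwa [Hcan_even_eval, Hcan_even_eval] at this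
  rw [hg]

lemma classCount_eo (m j : ℕ) :
    classCount (fun P => IsPolyomino P ∧ IsConvexPoly P ∧ SymBy hMap P ∧ SymBy vMap P ∧
        width P + height P = 2*m+3 ∧ Even (width P) ∧ Odd (height P) ∧ area P = j)
      = (eoParams m j).card := by
  rw [classCount_eq_ncard_norm]
  · have := eo_set_eq m j
    rw [show {P : Finset Cell | (IsPolyomino P ∧ IsConvexPoly P ∧ SymBy hMap P ∧ SymBy vMap P ∧
        width P + height P = 2*m+3 ∧ Even (width P) ∧ Odd (height P) ∧ area P = j) ∧ PNorm P}
      = ↑((eoParams m j).image (eoPoly m)) from this]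
    rw [Set.ncard_coe_finset, Finset.card_image_of_injOn (eoPoly_injOn m j)]
  · rintro v P ⟨h1, h2, h3, h4, h5, h6, h7, h8⟩
    exact ⟨isPolyomino_translate v h1, isConvexPoly_translate v h2, symBy_hMap_translate v h3,
      symBy_vMap_translate v h4, by rwa [width_translate, height_translate],
      by rwa [width_translate], by rwa [height_translate], by rwa [area_translate]⟩
  · exact fun P h => h.1.1

/- ### Coefficients of the right-hand sides -/

open Polynomial in
lemma Bpoly_comp_X4 (k l : ℕ) :
    (Bpoly k l).comp (X^4) = ∑ g ∈ boxSet k l, (X:Polynomial ℤ)^(4*(∑ t, g t)) := by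
  rw [Bpoly, Polynomial.sum_comp]
  refine Finset.sum_congr rfl fun g _ => ?_
  rw [Polynomial.X_pow_comp, ← pow_mul, mul_comm]

open Polynomial in
lemma coeff_monomial_sum {ι : Type*} (s : Finset ι) (e : ι → ℕ) (j : ℕ) :
    (∑ g ∈ s, (X:Polynomial ℤ)^(e g)).coeff j = ((s.filter (fun g => e g = j)).card : ℤ) := by
  rw [Polynomial.finset_sum_coeff, Finset.card_filter]
  push_cast
  refine Finset.sum_congr rfl fun g _ => ?_
  rw [Polynomial.coeff_X_pow]
  by_cases h : e g = j
  · simp [h]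
  · rw [if_neg (fun ht => h ht.symm), if_neg h]

section Final
open Polynomial
variable (gauss : ℕ → ℕ → Polynomial ℤ)
  (hgauss : ∀ n k : ℕ, k ≤ n → gauss n k * qpoch k * qpoch (n - k) = qpoch n)

include hgauss

lemma gauss_symm {n k : ℕ} (h : k ≤ n) : gauss n (n-k) = gauss n k := by
  have h1 := hgauss n k h
  have h2 := hgauss n (n-k) (by omega)
  rw [show n - (n-k) = k by omega] at h2
  have hc : qpoch (n-k) * qpoch k ≠ 0 := mul_ne_zero (qpoch_ne_zero _) (qpoch_ne_zero _)
  apply mul_right_cancel₀ hc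
  rw [show gauss n (n-k) * (qpoch (n-k) * qpoch k) = gauss n (n-k) * qpoch (n-k) * qpoch k
    by ring, h2]
  rw [show gauss n k * (qpoch (n-k) * qpoch k) = gauss n k * qpoch k * qpoch (n-k) by ring, h1]

lemma coeff_RHS_oo (m j : ℕ) :
    ((X:Polynomial ℤ)^(2*m+1) *
        ∑ i ∈ Finset.range (m+1), (gauss m i).comp (X^4)).coeff j
      = ((ooParams m j).card : ℤ) := by
  have hterm : ∀ i ∈ Finset.range (m+1),
      (X:Polynomial ℤ)^(2*m+1) * (gauss m i).comp (X^4)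
        = ∑ g ∈ boxSet i (m-i), (X:Polynomial ℤ)^(2*m+1 + 4*(∑ t, g t)) := by
    intro i hi
    have hi' := Finset.mem_range.1 hi
    have hgB : gauss m i = Bpoly i (m-i) := by
      have := gauss_eq_Bpoly gauss hgauss i (m-i)
      rwa [show i + (m-i) = m by omega] at this
    rw [hgB, Bpoly_comp_X4, Finset.mul_sum]
    refine Finset.sum_congr rfl fun g _ => ?_
    rw [← pow_add]
  rw [Finset.mul_sum, Finset.sum_congr rfl hterm, Polynomial.finset_sum_coeff]
  rw [Finset.sum_congr rfl (fun i _ => coeff_monomial_sum (boxSet i (m-i))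
    (fun g => 2*m+1 + 4*(∑ t, g t)) j)]
  rw [ooParams, Finset.card_sigma]
  push_cast
  rfl

lemma coeff_RHS_eo (m j : ℕ) :
    ((X:Polynomial ℤ)^(2*m+2) *
        ∑ i ∈ Finset.range (m+1), (X:Polynomial ℤ)^(2*i) * (gauss m i).comp (X^4)).coeff j
      = ((eoParams m j).card : ℤ) := by
  have hterm : ∀ i ∈ Finset.range (m+1),
      (X:Polynomial ℤ)^(2*m+2) * ((X:Polynomial ℤ)^(2*i) * (gauss m i).comp (X^4))
        = ∑ g ∈ boxSet (m-i) i, (X:Polynomial ℤ)^(2*m+2 + 2*i + 4*(∑ t, g t)) := by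
    intro i hi
    have hi' := Finset.mem_range.1 hi
    have hgB : gauss m i = Bpoly (m-i) i := by
      have h1 := gauss_eq_Bpoly gauss hgauss (m-i) i
      rw [show (m-i) + i = m by omega] at h1
      rw [← gauss_symm gauss hgauss (show i ≤ m by omega), h1]
    rw [hgB, Bpoly_comp_X4, Finset.mul_sum, Finset.mul_sum]
    refine Finset.sum_congr rfl fun g _ => ?_
    rw [← pow_add, ← pow_add]
    congr 1
    omega
  rw [Finset.mul_sum, Finset.sum_congr rfl hterm, Polynomial.finset_sum_coeff]
  rw [Finset.sum_congr rfl (fun i _ => coeff_monomial_sum (boxSet (m-i) i)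
    (fun g => 2*m+2 + 2*i + 4*(∑ t, g t)) j)]
  -- reindex i ↦ m - i
  have hreflect : ∑ i ∈ Finset.range (m+1),
      (((boxSet (m-i) i).filter (fun g => 2*m+2 + 2*i + 4*(∑ t, g t) = j)).card : ℤ)
      = ∑ k ∈ Finset.range (m+1),
      (((boxSet k (m-k)).filter (fun g => 2*m+2 + 2*(m-k) + 4*(∑ t, g t) = j)).card : ℤ) := by
    rw [← Finset.sum_range_reflect]
    refine Finset.sum_congr rfl fun k hk => ?_
    have hk' := Finset.mem_range.1 hk
    rw [show m+1-1-k = m-k by omega, show m - (m-k) = k by omega]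
  rw [hreflect, eoParams, Finset.card_sigma]
  push_cast
  rfl

end Final

lemma classCount_empty (Φ : Finset Cell → Prop) (h : ∀ P, ¬ Φ P) : classCount Φ = 0 := by
  rw [classCount]
  convert Set.ncard_empty (Set (Finset Cell))
  ext O
  simp only [Set.mem_setOf_eq, Set.mem_empty_iff_false, iff_false, not_exists]
  rintro P ⟨hP, _⟩
  exact h P hP

/-- Explicit formulas for the area generating polynomials `f_n^{oo}` (odd width, odd
height) and `f_n^{eo}` (even width, odd height) of `hv`-symmetric convex polyominoes of
half-perimeter `n`, in terms of Gaussian polynomials evaluated at `q⁴`.  Here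
`gauss n k` is the Gaussian polynomial `[n,k]_q`, characterized by
`[n,k]_q (q;q)_k (q;q)_{n−k} = (q;q)_n`. -/
theorem stmt12
    (gauss : ℕ → ℕ → Polynomial ℤ)
    (hgauss : ∀ n k : ℕ, k ≤ n → gauss n k * qpoch k * qpoch (n - k) = qpoch n)
    (foo feo : ℕ → Polynomial ℤ)
    (hfoo : ∀ n j : ℕ, (foo n).coeff j =
      (classCount (fun P => IsPolyomino P ∧ IsConvexPoly P ∧ SymBy hMap P ∧ SymBy vMap P ∧
        width P + height P = n ∧ Odd (width P) ∧ Odd (height P) ∧ area P = j) : ℤ))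
    (hfeo : ∀ n j : ℕ, (feo n).coeff j =
      (classCount (fun P => IsPolyomino P ∧ IsConvexPoly P ∧ SymBy hMap P ∧ SymBy vMap P ∧
        width P + height P = n ∧ Even (width P) ∧ Odd (height P) ∧ area P = j) : ℤ)) :
    (∀ n : ℕ, 2 ≤ n → Even n →
      foo n = Polynomial.X ^ (n - 1) *
        ∑ i ∈ Finset.range ((n - 2) / 2 + 1),
          (gauss ((n - 2) / 2) i).comp (Polynomial.X ^ 4)) ∧
    (∀ n : ℕ, Odd n → foo n = 0) ∧
    (∀ n : ℕ, 3 ≤ n → Odd n →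
      feo n = Polynomial.X ^ (n - 1) *
        ∑ i ∈ Finset.range ((n - 3) / 2 + 1),
          Polynomial.X ^ (2 * i) * (gauss ((n - 3) / 2) i).comp (Polynomial.X ^ 4)) ∧
    (∀ n : ℕ, Even n → feo n = 0) := by
  refine ⟨?_, ?_, ?_, ?_⟩
  · intro n h2 heven
    obtain ⟨m, hm⟩ : ∃ m, n = 2*m+2 := by
      obtain ⟨t, ht⟩ := heven
      exact ⟨t-1, by omega⟩
    subst hm
    rw [show 2*m+2-1 = 2*m+1 by omega, show (2*m+2-2)/2 = m by omega]
    apply Polynomial.ext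
    intro j
    rw [hfoo (2*m+2) j, classCount_oo m j]
    exact (coeff_RHS_oo gauss hgauss m j).symm
  · intro n hodd
    apply Polynomial.ext
    intro j
    rw [hfoo n j, Polynomial.coeff_zero]
    rw [classCount_empty _ ?_]
    · simp
    · rintro P ⟨_, _, _, _, h5, ⟨a, ha⟩, ⟨c, hc⟩, _⟩
      obtain ⟨t, ht⟩ := hodd
      omega
  · intro n h3 hodd
    obtain ⟨m, hm⟩ : ∃ m, n = 2*m+3 := by
      obtain ⟨t, ht⟩ := hodd
      exact ⟨t-1, by omega⟩
    subst hm
    rw [show 2*m+3-1 = 2*m+2 by omega, show (2*m+3-3)/2 = m by omega]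
    apply Polynomial.ext
    intro j
    rw [hfeo (2*m+3) j, classCount_eo m j]
    exact (coeff_RHS_eo gauss hgauss m j).symm
  · intro n heven
    apply Polynomial.ext
    intro j
    rw [hfeo n j, Polynomial.coeff_zero]
    rw [classCount_empty _ ?_]
    · simp
    · rintro P ⟨_, _, _, _, h5, ⟨a, ha⟩, ⟨c, hc⟩, _⟩
      obtain ⟨t, ht⟩ := heven
      omega
end

section
/- Let f_n denote the number of translation-classes of hv-symmetric convex polyominoes with half-perimeter n. Then f₁ = 0, f₂ = 1, f_n = 3·2^{(n/2)−2} for every even n ≥ 4, and f_n = 2^{(n−1)/2} for every odd n ≥ 3; equivalently, the generating series satisfies (1 − 2t²)·Σ_{n≥1} f_n t^n = t²(1+t)². -/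
/-- The number of translation classes of `hv`-symmetric convex polyominoes of
half-perimeter `n`. -/
noncomputable def fhv (n : ℕ) : ℕ :=
  classCount (fun P => IsPolyomino P ∧ IsConvexPoly P ∧ SymBy hMap P ∧ SymBy vMap P ∧
    width P + height P = n)

namespace S14

lemma mem_cellTranslate {v : Cell} {P : Finset Cell} {c : Cell} :
    c ∈ cellTranslate v P ↔ (c.1 - v.1, c.2 - v.2) ∈ P := by
  constructor
  · rintro hc
    simp only [cellTranslate, Finset.mem_image] at hc
    obtain ⟨a, ha, rfl⟩ := hc
    simpa using ha
  · intro h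
    simp only [cellTranslate, Finset.mem_image]
    refine ⟨_, h, by simp⟩

lemma mem_cellTranslate' {v : Cell} {P : Finset Cell} {x y : ℤ} :
    (x, y) ∈ cellTranslate v P ↔ (x - v.1, y - v.2) ∈ P := mem_cellTranslate

lemma cellTranslate_zero (P : Finset Cell) : cellTranslate (0, 0) P = P := by
  ext c; rw [mem_cellTranslate]; simp

lemma cellTranslate_comp (u v : Cell) (P : Finset Cell) :
    cellTranslate v (cellTranslate u P) = cellTranslate (u.1 + v.1, u.2 + v.2) P := by
  ext c; rw [mem_cellTranslate, mem_cellTranslate, mem_cellTranslate]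
  constructor <;> (intro h; convert h using 2 <;> ring)

lemma card_cellTranslate (v : Cell) (P : Finset Cell) : (cellTranslate v P).card = P.card := by
  apply Finset.card_image_of_injective
  intro a b h
  simp only [Prod.mk.injEq] at h
  exact Prod.ext (by linarith [h.1]) (by linarith [h.2])

/-- Normalized: nonneg coordinates, with 0 attained in each coordinate. -/
def Normalized (P : Finset Cell) : Prop :=
  (∀ c ∈ P, 0 ≤ c.1 ∧ 0 ≤ c.2) ∧ (∃ c ∈ P, c.1 = 0) ∧ (∃ c ∈ P, c.2 = 0)

lemma normalized_unique {P Q : Finset Cell} {v : Cell} (hP : Normalized P) (hQ : Normalized Q)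
    (h : Q = cellTranslate v P) : Q = P := by
  obtain ⟨hP1, ⟨c₁, hc₁, hc₁'⟩, ⟨c₂, hc₂, hc₂'⟩⟩ := hP
  obtain ⟨hQ1, ⟨d₁, hd₁, hd₁'⟩, ⟨d₂, hd₂, hd₂'⟩⟩ := hQ
  have hv1 : v.1 = 0 := by
    have h1 : (c₁.1 + v.1, c₁.2 + v.2) ∈ Q := by
      rw [h, mem_cellTranslate]; simpa using hc₁
    have h2 : (d₁.1 - v.1, d₁.2 - v.2) ∈ P := by
      rw [h, mem_cellTranslate] at hd₁; exact hd₁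
    have := (hQ1 _ h1).1
    have := (hP1 _ h2).1
    simp only at *
    omega
  have hv2 : v.2 = 0 := by
    have h1 : (c₂.1 + v.1, c₂.2 + v.2) ∈ Q := by
      rw [h, mem_cellTranslate]; simpa using hc₂
    have h2 : (d₂.1 - v.1, d₂.2 - v.2) ∈ P := by
      rw [h, mem_cellTranslate] at hd₂; exact hd₂
    have := (hQ1 _ h1).2
    have := (hP1 _ h2).2
    simp only at *
    omega
  have hv : v = ((0:ℤ), (0:ℤ)) := by
    obtain ⟨a, b⟩ := v; simp only [Prod.mk.injEq]; exact ⟨hv1, hv2⟩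
  rw [h, hv, cellTranslate_zero]

lemma exists_normalized_translate {P : Finset Cell} (hP : P.Nonempty) :
    ∃ v : Cell, Normalized (cellTranslate v P) := by
  have hx : (P.image Prod.fst).Nonempty := hP.image _
  have hy : (P.image Prod.snd).Nonempty := hP.image _
  set a := (P.image Prod.fst).min' hx
  set b := (P.image Prod.snd).min' hy
  refine ⟨(-a, -b), ?_, ?_, ?_⟩
  · intro c hc
    rw [mem_cellTranslate] at hc
    constructor
    · have : c.1 - -a ∈ P.image Prod.fst := Finset.mem_image.2 ⟨_, hc, rfl⟩
      have := (P.image Prod.fst).min'_le _ this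
      simp only at *; omega
    · have : c.2 - -b ∈ P.image Prod.snd := Finset.mem_image.2 ⟨_, hc, rfl⟩
      have := (P.image Prod.snd).min'_le _ this
      simp only at *; omega
  · obtain ⟨c, hc, hc'⟩ := Finset.mem_image.1 ((P.image Prod.fst).min'_mem hx)
    exact ⟨(c.1 + -a, c.2 + -b), by rw [mem_cellTranslate]; simpa using hc, by simp only [hc']; exact add_neg_cancel _⟩
  · obtain ⟨c, hc, hc'⟩ := Finset.mem_image.1 ((P.image Prod.snd).min'_mem hy)
    exact ⟨(c.1 + -a, c.2 + -b), by rw [mem_cellTranslate]; simpa using hc, by simp only [hc']; exact add_neg_cancel _⟩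

lemma transClass_cellTranslate (v : Cell) (P : Finset Cell) :
    transClass (cellTranslate v P) = transClass P := by
  ext Q
  simp only [transClass, Set.mem_setOf_eq]
  constructor
  · rintro ⟨u, rfl⟩
    exact ⟨(v.1 + u.1, v.2 + u.2), by rw [cellTranslate_comp]⟩
  · rintro ⟨u, rfl⟩
    refine ⟨(u.1 - v.1, u.2 - v.2), ?_⟩
    rw [cellTranslate_comp]
    congr 1
    obtain ⟨u1, u2⟩ := u
    simp only [Prod.mk.injEq]
    constructor <;> ring

/-- Invariance of the predicates under translation. -/
lemma isPolyomino_cellTranslate {P : Finset Cell} (v : Cell) (h : IsPolyomino P) :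
    IsPolyomino (cellTranslate v P) := by
  obtain ⟨⟨c, hc⟩, hconn⟩ := h
  constructor
  · exact ⟨(c.1 + v.1, c.2 + v.2), by rw [mem_cellTranslate]; simpa using hc⟩
  · intro a ha b hb
    rw [mem_cellTranslate] at ha hb
    have := hconn _ ha _ hb
    have key : ∀ p q : Cell,
        Relation.ReflTransGen (fun c d => c ∈ P ∧ d ∈ P ∧ (c.1 - d.1).natAbs + (c.2 - d.2).natAbs = 1) p q →
        Relation.ReflTransGen (fun c d => c ∈ cellTranslate v P ∧ d ∈ cellTranslate v P ∧
          (c.1 - d.1).natAbs + (c.2 - d.2).natAbs = 1)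
          (p.1 + v.1, p.2 + v.2) (q.1 + v.1, q.2 + v.2) := by
      intro p q hpq
      induction hpq with
      | refl => exact Relation.ReflTransGen.refl
      | tail _ hstep ih =>
        refine ih.tail ?_
        obtain ⟨h1, h2, h3⟩ := hstep
        refine ⟨?_, ?_, ?_⟩
        · rw [mem_cellTranslate]; simpa using h1
        · rw [mem_cellTranslate]; simpa using h2
        · simp only
          convert h3 using 2 <;> congr 1 <;> ring
    have := key _ _ this
    simpa using this

lemma isConvexPoly_cellTranslate {P : Finset Cell} (v : Cell) (h : IsConvexPoly P) :
    IsConvexPoly (cellTranslate v P) := by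
  obtain ⟨h1, h2⟩ := h
  constructor
  · intro x y₁ y₂ y m1 m2 l1 l2
    rw [mem_cellTranslate'] at *
    exact h1 _ _ _ _ m1 m2 (by omega) (by omega)
  · intro y x₁ x₂ x m1 m2 l1 l2
    rw [mem_cellTranslate'] at *
    exact h2 _ _ _ _ m1 m2 (by omega) (by omega)

lemma image_cellTranslate_comm {g : Cell → Cell} (hg : ∀ u c : Cell,
      g (c.1 + u.1, c.2 + u.2) = ((g c).1 + (g u).1, (g c).2 + (g u).2))
    (v : Cell) (P : Finset Cell) :
    (cellTranslate v P).image g = cellTranslate (g v) (P.image g) := by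
  ext c
  simp only [cellTranslate, Finset.mem_image]
  constructor
  · rintro ⟨a, ⟨b, hb, rfl⟩, rfl⟩
    exact ⟨g b, ⟨b, hb, rfl⟩, (hg v b).symm⟩
  · rintro ⟨a, ⟨b, hb, rfl⟩, rfl⟩
    exact ⟨(b.1 + v.1, b.2 + v.2), ⟨b, hb, rfl⟩, hg v b⟩

lemma symBy_cellTranslate {g : Cell → Cell}
    (hg : ∀ u c : Cell, g (c.1 + u.1, c.2 + u.2) = ((g c).1 + (g u).1, (g c).2 + (g u).2))
    {P : Finset Cell} (v : Cell) (h : SymBy g P) : SymBy g (cellTranslate v P) := by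
  obtain ⟨u, hu⟩ := h
  refine ⟨((g v).1 + u.1 - v.1, (g v).2 + u.2 - v.2), ?_⟩
  rw [image_cellTranslate_comm hg, hu, cellTranslate_comp, cellTranslate_comp]
  congr 1
  simp only [Prod.mk.injEq]
  constructor <;> ring

lemma hMap_add : ∀ u c : Cell, hMap (c.1 + u.1, c.2 + u.2) = ((hMap c).1 + (hMap u).1, (hMap c).2 + (hMap u).2) := by
  intro u c; simp [hMap]; ring

lemma vMap_add : ∀ u c : Cell, vMap (c.1 + u.1, c.2 + u.2) = ((vMap c).1 + (vMap u).1, (vMap c).2 + (vMap u).2) := by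
  intro u c; simp [vMap]; ring

lemma image_fst_cellTranslate (v : Cell) (P : Finset Cell) :
    (cellTranslate v P).image Prod.fst = (P.image Prod.fst).image (· + v.1) := by
  simp only [cellTranslate, Finset.image_image]
  rfl

lemma image_snd_cellTranslate (v : Cell) (P : Finset Cell) :
    (cellTranslate v P).image Prod.snd = (P.image Prod.snd).image (· + v.2) := by
  simp only [cellTranslate, Finset.image_image]
  rfl

lemma width_cellTranslate (v : Cell) (P : Finset Cell) : width (cellTranslate v P) = width P := by
  rw [width, image_fst_cellTranslate, Finset.card_image_of_injective _ (add_left_injective v.1)]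
  rfl

lemma height_cellTranslate (v : Cell) (P : Finset Cell) : height (cellTranslate v P) = height P := by
  rw [height, image_snd_cellTranslate, Finset.card_image_of_injective _ (add_left_injective v.2)]
  rfl

lemma classCount_eq_ncard_normalized (Φ : Finset Cell → Prop)
    (hΦ : ∀ v P, Φ P → Φ (cellTranslate v P))
    (hne : ∀ P, Φ P → P.Nonempty) :
    classCount Φ = Set.ncard {P : Finset Cell | Φ P ∧ Normalized P} := by
  rw [classCount]
  have himg : {O : Set (Finset Cell) | ∃ P, Φ P ∧ O = transClass P}
      = transClass '' {P | Φ P ∧ Normalized P} := by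
    ext O
    simp only [Set.mem_setOf_eq, Set.mem_image]
    constructor
    · rintro ⟨P, hP, rfl⟩
      obtain ⟨v, hv⟩ := exists_normalized_translate (hne P hP)
      exact ⟨cellTranslate v P, ⟨hΦ v P hP, hv⟩, transClass_cellTranslate v P⟩
    · rintro ⟨P, ⟨h1, _⟩, rfl⟩
      exact ⟨P, h1, rfl⟩
  rw [himg]
  apply Set.ncard_image_of_injOn
  rintro P ⟨hP, hPn⟩ Q ⟨hQ, hQn⟩ h
  have hPQ : P ∈ transClass Q := by
    rw [← h]; exact ⟨(0, 0), (cellTranslate_zero P).symm⟩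
  obtain ⟨v, hv⟩ := hPQ
  exact normalized_unique hQn hPn hv

/-! ### The model polyomino -/

noncomputable def model (w m : ℕ) (d : ℤ → ℕ) : Finset Cell :=
  (Finset.Icc (0:ℤ) ((w:ℤ)-1) ×ˢ Finset.Icc (0:ℤ) ((m:ℤ)-1)).filter
    (fun c => (d c.1 : ℤ) ≤ c.2 ∧ c.2 + (d c.1 : ℤ) ≤ (m:ℤ) - 1)

lemma mem_model {w m : ℕ} {d : ℤ → ℕ} {c : Cell} :
    c ∈ model w m d ↔ 0 ≤ c.1 ∧ c.1 ≤ (w:ℤ)-1 ∧ (d c.1 : ℤ) ≤ c.2 ∧ c.2 + (d c.1 : ℤ) ≤ (m:ℤ)-1 := by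
  simp only [model, Finset.mem_filter, Finset.mem_product, Finset.mem_Icc]
  constructor
  · rintro ⟨⟨⟨a1, a2⟩, _⟩, b1, b2⟩; exact ⟨a1, a2, b1, b2⟩
  · rintro ⟨a1, a2, b1, b2⟩
    have h0 : (0:ℤ) ≤ (d c.1 : ℤ) := Int.natCast_nonneg _
    exact ⟨⟨⟨a1, a2⟩, by omega, by omega⟩, b1, b2⟩

/-- The hypotheses on the column-defect function. -/
def GoodD (w m : ℕ) (d : ℤ → ℕ) : Prop :=
  (∀ x : ℤ, 0 ≤ x → x ≤ (w:ℤ)-1 → 2*(d x:ℤ) ≤ (m:ℤ)-1) ∧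
  (∀ x : ℤ, 0 ≤ x → x ≤ (w:ℤ)-1 → d x = d ((w:ℤ)-1-x)) ∧
  (∀ x₁ x x₂ : ℤ, 0 ≤ x₁ → x₁ ≤ x → x ≤ x₂ → x₂ ≤ (w:ℤ)-1 → d x ≤ max (d x₁) (d x₂)) ∧
  (∃ x : ℤ, 0 ≤ x ∧ x ≤ (w:ℤ)-1 ∧ d x = 0)

section ModelProps

variable {w m : ℕ} {d : ℤ → ℕ} (hw : 1 ≤ w) (hm : 1 ≤ m) (hd : GoodD w m d)

include hw hm hd

lemma image_fst_model : (model w m d).image Prod.fst = Finset.Icc (0:ℤ) ((w:ℤ)-1) := by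
  ext x
  simp only [Finset.mem_image, Finset.mem_Icc]
  constructor
  · rintro ⟨c, hc, rfl⟩
    have := mem_model.1 hc
    exact ⟨this.1, this.2.1⟩
  · rintro ⟨h1, h2⟩
    have h3 := hd.1 x h1 h2
    exact ⟨(x, (d x : ℤ)), mem_model.2 ⟨h1, h2, le_refl _, (by omega : (d x:ℤ) + (d x:ℤ) ≤ (m:ℤ)-1)⟩, rfl⟩

lemma image_snd_model : (model w m d).image Prod.snd = Finset.Icc (0:ℤ) ((m:ℤ)-1) := by
  ext y
  simp only [Finset.mem_image, Finset.mem_Icc]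
  constructor
  · rintro ⟨c, hc, rfl⟩
    have := mem_model.1 hc
    have h0 : (0:ℤ) ≤ (d c.1 : ℤ) := Int.natCast_nonneg _
    omega
  · rintro ⟨h1, h2⟩
    obtain ⟨x, hx1, hx2, hx3⟩ := hd.2.2.2
    refine ⟨(x, y), mem_model.2 ⟨hx1, hx2, ?_, ?_⟩, rfl⟩ <;> rw [hx3] <;> omega

lemma width_model : width (model w m d) = w := by
  rw [width, image_fst_model hw hm hd, Int.card_Icc]
  omega

lemma height_model : height (model w m d) = m := by
  rw [height, image_snd_model hw hm hd, Int.card_Icc]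
  omega

lemma normalized_model : Normalized (model w m d) := by
  refine ⟨?_, ?_, ?_⟩
  · intro c hc
    have h := mem_model.1 hc
    have h0 : (0:ℤ) ≤ (d c.1 : ℤ) := Int.natCast_nonneg _
    exact ⟨h.1, by omega⟩
  · have h0 : (0:ℤ) ∈ (model w m d).image Prod.fst := by
      rw [image_fst_model hw hm hd]; simp; omega
    obtain ⟨c, hc, hc'⟩ := Finset.mem_image.1 h0
    exact ⟨c, hc, hc'⟩
  · have h0 : (0:ℤ) ∈ (model w m d).image Prod.snd := by
      rw [image_snd_model hw hm hd]; simp; omega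
    obtain ⟨c, hc, hc'⟩ := Finset.mem_image.1 h0
    exact ⟨c, hc, hc'⟩

lemma convex_model : IsConvexPoly (model w m d) := by
  constructor
  · intro x y₁ y₂ y m1 m2 l1 l2
    rw [mem_model] at *
    simp only at *
    omega
  · intro y x₁ x₂ x m1 m2 l1 l2
    rw [mem_model] at *
    simp only at *
    obtain ⟨a1, a2, a3, a4⟩ := m1
    obtain ⟨b1, b2, b3, b4⟩ := m2
    have hmax := hd.2.2.1 x₁ x x₂ a1 l1 l2 b2
    rcases le_total (d x₁) (d x₂) with h | h
    · have h5 : d x ≤ d x₂ := le_trans hmax (max_le h le_rfl)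
      have h6 : (d x : ℤ) ≤ (d x₂ : ℤ) := by exact_mod_cast h5
      omega
    · have h5 : d x ≤ d x₁ := le_trans hmax (max_le le_rfl h)
      have h6 : (d x : ℤ) ≤ (d x₁ : ℤ) := by exact_mod_cast h5
      omega

lemma symH_model : SymBy hMap (model w m d) := by
  refine ⟨(0, -((m:ℤ)-1)), ?_⟩
  ext c
  obtain ⟨c1, c2⟩ := c
  simp only [Finset.mem_image, hMap]
  rw [mem_cellTranslate']
  constructor
  · rintro ⟨a, ha, heq⟩
    rw [mem_model] at ha
    obtain ⟨a1, a2⟩ := a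
    simp only [Prod.mk.injEq] at heq ha
    obtain ⟨rfl, rfl⟩ := heq
    rw [mem_model]
    simp only [sub_zero]
    omega
  · intro h
    rw [mem_model] at h
    simp only [sub_zero] at h
    refine ⟨(c1, -c2), ?_, by simp⟩
    rw [mem_model]
    simp only
    omega

lemma symV_model : SymBy vMap (model w m d) := by
  have key : ∀ x : ℤ, 0 ≤ x → x ≤ (w:ℤ)-1 → d x = d ((w:ℤ)-1-x) := hd.2.1
  refine ⟨(-((w:ℤ)-1), 0), ?_⟩
  ext c
  obtain ⟨c1, c2⟩ := c
  simp only [Finset.mem_image, vMap]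
  rw [mem_cellTranslate']
  constructor
  · rintro ⟨a, ha, heq⟩
    rw [mem_model] at ha
    obtain ⟨a1, a2⟩ := a
    simp only [Prod.mk.injEq] at heq ha
    obtain ⟨rfl, rfl⟩ := heq
    rw [mem_model]
    simp only
    have h2 := key a1 ha.1 ha.2.1
    have heq2 : (w:ℤ)-1-a1 = -a1 - -((w:ℤ)-1) := by ring
    rw [heq2] at h2
    omega
  · intro h
    rw [mem_model] at h
    simp only at h
    refine ⟨(-c1, c2), ?_, by simp⟩
    rw [mem_model]
    simp only
    have h1 : 0 ≤ -c1 := by omega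
    have h2 : -c1 ≤ (w:ℤ)-1 := by omega
    have h3 := key (-c1) h1 h2
    have heq2 : (w:ℤ)-1 - -c1 = c1 - -((w:ℤ)-1) := by ring
    rw [heq2] at h3
    omega

end ModelProps

/-! ### Connectivity -/

def Stp (P : Finset Cell) : Cell → Cell → Prop :=
  fun c d => c ∈ P ∧ d ∈ P ∧ (c.1 - d.1).natAbs + (c.2 - d.2).natAbs = 1

lemma stp_symm (P : Finset Cell) : Symmetric (Stp P) := by
  rintro c d ⟨h1, h2, h3⟩
  exact ⟨h2, h1, by omega⟩

lemma vert_connect {P : Finset Cell}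
    (hcol : ∀ x y₁ y₂ y : ℤ, (x, y₁) ∈ P → (x, y₂) ∈ P → y₁ ≤ y → y ≤ y₂ → (x, y) ∈ P)
    {x y y' : ℤ} (h1 : (x, y) ∈ P) (h2 : (x, y') ∈ P) :
    Relation.ReflTransGen (Stp P) (x, y) (x, y') := by
  have aux : ∀ k : ℕ, ∀ y y' : ℤ, (x, y) ∈ P → (x, y') ∈ P → y' = y + k →
      Relation.ReflTransGen (Stp P) (x, y) (x, y') := by
    intro k
    induction k with
    | zero => intro y y' _ _ h; rw [show y' = y by omega]
    | succ k ih =>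
      intro y y' hy hy' h
      have hmid : (x, y + 1) ∈ P := hcol x y y' (y+1) hy hy' (by omega) (by omega)
      exact Relation.ReflTransGen.head ⟨hy, hmid, by simp only; omega⟩
        (ih (y+1) y' hmid hy' (by push_cast; omega))
  rcases le_total y y' with hle | hle
  · exact aux (y' - y).toNat y y' h1 h2 (by omega)
  · haveI : Std.Symm (Stp P) := ⟨fun _ _ h => stp_symm P h⟩
    exact Std.Symm.symm _ _
      (aux (y - y').toNat y' y h2 h1 (by omega))

section ModelConn

variable {w m : ℕ} {d : ℤ → ℕ} (hw : 1 ≤ w) (hm : 1 ≤ m) (hd : GoodD w m d)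

include hw hm hd

lemma model_col_mem {x : ℤ} (h1 : 0 ≤ x) (h2 : x ≤ (w:ℤ)-1) {y : ℕ}
    (hy1 : d x ≤ y) (hy2 : 2 * y ≤ m - 1) : (x, (y:ℤ)) ∈ model w m d := by
  rw [mem_model]
  dsimp only
  have h3 := hd.1 x h1 h2
  refine ⟨h1, h2, ?_, ?_⟩ <;> omega

lemma model_connected : ∀ a ∈ model w m d, ∀ b ∈ model w m d,
    Relation.ReflTransGen (Stp (model w m d)) a b := by
  have hcol : ∀ x y₁ y₂ y : ℤ, (x, y₁) ∈ model w m d → (x, y₂) ∈ model w m d →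
      y₁ ≤ y → y ≤ y₂ → (x, y) ∈ model w m d := (convex_model hw hm hd).1
  have hstep : ∀ x : ℤ, 0 ≤ x → x + 1 ≤ (w:ℤ)-1 →
      Stp (model w m d) (x, ((max (d x) (d (x+1)) : ℕ) : ℤ)) ((x+1), ((max (d x) (d (x+1)) : ℕ) : ℤ)) := by
    intro x h1 h2
    have e1 := hd.1 x h1 (by omega)
    have e2 := hd.1 (x+1) (by omega) h2
    have hsum : 2 * (max (d x) (d (x+1))) ≤ m - 1 := by
      rcases le_total (d x) (d (x+1)) with h | h
      · rw [max_eq_right h]; omega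
      · rw [max_eq_left h]; omega
    refine ⟨model_col_mem hw hm hd h1 (by omega) (Nat.le_max_left _ _) hsum,
           model_col_mem hw hm hd (by omega) h2 (Nat.le_max_right _ _) hsum, ?_⟩
    simp only
    omega
  have aux : ∀ k : ℕ, ∀ a1 a2 b1 b2 : ℤ, (a1, a2) ∈ model w m d → (b1, b2) ∈ model w m d →
      b1 = a1 + k → Relation.ReflTransGen (Stp (model w m d)) (a1, a2) (b1, b2) := by
    intro k
    induction k with
    | zero =>
      intro a1 a2 b1 b2 ha hb h
      rw [show b1 = a1 by omega] at hb ⊢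
      exact vert_connect hcol ha hb
    | succ k ih =>
      intro a1 a2 b1 b2 ha hb h
      have ha1 : 0 ≤ a1 := (mem_model.1 ha).1
      have hb1 : b1 ≤ (w:ℤ)-1 := (mem_model.1 hb).2.1
      have hadj := hstep a1 ha1 (by omega)
      have t1 : Relation.ReflTransGen (Stp (model w m d)) (a1, a2)
          (a1, ((max (d a1) (d (a1+1)) : ℕ) : ℤ)) := vert_connect hcol ha hadj.1
      have t2 := ih (a1+1) ((max (d a1) (d (a1+1)) : ℕ) : ℤ) b1 b2 hadj.2.1 hb (by push_cast; omega)
      exact (t1.tail hadj).trans t2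
  intro a ha b hb
  obtain ⟨a1, a2⟩ := a
  obtain ⟨b1, b2⟩ := b
  rcases le_total a1 b1 with h | h
  · exact aux (b1 - a1).toNat a1 a2 b1 b2 ha hb (by omega)
  · haveI : Std.Symm (Stp (model w m d)) := ⟨fun _ _ h => stp_symm _ h⟩
    exact Std.Symm.symm _ _
      (aux (a1 - b1).toNat b1 b2 a1 a2 hb ha (by omega))

lemma polyomino_model : IsPolyomino (model w m d) := by
  constructor
  · refine ⟨(0, (d 0 : ℤ)), ?_⟩
    have h3 := hd.1 0 le_rfl (by omega : (0:ℤ) ≤ (w:ℤ)-1)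
    rw [mem_model]
    dsimp only
    omega
  · exact model_connected hw hm hd

end ModelConn

/-! ### Classification -/

lemma rtg_intermediate {P : Finset Cell} (f : Cell → ℤ)
    (hf : ∀ c d : Cell, Stp P c d → (f c - f d).natAbs ≤ 1)
    {a b : Cell} (h : Relation.ReflTransGen (Stp P) a b) (ha : a ∈ P)
    {t : ℤ} (h1 : f a ≤ t) (h2 : t ≤ f b) : ∃ c ∈ P, f c = t := by
  induction h with
  | refl => exact ⟨a, ha, by omega⟩
  | @tail c b' hac hstep ih =>
    by_cases hc : t ≤ f c
    · exact ih hc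
    · obtain ⟨hcP, hbP, habs⟩ := hstep
      have := hf c b' ⟨hcP, hbP, habs⟩
      exact ⟨b', hbP, by omega⟩

section Classify

variable {P : Finset Cell} (hpoly : IsPolyomino P) (hconv : IsConvexPoly P)
  (hsh : SymBy hMap P) (hsv : SymBy vMap P) (hnorm : Normalized P)

include hpoly hconv hsh hsv hnorm

lemma classify : 1 ≤ width P ∧ 1 ≤ height P ∧
    ∃ d : ℤ → ℕ, GoodD (width P) (height P) d ∧ P = model (width P) (height P) d := by
  classical
  obtain ⟨hne, hconn⟩ := hpoly
  obtain ⟨hcol, hrow⟩ := hconv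
  obtain ⟨hpos, ⟨c0, hc0, hc0'⟩, ⟨e0, he0, he0'⟩⟩ := hnorm
  set wZ : ℤ := (width P : ℤ) with hwZ
  set mZ : ℤ := (height P : ℤ) with hmZ
  -- x-support is an interval
  have hfst : ∀ a ∈ P, ∀ b ∈ P, ∀ t : ℤ, a.1 ≤ t → t ≤ b.1 → ∃ c ∈ P, c.1 = t := by
    intro a ha b hb t h1 h2
    exact rtg_intermediate Prod.fst (fun c d hs => by have := hs.2.2; omega)
      (hconn a ha b hb) ha h1 h2
  have hsnd : ∀ a ∈ P, ∀ b ∈ P, ∀ t : ℤ, a.2 ≤ t → t ≤ b.2 → ∃ c ∈ P, c.2 = t := by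
    intro a ha b hb t h1 h2
    exact rtg_intermediate Prod.snd (fun c d hs => by have := hs.2.2; omega)
      (hconn a ha b hb) ha h1 h2
  have hWne : (P.image Prod.fst).Nonempty := hne.image _
  have hHne : (P.image Prod.snd).Nonempty := hne.image _
  set MW := (P.image Prod.fst).max' hWne with hMW
  set MH := (P.image Prod.snd).max' hHne with hMH
  obtain ⟨cw, hcw, hcw'⟩ := Finset.mem_image.1 ((P.image Prod.fst).max'_mem hWne)
  obtain ⟨ch, hch, hch'⟩ := Finset.mem_image.1 ((P.image Prod.snd).max'_mem hHne)
  have hW : P.image Prod.fst = Finset.Icc 0 MW := by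
    apply Finset.Subset.antisymm
    · intro x hx
      obtain ⟨c, hc, rfl⟩ := Finset.mem_image.1 hx
      exact Finset.mem_Icc.2 ⟨(hpos c hc).1, Finset.le_max' _ _ hx⟩
    · intro t ht
      rw [Finset.mem_Icc] at ht
      obtain ⟨c, hc, hc2⟩ := hfst c0 hc0 cw hcw t (by omega) (by omega)
      exact Finset.mem_image.2 ⟨c, hc, hc2⟩
  have hH : P.image Prod.snd = Finset.Icc 0 MH := by
    apply Finset.Subset.antisymm
    · intro x hx
      obtain ⟨c, hc, rfl⟩ := Finset.mem_image.1 hx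
      exact Finset.mem_Icc.2 ⟨(hpos c hc).2, Finset.le_max' _ _ hx⟩
    · intro t ht
      rw [Finset.mem_Icc] at ht
      obtain ⟨c, hc, hc2⟩ := hsnd e0 he0 ch hch t (by omega) (by omega)
      exact Finset.mem_image.2 ⟨c, hc, hc2⟩
  rw [← hMW] at hcw'
  rw [← hMH] at hch'
  have hMW0 : 0 ≤ MW := by rw [← hcw']; exact (hpos cw hcw).1
  have hMH0 : 0 ≤ MH := by rw [← hch']; exact (hpos ch hch).2
  have hwcard : width P = (MW + 1).toNat := by rw [width, hW, Int.card_Icc]; congr 1; ring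
  have hhcard : height P = (MH + 1).toNat := by rw [height, hH, Int.card_Icc]; congr 1; ring
  have hMWw : MW = wZ - 1 := by rw [hwZ, hwcard]; omega
  have hMHm : MH = mZ - 1 := by rw [hmZ, hhcard]; omega
  have hw1 : 1 ≤ width P := by omega
  have hm1 : 1 ≤ height P := by omega
  refine ⟨hw1, hm1, ?_⟩
  -- membership in x-range
  have hxmem : ∀ x : ℤ, (∃ y, (x, y) ∈ P) ↔ (0 ≤ x ∧ x ≤ wZ - 1) := by
    intro x
    constructor
    · rintro ⟨y, hy⟩
      have : x ∈ P.image Prod.fst := Finset.mem_image.2 ⟨(x, y), hy, rfl⟩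
      rw [hW, Finset.mem_Icc] at this
      omega
    · rintro ⟨h1, h2⟩
      have : x ∈ P.image Prod.fst := by rw [hW, Finset.mem_Icc]; omega
      obtain ⟨c, hc, hc'⟩ := Finset.mem_image.1 this
      exact ⟨c.2, by rwa [show (x, c.2) = c from Prod.ext hc'.symm rfl]⟩
  -- columns
  set colFin : ℤ → Finset ℤ := fun x => (P.filter (fun c => c.1 = x)).image Prod.snd with hcolFin
  have hmemcol : ∀ x y : ℤ, y ∈ colFin x ↔ (x, y) ∈ P := by
    intro x y
    rw [hcolFin]
    simp only [Finset.mem_image, Finset.mem_filter]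
    constructor
    · rintro ⟨c, ⟨hc, hc1⟩, hc2⟩
      rwa [show (x, y) = c from Prod.ext hc1.symm hc2.symm]
    · intro h
      exact ⟨(x, y), ⟨h, rfl⟩, rfl⟩
  have hcolne : ∀ x : ℤ, 0 ≤ x → x ≤ wZ - 1 → (colFin x).Nonempty := by
    intro x h1 h2
    obtain ⟨y, hy⟩ := (hxmem x).2 ⟨h1, h2⟩
    exact ⟨y, (hmemcol x y).2 hy⟩
  set lo : ℤ → ℤ := fun x => if h : (colFin x).Nonempty then (colFin x).min' h else 0 with hlo
  set hi : ℤ → ℤ := fun x => if h : (colFin x).Nonempty then (colFin x).max' h else 0 with hhi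
  have hlomem : ∀ x : ℤ, 0 ≤ x → x ≤ wZ - 1 → (x, lo x) ∈ P := by
    intro x h1 h2
    have hn := hcolne x h1 h2
    rw [hlo]
    simp only [dif_pos hn]
    exact (hmemcol x _).1 ((colFin x).min'_mem hn)
  have hhimem : ∀ x : ℤ, 0 ≤ x → x ≤ wZ - 1 → (x, hi x) ∈ P := by
    intro x h1 h2
    have hn := hcolne x h1 h2
    rw [hhi]
    simp only [dif_pos hn]
    exact (hmemcol x _).1 ((colFin x).max'_mem hn)
  have hcolchar : ∀ x y : ℤ, 0 ≤ x → x ≤ wZ - 1 → ((x, y) ∈ P ↔ lo x ≤ y ∧ y ≤ hi x) := by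
    intro x y h1 h2
    have hn := hcolne x h1 h2
    constructor
    · intro h
      have hy : y ∈ colFin x := (hmemcol x y).2 h
      constructor
      · rw [hlo]; simp only [dif_pos hn]; exact (colFin x).min'_le _ hy
      · rw [hhi]; simp only [dif_pos hn]; exact (colFin x).le_max' _ hy
    · rintro ⟨ha, hb⟩
      exact hcol x (lo x) (hi x) y (hlomem x h1 h2) (hhimem x h1 h2) ha hb
  have hlopos : ∀ x : ℤ, 0 ≤ x → x ≤ wZ - 1 → 0 ≤ lo x := by
    intro x h1 h2
    exact (hpos _ (hlomem x h1 h2)).2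
  have hhibd : ∀ x : ℤ, 0 ≤ x → x ≤ wZ - 1 → hi x ≤ mZ - 1 := by
    intro x h1 h2
    have : hi x ∈ P.image Prod.snd := Finset.mem_image.2 ⟨_, hhimem x h1 h2, rfl⟩
    rw [hH, Finset.mem_Icc] at this
    omega
  have hfstbd : ∀ c ∈ P, 0 ≤ c.1 ∧ c.1 ≤ wZ - 1 := by
    intro c hc
    have : c.1 ∈ P.image Prod.fst := Finset.mem_image.2 ⟨c, hc, rfl⟩
    rw [hW, Finset.mem_Icc] at this
    omega
  have hsndbd : ∀ c ∈ P, 0 ≤ c.2 ∧ c.2 ≤ mZ - 1 := by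
    intro c hc
    have : c.2 ∈ P.image Prod.snd := Finset.mem_image.2 ⟨c, hc, rfl⟩
    rw [hH, Finset.mem_Icc] at this
    omega
  -- h-symmetry: reflection about horizontal axis
  obtain ⟨v, hv⟩ := hsh
  have hmemH : ∀ x t : ℤ, ((x, -t) ∈ P) ↔ (x - v.1, t - v.2) ∈ P := by
    intro x t
    have h1 : (x, t) ∈ P.image hMap ↔ (x, -t) ∈ P := by
      simp only [Finset.mem_image, hMap]
      constructor
      · rintro ⟨a, ha, heq⟩
        obtain ⟨a1, a2⟩ := a
        simp only [Prod.mk.injEq] at heq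
        obtain ⟨rfl, rfl⟩ := heq
        simpa using ha
      · intro h
        exact ⟨(x, -t), h, by simp⟩
    rw [← h1, hv, mem_cellTranslate']
  have hrefl0 : ∀ x y : ℤ, (x, y) ∈ P ↔ (x - v.1, -y - v.2) ∈ P := by
    intro x y
    have := hmemH x (-y)
    rwa [neg_neg] at this
  have hv1 : v.1 = 0 := by
    have h1 := (hrefl0 c0.1 c0.2).1 (by simpa using hc0)
    have h2 := (hfstbd _ h1).1
    have h3 := (hrefl0 cw.1 cw.2).1 (by simpa using hcw)
    have h4 := (hfstbd _ h3).2
    simp only at h2 h4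
    omega
  have hv2 : v.2 = -(mZ - 1) := by
    have h1 := (hrefl0 e0.1 e0.2).1 (by simpa using he0)
    have h2 := (hsndbd _ h1).2
    have h3 := (hrefl0 ch.1 ch.2).1 (by simpa using hch)
    have h4 := (hsndbd _ h3).1
    simp only at h2 h4
    omega
  have hrefl : ∀ x y : ℤ, (x, y) ∈ P ↔ (x, mZ - 1 - y) ∈ P := by
    intro x y
    have := hrefl0 x y
    rw [hv1, hv2] at this
    rwa [show x - 0 = x by ring, show -y - -(mZ-1) = mZ - 1 - y by ring] at this
  -- v-symmetry: reflection about vertical axis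
  obtain ⟨u, hu⟩ := hsv
  have hmemV : ∀ t y : ℤ, ((-t, y) ∈ P) ↔ (t - u.1, y - u.2) ∈ P := by
    intro t y
    have h1 : (t, y) ∈ P.image vMap ↔ (-t, y) ∈ P := by
      simp only [Finset.mem_image, vMap]
      constructor
      · rintro ⟨a, ha, heq⟩
        obtain ⟨a1, a2⟩ := a
        simp only [Prod.mk.injEq] at heq
        obtain ⟨rfl, rfl⟩ := heq
        simpa using ha
      · intro h
        exact ⟨(-t, y), h, by simp⟩
    rw [← h1, hu, mem_cellTranslate']
  have hreflV0 : ∀ x y : ℤ, (x, y) ∈ P ↔ (-x - u.1, y - u.2) ∈ P := by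
    intro x y
    have := hmemV (-x) y
    rwa [neg_neg] at this
  have hu2 : u.2 = 0 := by
    have h1 := (hreflV0 e0.1 e0.2).1 (by simpa using he0)
    have h2 := (hsndbd _ h1).1
    have h3 := (hreflV0 ch.1 ch.2).1 (by simpa using hch)
    have h4 := (hsndbd _ h3).2
    simp only at h2 h4
    omega
  have hu1 : u.1 = -(wZ - 1) := by
    have h1 := (hreflV0 c0.1 c0.2).1 (by simpa using hc0)
    have h2 := (hfstbd _ h1).2
    have h3 := (hreflV0 cw.1 cw.2).1 (by simpa using hcw)
    have h4 := (hfstbd _ h3).1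
    simp only at h2 h4
    omega
  have hreflV : ∀ x y : ℤ, (x, y) ∈ P ↔ (wZ - 1 - x, y) ∈ P := by
    intro x y
    have := hreflV0 x y
    rw [hu1, hu2] at this
    rwa [show -x - -(wZ-1) = wZ - 1 - x by ring, show y - 0 = y by ring] at this
  -- hi = mZ - 1 - lo
  have hhilo : ∀ x : ℤ, 0 ≤ x → x ≤ wZ - 1 → hi x = mZ - 1 - lo x := by
    intro x h1 h2
    have ha := (hrefl x (lo x)).1 (hlomem x h1 h2)
    have hb := (hrefl x (hi x)).1 (hhimem x h1 h2)
    have ha' := ((hcolchar x _ h1 h2).1 ha).2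
    have hb' := ((hcolchar x _ h1 h2).1 hb).1
    omega
  have hlobd : ∀ x : ℤ, 0 ≤ x → x ≤ wZ - 1 → 2 * lo x ≤ mZ - 1 := by
    intro x h1 h2
    have := ((hcolchar x (lo x) h1 h2).1 (hlomem x h1 h2)).2
    rw [hhilo x h1 h2] at this
    omega
  -- palindrome
  have hpal : ∀ x : ℤ, 0 ≤ x → x ≤ wZ - 1 → lo x = lo (wZ - 1 - x) := by
    have key : ∀ x : ℤ, 0 ≤ x → x ≤ wZ - 1 → lo (wZ - 1 - x) ≤ lo x := by
      intro x h1 h2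
      have := (hreflV x (lo x)).1 (hlomem x h1 h2)
      exact ((hcolchar _ _ (by omega) (by omega)).1 this).1
    intro x h1 h2
    have h3 := key x h1 h2
    have h4 := key (wZ - 1 - x) (by omega) (by omega)
    rw [show wZ - 1 - (wZ - 1 - x) = x by ring] at h4
    omega
  -- the defect function
  refine ⟨fun x => (lo x).toNat, ⟨?_, ?_, ?_, ?_⟩, ?_⟩
  · intro x h1 h2
    have e1 := hlobd x h1 (by omega)
    have e2 := hlopos x h1 (by omega)
    show (2:ℤ) * ((lo x).toNat : ℤ) ≤ (height P : ℤ) - 1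
    omega
  · intro x h1 h2
    show (lo x).toNat = (lo ((width P : ℤ) - 1 - x)).toNat
    rw [← hwZ] at h2 ⊢
    have := hpal x h1 h2
    omega
  · intro x₁ x x₂ h1 h2 h3 h4
    show (lo x).toNat ≤ max (lo x₁).toNat (lo x₂).toNat
    rw [← hwZ] at h4
    have b1 : 0 ≤ x₁ ∧ x₁ ≤ wZ - 1 := ⟨h1, by omega⟩
    have b2 : 0 ≤ x ∧ x ≤ wZ - 1 := ⟨by omega, by omega⟩
    have b3 : 0 ≤ x₂ ∧ x₂ ≤ wZ - 1 := ⟨by omega, h4⟩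
    have l1 := hlopos x₁ b1.1 b1.2
    have l2 := hlopos x₂ b3.1 b3.2
    have m1 := hlobd x₁ b1.1 b1.2
    have m2 := hlobd x₂ b3.1 b3.2
    have hmax : lo x ≤ max (lo x₁) (lo x₂) := by
      set Y := max (lo x₁) (lo x₂) with hY
      have hY1 : lo x₁ ≤ Y := le_max_left _ _
      have hY2 : lo x₂ ≤ Y := le_max_right _ _
      have hYc : Y = lo x₁ ∨ Y = lo x₂ := max_choice _ _
      have hc1 : (x₁, Y) ∈ P := by
        rw [hcolchar _ _ b1.1 b1.2, hhilo _ b1.1 b1.2]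
        rcases hYc with h | h <;> omega
      have hc2 : (x₂, Y) ∈ P := by
        rw [hcolchar _ _ b3.1 b3.2, hhilo _ b3.1 b3.2]
        rcases hYc with h | h <;> omega
      have := hrow Y x₁ x₂ x hc1 hc2 h2 h3
      exact ((hcolchar _ _ b2.1 b2.2).1 this).1
    rcases max_choice (lo x₁) (lo x₂) with h | h
    · rw [h] at hmax
      exact le_trans (by omega) (le_max_left _ _)
    · rw [h] at hmax
      exact le_trans (by omega) (le_max_right _ _)
  · refine ⟨e0.1, (hfstbd _ he0).1, ?_, ?_⟩
    · rw [← hwZ]; exact (hfstbd _ he0).2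
    · show (lo e0.1).toNat = 0
      have b : 0 ≤ e0.1 ∧ e0.1 ≤ wZ - 1 := hfstbd _ he0
      have h1 := hlopos e0.1 b.1 b.2
      have h2 : lo e0.1 ≤ 0 := by
        have : (e0.1, (0:ℤ)) ∈ P := by
          rw [show ((0:ℤ)) = e0.2 from he0'.symm]
          simpa using he0
        exact ((hcolchar _ _ b.1 b.2).1 this).1
      omega
  · ext c
    obtain ⟨x, y⟩ := c
    rw [mem_model]
    dsimp only
    rw [← hwZ, ← hmZ]
    constructor
    · intro h
      have b := hfstbd _ h
      simp only at b
      have hc := (hcolchar x y b.1 b.2).1 h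
      have := hhilo x b.1 b.2
      have := hlopos x b.1 b.2
      refine ⟨b.1, b.2, by omega, by omega⟩
    · rintro ⟨h1, h2, h3, h4⟩
      have := hlopos x h1 h2
      rw [hcolchar x y h1 h2, hhilo x h1 h2]
      omega

end Classify

/-! ### From sorted lists to defect functions -/

def dOf (w : ℕ) (L : List ℕ) : ℤ → ℕ := fun x => L.getD (min x ((w:ℤ) - 1 - x)).toNat 0

lemma getD_antitone {L : List ℕ} (hL : L.Pairwise (· ≥ ·)) {a b : ℕ} (hab : a ≤ b) :
    L.getD b 0 ≤ L.getD a 0 := by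
  rcases eq_or_lt_of_le hab with rfl | hab
  · exact le_rfl
  by_cases hb : b < L.length
  · have ha : a < L.length := lt_trans hab hb
    rw [List.getD_eq_getElem _ _ hb, List.getD_eq_getElem _ _ ha]
    exact hL.rel_get_of_lt (show (⟨a, ha⟩ : Fin L.length) < ⟨b, hb⟩ from hab)
  · rw [List.getD_eq_default _ _ (by omega)]
    exact Nat.zero_le _

lemma dOf_antitone {w : ℕ} {L : List ℕ} (hL : L.Pairwise (· ≥ ·)) {a b : ℤ} (h0 : 0 ≤ a)
    (hab : a ≤ b) : L.getD b.toNat 0 ≤ L.getD a.toNat 0 :=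
  getD_antitone hL (by omega)

lemma goodD_dOf {w m : ℕ} {L : List ℕ} (hw : 1 ≤ w) (hm : 1 ≤ m)
    (hL : L.Pairwise (· ≥ ·)) (hlen : L.length = (w - 1) / 2)
    (hbd : ∀ a ∈ L, a ≤ (m - 1) / 2) : GoodD w m (dOf w L) := by
  have hbd' : ∀ t : ℕ, 2 * (L.getD t 0 : ℤ) ≤ (m:ℤ) - 1 := by
    intro t
    by_cases ht : t < L.length
    · rw [List.getD_eq_getElem _ _ ht]
      have := hbd _ (List.getElem_mem ht)
      omega
    · rw [List.getD_eq_default _ _ (by omega)]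
      simp
      omega
  refine ⟨?_, ?_, ?_, ?_⟩
  · intro x _ _
    exact hbd' _
  · intro x h1 h2
    rw [dOf, dOf]
    congr 2
    rw [show (w:ℤ) - 1 - ((w:ℤ) - 1 - x) = x by ring, min_comm]
  · intro x₁ x x₂ h1 h2 h3 h4
    rw [dOf, dOf, dOf]
    rcases le_total x ((w:ℤ) - 1 - x) with h | h
    · -- min = x ≥ x₁ ≥ min x₁ _
      have e1 : min x ((w:ℤ)-1-x) = x := min_eq_left h
      have e2 : min x₁ ((w:ℤ)-1-x₁) ≤ x₁ := min_le_left _ _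
      have e3 : 0 ≤ min x₁ ((w:ℤ)-1-x₁) := le_min h1 (by omega)
      rw [e1]
      exact le_trans (dOf_antitone (w := w) hL e3 (by omega)) (le_max_left _ _)
    · have e1 : min x ((w:ℤ)-1-x) = (w:ℤ)-1-x := min_eq_right h
      have e2 : min x₂ ((w:ℤ)-1-x₂) ≤ (w:ℤ)-1-x₂ := min_le_right _ _
      have e3 : 0 ≤ min x₂ ((w:ℤ)-1-x₂) := le_min (by omega) (by omega)
      rw [e1]
      exact le_trans (dOf_antitone (w := w) hL e3 (by omega)) (le_max_right _ _)
  · refine ⟨(L.length : ℤ), by omega, by omega, ?_⟩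
    rw [dOf]
    apply List.getD_eq_default
    have h1 : (L.length : ℤ) ≤ min (L.length : ℤ) ((w:ℤ) - 1 - L.length) := by
      apply le_min le_rfl
      omega
    omega

lemma model_congr {w m : ℕ} {d d' : ℤ → ℕ}
    (h : ∀ x : ℤ, 0 ≤ x → x ≤ (w:ℤ) - 1 → d x = d' x) : model w m d = model w m d' := by
  ext c
  rw [mem_model, mem_model]
  constructor
  · rintro ⟨h1, h2, h3, h4⟩
    rw [h c.1 h1 h2] at h3 h4
    exact ⟨h1, h2, h3, h4⟩
  · rintro ⟨h1, h2, h3, h4⟩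
    rw [← h c.1 h1 h2] at h3 h4
    exact ⟨h1, h2, h3, h4⟩

lemma goodD_zero_mid {w m : ℕ} {d : ℤ → ℕ} (hw : 1 ≤ w) (hd : GoodD w m d) {x : ℤ}
    (h1 : (((w-1)/2 : ℕ) : ℤ) ≤ x) (h2 : (((w-1)/2 : ℕ) : ℤ) ≤ (w:ℤ) - 1 - x) : d x = 0 := by
  obtain ⟨x₀, hx1, hx2, hx3⟩ := hd.2.2.2
  set u := min x₀ ((w:ℤ) - 1 - x₀) with hu
  have hu0 : 0 ≤ u := le_min hx1 (by omega)
  have hu2 : 2 * u ≤ (w:ℤ) - 1 := by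
    have := min_le_left x₀ ((w:ℤ) - 1 - x₀)
    have := min_le_right x₀ ((w:ℤ) - 1 - x₀)
    omega
  have huj : u ≤ (((w-1)/2 : ℕ) : ℤ) := by omega
  have hdu : d u = 0 := by
    rcases min_choice x₀ ((w:ℤ) - 1 - x₀) with h | h
    · rw [← hu] at h; rw [h]; exact hx3
    · rw [← hu] at h; rw [h, ← hd.2.1 x₀ hx1 hx2]; exact hx3
  have hdu' : d ((w:ℤ) - 1 - u) = 0 := by rw [← hd.2.1 u hu0 (by omega)]; exact hdu
  have := hd.2.2.1 u x ((w:ℤ) - 1 - u) hu0 (by omega) (by omega) (by omega)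
  rw [hdu, hdu'] at this
  omega

lemma dOf_eq_of_goodD {w m : ℕ} {d : ℤ → ℕ} {L : List ℕ} (hw : 1 ≤ w) (hd : GoodD w m d)
    (hlen : L.length = (w - 1) / 2)
    (hval : ∀ k : ℕ, k < (w - 1) / 2 → L.getD k 0 = d k) :
    ∀ x : ℤ, 0 ≤ x → x ≤ (w:ℤ) - 1 → dOf w L x = d x := by
  intro x h1 h2
  set t := min x ((w:ℤ) - 1 - x) with ht
  have ht0 : 0 ≤ t := le_min h1 (by omega)
  have hdt : d t = d x := by
    rcases min_choice x ((w:ℤ) - 1 - x) with h | h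
    · rw [← ht] at h; rw [h]
    · rw [← ht] at h; rw [h, ← hd.2.1 x h1 h2]
  by_cases hcase : t.toNat < (w - 1) / 2
  · rw [dOf, ← ht, hval t.toNat hcase]
    rw [show ((t.toNat : ℤ)) = t by omega]
    exact hdt
  · rw [dOf, ← ht, List.getD_eq_default _ _ (by omega)]
    symm
    apply goodD_zero_mid hw hd (x := x)
    · have := min_le_left x ((w:ℤ) - 1 - x); omega
    · have := min_le_right x ((w:ℤ) - 1 - x); omega

/-! ### The parameter space and bijection -/

def Phi (n : ℕ) (P : Finset Cell) : Prop :=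
  IsPolyomino P ∧ IsConvexPoly P ∧ SymBy hMap P ∧ SymBy vMap P ∧ width P + height P = n

def NormSet (n : ℕ) : Set (Finset Cell) := {P | Phi n P ∧ Normalized P}

abbrev PT (n : ℕ) : Type := (i : Fin (n-1)) × Sym (Fin ((n - i - 2)/2 + 1)) ((i : ℕ)/2)

def toL {B j : ℕ} (s : Sym (Fin (B+1)) j) : List ℕ :=
  Multiset.sort (Multiset.map Fin.val s.1) (· ≥ ·)

lemma toL_sorted {B j : ℕ} (s : Sym (Fin (B+1)) j) : (toL s).Pairwise (· ≥ ·) :=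
  Multiset.pairwise_sort _ _

lemma toL_length {B j : ℕ} (s : Sym (Fin (B+1)) j) : (toL s).length = j := by
  rw [toL, Multiset.length_sort, Multiset.card_map, s.2]

lemma toL_bound {B j : ℕ} (s : Sym (Fin (B+1)) j) : ∀ a ∈ toL s, a ≤ B := by
  intro a ha
  rw [toL] at ha
  have : a ∈ Multiset.map Fin.val s.1 := by
    rwa [Multiset.mem_sort] at ha
  obtain ⟨b, _, rfl⟩ := Multiset.mem_map.1 this
  omega

lemma coe_toL {B j : ℕ} (s : Sym (Fin (B+1)) j) :
    (↑(toL s) : Multiset ℕ) = Multiset.map Fin.val s.1 := Multiset.sort_eq _ _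

def mkSym (B j : ℕ) (f : ℕ → ℕ) : Sym (Fin (B+1)) j :=
  ⟨(↑((List.range j).map (fun k => (⟨min (f k) B, Nat.lt_succ_of_le (min_le_right _ _)⟩ : Fin (B+1)))) : Multiset _),
    by rw [Multiset.coe_card, List.length_map, List.length_range]⟩

lemma sorted_map_range {f : ℕ → ℕ} {j : ℕ} (h : ∀ a b : ℕ, a ≤ b → b < j → f b ≤ f a) :
    ((List.range j).map f).Pairwise (· ≥ ·) := by
  rw [List.pairwise_iff_get]
  intro a b hab
  have hb := b.isLt
  simp only [List.length_map, List.length_range] at hb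
  simp only [List.get_eq_getElem, List.getElem_map, List.getElem_range]
  exact h _ _ (le_of_lt hab) hb

lemma toL_mkSym {B j : ℕ} {f : ℕ → ℕ} (hf : ∀ k, k < j → f k ≤ B)
    (hanti : ∀ a b : ℕ, a ≤ b → b < j → f b ≤ f a) :
    toL (mkSym B j f) = (List.range j).map f := by
  apply List.Perm.eq_of_pairwise' (toL_sorted _) (sorted_map_range hanti)
  rw [← Multiset.coe_eq_coe, coe_toL, mkSym, Multiset.map_coe, List.map_map]
  congr 1
  apply List.map_congr_left
  intro k hk
  rw [List.mem_range] at hk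
  show min (f k) B = f k
  exact min_eq_left (hf k hk)

noncomputable def psi (n : ℕ) : PT n → Finset Cell :=
  fun p => model ((p.1 : ℕ) + 1) (n - p.1 - 1) (dOf ((p.1 : ℕ) + 1) (toL p.2))

section Bij

variable {n : ℕ}

lemma psi_goodD (p : PT n) : GoodD ((p.1 : ℕ) + 1) (n - p.1 - 1) (dOf ((p.1 : ℕ) + 1) (toL p.2)) := by
  have hi := p.1.isLt
  apply goodD_dOf (by omega) (by omega) (toL_sorted p.2)
  · rw [toL_length]; omega
  · intro a ha
    have := toL_bound p.2 a ha
    omega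

lemma psi_mem (p : PT n) : psi n p ∈ NormSet n := by
  have hi := p.1.isLt
  have hw : 1 ≤ (p.1 : ℕ) + 1 := by omega
  have hm : 1 ≤ n - p.1 - 1 := by omega
  have hd := psi_goodD p
  rw [psi]
  refine ⟨⟨polyomino_model hw hm hd, convex_model hw hm hd, symH_model hw hm hd,
    symV_model hw hm hd, ?_⟩, normalized_model hw hm hd⟩
  rw [width_model hw hm hd, height_model hw hm hd]
  omega

lemma psi_inj : Function.Injective (psi n) := by
  rintro ⟨i, s⟩ ⟨i', s'⟩ h
  have hi := i.isLt
  have hi' := i'.isLt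
  have hd := psi_goodD (n := n) ⟨i, s⟩
  have hd' := psi_goodD (n := n) ⟨i', s'⟩
  dsimp only at hd hd'
  rw [psi, psi] at h
  dsimp only at h
  have hww : (i : ℕ) + 1 = (i' : ℕ) + 1 := by
    have h1 := width_model (w := (i:ℕ)+1) (by omega) (by omega) hd
    have h2 := width_model (w := (i':ℕ)+1) (by omega) (by omega) hd'
    rw [← h1, ← h2, h]
  have hii' : i = i' := Fin.ext (by omega)
  subst hii'
  -- d functions agree on range
  have hdag : ∀ x : ℤ, 0 ≤ x → x ≤ (((i:ℕ) + 1 : ℕ) : ℤ) - 1 →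
      dOf ((i:ℕ)+1) (toL s) x = dOf ((i:ℕ)+1) (toL s') x := by
    intro x h1 h2
    have key : ∀ (d d' : ℤ → ℕ), GoodD ((i:ℕ)+1) (n - i - 1) d → GoodD ((i:ℕ)+1) (n - i - 1) d' →
        model ((i:ℕ)+1) (n - i - 1) d = model ((i:ℕ)+1) (n - i - 1) d' →
        d x ≤ d' x := by
      intro d d' g g' he
      have hmem : (x, (d' x : ℤ)) ∈ model ((i:ℕ)+1) (n - i - 1) d' := by
        rw [mem_model]
        dsimp only
        have := g'.1 x h1 h2
        exact ⟨h1, h2, le_refl _, by omega⟩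
      rw [← he, mem_model] at hmem
      dsimp only at hmem
      omega
    have h3 := key _ _ hd hd' h
    have h4 := key _ _ hd' hd h.symm
    omega
  -- lists agree
  have hL : toL s = toL s' := by
    apply List.ext_getElem (by rw [toL_length, toL_length])
    intro k hk1 hk2
    rw [toL_length] at hk1 hk2
    have e1 : ∀ (L : List ℕ), ∀ (hlen : L.length = (i:ℕ)/2), ∀ (hk : k < (i:ℕ)/2),
        L[k]'(by rw [hlen]; exact hk) = dOf ((i:ℕ)+1) L k := by
      intro L hlen hk
      rw [dOf]
      have hmin : min (k:ℤ) ((((i:ℕ)+1 : ℕ):ℤ) - 1 - k) = (k:ℤ) := by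
        apply min_eq_left
        push_cast
        omega
      rw [hmin, Int.toNat_natCast, List.getD_eq_getElem _ _ (by rw [hlen]; exact hk)]
    rw [e1 _ (toL_length s) hk1, e1 _ (toL_length s') hk2]
    exact hdag k (by omega) (by push_cast; omega)
  -- multisets agree
  have hs : s.1 = s'.1 := by
    have h5 := coe_toL s
    rw [hL, coe_toL s'] at h5
    exact Multiset.map_injective Fin.val_injective h5.symm
  congr 1
  exact Subtype.ext hs

lemma build {w m : ℕ} (d : ℤ → ℕ) (hw1 : 1 ≤ w) (hm1 : 1 ≤ m) (hsum : w + m = n)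
    (hd : GoodD w m d) : ∃ p : PT n, psi n p = model w m d := by
  have hn2 : 2 ≤ n := by omega
  have hiw : w - 1 < n - 1 := by omega
  have hdbd : ∀ k : ℕ, k < w → d k ≤ (n - (w-1) - 2)/2 := by
    intro k hk
    have h2 := hd.1 k (by omega) (by push_cast; omega)
    omega
  have hanti : ∀ a b : ℕ, a ≤ b → b < (w-1)/2 → d b ≤ d a := by
    intro k k' h1 h2
    have hb1 : (0:ℤ) ≤ (k:ℤ) := by omega
    have hb2 : ((k':ℤ)) ≤ ((w:ℤ)) - 1 - k := by push_cast; omega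
    have h3 := hd.2.2.1 k k' ((w:ℤ) - 1 - k) hb1 (by omega) hb2 (by omega)
    have h4 := hd.2.1 k hb1 (by push_cast; omega)
    rw [← h4, max_self] at h3
    exact h3
  have hLeq : toL (mkSym ((n - (w-1) - 2)/2) ((w-1)/2) (fun k : ℕ => d (k:ℤ)))
      = (List.range ((w-1)/2)).map (fun k : ℕ => d (k:ℤ)) :=
    toL_mkSym (fun k hk => hdbd k (by omega)) hanti
  refine ⟨⟨⟨w-1, hiw⟩, mkSym ((n - (w-1) - 2)/2) ((w-1)/2) (fun k : ℕ => d (k:ℤ))⟩, ?_⟩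
  show model (w-1+1) (n-(w-1)-1) (dOf (w-1+1) (toL (mkSym ((n - (w-1) - 2)/2) ((w-1)/2) (fun k : ℕ => d (k:ℤ))))) = model w m d
  rw [hLeq, show w-1+1 = w by omega, show n-(w-1)-1 = m by omega]
  apply model_congr
  apply dOf_eq_of_goodD hw1 hd
  · rw [List.length_map, List.length_range]
  · intro k hk
    rw [List.getD_eq_getElem _ _ (by rw [List.length_map, List.length_range]; exact hk)]
    simp

lemma psi_surj : NormSet n ⊆ Set.range (psi n) := by
  rintro P ⟨⟨hpoly, hconv, hsh, hsv, hsum⟩, hnorm⟩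
  obtain ⟨hw1, hm1, d, hd, hmodel⟩ := classify hpoly hconv hsh hsv hnorm
  obtain ⟨p, hp⟩ := build (n := n) d hw1 hm1 hsum hd
  exact ⟨p, hp.trans hmodel.symm⟩

lemma normset_eq_range : NormSet n = Set.range (psi n) := by
  apply Set.Subset.antisymm psi_surj
  rintro Q ⟨p, rfl⟩
  exact psi_mem p

end Bij

/-! ### Counting -/

def Scount (n : ℕ) : ℕ := ∑ i ∈ Finset.range (n-1), ((n - i - 2)/2 + i/2).choose (i/2)

lemma fhv_eq (n : ℕ) : fhv n = Scount n := by
  have h1 : fhv n = classCount (Phi n) := rfl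
  rw [h1, classCount_eq_ncard_normalized (Phi n)
    (by
      intro v P hP
      exact ⟨isPolyomino_cellTranslate v hP.1, isConvexPoly_cellTranslate v hP.2.1,
        symBy_cellTranslate hMap_add v hP.2.2.1, symBy_cellTranslate vMap_add v hP.2.2.2.1,
        by rw [width_cellTranslate, height_cellTranslate]; exact hP.2.2.2.2⟩)
    (fun P hP => hP.1.1)]
  have h2 : {P : Finset Cell | Phi n P ∧ Normalized P} = Set.range (psi n) := normset_eq_range
  rw [h2, ← Set.image_univ, Set.ncard_image_of_injOn (Function.Injective.injOn psi_inj),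
    Set.ncard_univ, Nat.card_eq_fintype_card]
  rw [Scount, Fintype.card_sigma,
    ← Fin.sum_univ_eq_sum_range (fun i => ((n - i - 2)/2 + i/2).choose (i/2)) (n-1)]
  apply Finset.sum_congr rfl
  intro i _
  rw [Sym.card_sym_eq_choose, Fintype.card_fin]
  congr 1
  omega

lemma sum_pair (k : ℕ) (f : ℕ → ℕ) :
    ∑ i ∈ Finset.range (2*k), f i = ∑ a ∈ Finset.range k, (f (2*a) + f (2*a+1)) := by
  induction k with
  | zero => simp
  | succ k ih =>
    rw [show 2*(k+1) = 2*k+1+1 by ring, Finset.sum_range_succ, Finset.sum_range_succ, ih,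
      Finset.sum_range_succ]
    omega

lemma scount_odd (t : ℕ) : Scount (2*t+3) = 2^(t+1) := by
  rw [Scount, show 2*t+3-1 = 2*(t+1) by omega, sum_pair]
  have : ∀ a ∈ Finset.range (t+1),
      ((2*t+3 - 2*a - 2)/2 + (2*a)/2).choose ((2*a)/2)
      + ((2*t+3 - (2*a+1) - 2)/2 + (2*a+1)/2).choose ((2*a+1)/2)
      = t.choose a + t.choose a := by
    intro a ha
    rw [Finset.mem_range] at ha
    rw [show (2*a)/2 = a by omega, show (2*a+1)/2 = a by omega,
      show (2*t+3 - 2*a - 2)/2 + a = t by omega, show (2*t+3 - (2*a+1) - 2)/2 + a = t by omega]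
  rw [Finset.sum_congr rfl this, Finset.sum_add_distrib, Nat.sum_range_choose]
  ring

lemma scount_even (t : ℕ) : Scount (2*t+4) = 3 * 2^t := by
  rw [Scount, show 2*t+4-1 = 2*(t+1)+1 by omega, Finset.sum_range_succ, sum_pair]
  have h1 : ∀ a ∈ Finset.range (t+1),
      ((2*t+4 - 2*a - 2)/2 + (2*a)/2).choose ((2*a)/2)
      + ((2*t+4 - (2*a+1) - 2)/2 + (2*a+1)/2).choose ((2*a+1)/2)
      = (t+1).choose a + t.choose a := by
    intro a ha
    rw [Finset.mem_range] at ha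
    rw [show (2*a)/2 = a by omega, show (2*a+1)/2 = a by omega,
      show (2*t+4 - 2*a - 2)/2 + a = t+1 by omega, show (2*t+4 - (2*a+1) - 2)/2 + a = t by omega]
  have h2 : ((2*t+4 - 2*(t+1) - 2)/2 + (2*(t+1))/2).choose ((2*(t+1))/2) = 1 := by
    rw [show (2*(t+1))/2 = t+1 by omega, show (2*t+4 - 2*(t+1) - 2)/2 + (t+1) = t+1 by omega]
    exact Nat.choose_self _
  rw [Finset.sum_congr rfl h1, Finset.sum_add_distrib, Nat.sum_range_choose, h2]
  have h3 : ∑ a ∈ Finset.range (t+1), (t+1).choose a = 2^(t+1) - 1 := by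
    have h4 := Nat.sum_range_choose (t+1)
    rw [Finset.sum_range_succ, Nat.choose_self] at h4
    have h5 : 1 ≤ 2^(t+1) := Nat.one_le_two_pow
    omega
  rw [h3]
  have h5 : 1 ≤ 2^(t+1) := Nat.one_le_two_pow
  have : (2:ℕ)^(t+1) = 2 * 2^t := by ring
  omega

lemma fhv_zero : fhv 0 = 0 := by rw [fhv_eq]; rfl
lemma fhv_one : fhv 1 = 0 := by rw [fhv_eq]; rfl
lemma fhv_two : fhv 2 = 1 := by rw [fhv_eq]; rfl

lemma fhv_even {n : ℕ} (h4 : 4 ≤ n) (he : Even n) : fhv n = 3 * 2^(n/2 - 2) := by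
  obtain ⟨s, rfl⟩ := he
  have hs : 2 ≤ s := by omega
  obtain ⟨t, rfl⟩ : ∃ t, s = t + 2 := ⟨s - 2, by omega⟩
  rw [fhv_eq, show (t+2) + (t+2) = 2*t+4 by ring, scount_even,
    show (2*t+4)/2 - 2 = t by omega]

lemma fhv_odd {n : ℕ} (h3 : 3 ≤ n) (ho : Odd n) : fhv n = 2^((n-1)/2) := by
  obtain ⟨s, rfl⟩ := ho
  have hs : 1 ≤ s := by omega
  obtain ⟨t, rfl⟩ : ∃ t, s = t + 1 := ⟨s - 1, by omega⟩
  rw [fhv_eq, show 2*(t+1) + 1 = 2*t+3 by ring, scount_odd,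
    show (2*t+3-1)/2 = t+1 by omega]

lemma fhv_rec (m : ℕ) (h : 3 ≤ m) : fhv (m + 2) = 2 * fhv m := by
  rcases Nat.even_or_odd m with he | ho
  · obtain ⟨s, rfl⟩ := he
    have hs : 2 ≤ s := by omega
    obtain ⟨t, rfl⟩ : ∃ t, s = t + 2 := ⟨s - 2, by omega⟩
    rw [fhv_eq, fhv_eq, show (t+2)+(t+2) = 2*t+4 by ring, show 2*t+4+2 = 2*(t+1)+4 by ring,
      scount_even, scount_even]
    ring
  · obtain ⟨s, rfl⟩ := ho
    have hs : 1 ≤ s := by omega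
    obtain ⟨t, rfl⟩ : ∃ t, s = t + 1 := ⟨s - 1, by omega⟩
    rw [fhv_eq, fhv_eq, show 2*(t+1)+1 = 2*t+3 by ring, show 2*t+3+2 = 2*(t+1)+3 by ring,
      scount_odd, scount_odd]
    ring

lemma fhv_three : fhv 3 = 2 := by rw [fhv_eq]; rfl
lemma fhv_four : fhv 4 = 3 := by rw [fhv_eq]; rfl

lemma ps_identity :
    ((1 : PowerSeries ℤ) - 2 * PowerSeries.X ^ 2) *
        PowerSeries.mk (fun n => (fhv n : ℤ))
      = PowerSeries.X ^ 2 * (1 + PowerSeries.X) ^ 2 := by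
  have e1 : ((1 : PowerSeries ℤ) - 2 * PowerSeries.X ^ 2) *
      PowerSeries.mk (fun n => (fhv n : ℤ))
      = PowerSeries.mk (fun n => (fhv n : ℤ))
        - (PowerSeries.mk (fun n => (fhv n : ℤ)) * PowerSeries.X ^ 2
          + PowerSeries.mk (fun n => (fhv n : ℤ)) * PowerSeries.X ^ 2) := by ring
  have e2 : (PowerSeries.X : PowerSeries ℤ) ^ 2 * (1 + PowerSeries.X) ^ 2
      = PowerSeries.X ^ 2 + (PowerSeries.X ^ 3 + PowerSeries.X ^ 3) + PowerSeries.X ^ 4 := by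
    ring
  rw [e1, e2]
  apply PowerSeries.ext
  intro n
  simp only [map_sub, map_add, PowerSeries.coeff_mk, PowerSeries.coeff_mul_X_pow',
    PowerSeries.coeff_X_pow]
  match n with
  | 0 => norm_num [fhv_zero]
  | 1 => norm_num [fhv_one]
  | 2 => norm_num [fhv_two, fhv_zero]
  | 3 => norm_num [fhv_three, fhv_one]
  | 4 => norm_num [fhv_four, fhv_two]
  | (m+5) =>
    have h := fhv_rec (m+3) (by omega)
    rw [if_pos (by omega : 2 ≤ m + 5), if_neg (by omega : ¬ (m+5 = 2)),
      if_neg (by omega : ¬ (m+5 = 3)), if_neg (by omega : ¬ (m+5 = 4)),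
      show m+5-2 = m+3 by omega]
    have h2 : fhv (m+5) = 2 * fhv (m+3) := h
    push_cast [h2]
    ring

end S14

/-- `f₁ = 0`, `f₂ = 1`, `f_n = 3·2^{n/2−2}` for even `n ≥ 4`, `f_n = 2^{(n−1)/2}` for
odd `n ≥ 3`; equivalently `(1 − 2t²)·Σ_{n≥1} f_n tⁿ = t²(1+t)²`. -/
theorem stmt14 :
    fhv 1 = 0 ∧ fhv 2 = 1 ∧
    (∀ n : ℕ, 4 ≤ n → Even n → fhv n = 3 * 2 ^ (n / 2 - 2)) ∧
    (∀ n : ℕ, 3 ≤ n → Odd n → fhv n = 2 ^ ((n - 1) / 2)) ∧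
    ((1 : PowerSeries ℤ) - 2 * PowerSeries.X ^ 2) *
        PowerSeries.mk (fun n => (fhv n : ℤ))
      = PowerSeries.X ^ 2 * (1 + PowerSeries.X) ^ 2 := by
  exact ⟨S14.fhv_one, S14.fhv_two, fun _ h4 he => S14.fhv_even h4 he,
    fun _ h3 ho => S14.fhv_odd h3 ho, S14.ps_identity⟩
end
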